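/- arXiv:1401.3011 — 8 statements merged into one kernel-verified Lean document; each statement's English description precedes it below -/
import Mathlib

section
/- For every n ≥ 1 and every 0 ≤ k < n, the number of 321-avoiding involutions of {1,...,n} with exactly k descents equals C(⌈n/2⌉, k) · C(⌊n/2⌋, k). -/
open Finset Polynomial

/-- π is an involution. -/
def isInvolution {n : ℕ} (π : Equiv.Perm (Fin n)) : Prop := ∀ i, π (π i) = i

instance {n : ℕ} (π : Equiv.Perm (Fin n)) : Decidable (isInvolution π) := by
  unfold isInvolution; infer_instance

/-- π avoids the pattern 321: no i < j < k with π(i) > π(j) > π(k). -/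
def avoids321 {n : ℕ} (π : Equiv.Perm (Fin n)) : Prop :=
  ¬ ∃ i j k : Fin n, i < j ∧ j < k ∧ π k < π j ∧ π j < π i

instance {n : ℕ} (π : Equiv.Perm (Fin n)) : Decidable (avoids321 π) := by
  unfold avoids321; infer_instance

/-- The descent set of π, with positions 1,…,n-1 (position i is a descent when
the entry in position i exceeds the entry in position i+1; entries are 0-indexed
internally). -/
def desSet {n : ℕ} (π : Equiv.Perm (Fin n)) : Finset ℕ :=
  (Finset.Ico 1 n).filter (fun i =>
    ∃ h : i < n, π ⟨i, h⟩ < π ⟨i - 1, Nat.lt_of_le_of_lt (Nat.sub_le i 1) h⟩)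

/-- The major index: the sum of the descent positions. -/
def maj {n : ℕ} (π : Equiv.Perm (Fin n)) : ℕ := ∑ i ∈ desSet π, i

/-!
Record a 321-avoiding involution `π` of `Fin n` by the word whose `i`-th letter says whether `i`
opens an arc (`i < π i`), closes one (`π i < i`) or is fixed. Avoiding 321 forces the openers to be
sent increasingly onto the closers and every arc to pass over no fixed point, so `π` is recovered
from its word by matching the `r`-th opener with the `r`-th closer, and the words that arise are
exactly the ballot words whose fixed letters sit at height `0` (equal numbers of openers and
closers before them) and which end at height `0`. A descent of `π` is then exactly an opener
immediately followed by a closer.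

These words are counted by appending one letter at a time, keeping track of the height `h`, the
number `k` of descents and whether the word ends with an opener. The resulting recurrences are
solved in closed form: with `m = (n - h) / 2` the words of length `n` and height `h` with `k`
descents number `C(m, k) * C(n - m, k)`, which at `h = 0` is `C(⌈n/2⌉, k) * C(⌊n/2⌋, k)`.
-/

open Finset Equiv

/-- Of any three positions two lie on the same side of `s`. -/
lemma avoids321_of_strictMonoOn {n : ℕ} {π : Perm (Fin n)} (s : Set (Fin n))
    (hs : StrictMonoOn π s) (hsc : StrictMonoOn π sᶜ) : avoids321 π := by
  rintro ⟨i, j, k, hij, hjk, hkj, hji⟩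
  have mono : ∀ {x y}, x < y → (x ∈ s ↔ y ∈ s) → π x < π y := fun {x y} hxy hxy' => by
    by_cases hx : x ∈ s
    · exact hs hx (hxy'.1 hx) hxy
    · exact hsc hx (mt hxy'.2 hx) hxy
  by_cases hij' : i ∈ s ↔ j ∈ s
  · exact (mono hij hij').asymm hji
  by_cases hjk' : j ∈ s ↔ k ∈ s
  · exact (mono hjk hjk').asymm hkj
  exact (mono (hij.trans hjk) (by tauto)).asymm (hkj.trans hji)

lemma card_filter_lt_orderIso {α : Type*} [LinearOrder α] {s t : Finset α} (e : s ≃o t) (a : s) :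
    #{b ∈ t | b < (e a : α)} = #{x ∈ s | x < (a : α)} := by
  symm
  refine card_bij (fun x hx => e ⟨x, (mem_filter.1 hx).1⟩) (fun x hx => ?_)
    (fun x hx y hy h => ?_) (fun b hb => ?_)
  · simp only [mem_filter, Finset.coe_mem, true_and, Subtype.coe_lt_coe, e.lt_iff_lt]
    exact (mem_filter.1 hx).2
  · simpa using h
  · obtain ⟨hb, hlt⟩ := mem_filter.1 hb
    refine ⟨e.symm ⟨b, hb⟩, mem_filter.2 ⟨coe_mem _, ?_⟩, by simp⟩
    rw [Subtype.coe_lt_coe, ← e.lt_iff_lt, OrderIso.apply_symm_apply, ← Subtype.coe_lt_coe]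
    exact hlt

lemma card_filter_pi_succ {n : ℕ} {α : Type*} [Fintype α] [DecidableEq α]
    (p : (Fin (n + 1) → α) → Prop) [DecidablePred p] :
    #{w | p w} = ∑ c, #{v : Fin n → α | p (Fin.snoc v c)} := by
  rw [card_filter, ← (Fin.snocEquiv fun _ => α).sum_comp, Fintype.sum_prod_type]
  simp only [card_filter]
  rfl

namespace Involution321

inductive Letter
  | opener
  | closer
  | fixed
  deriving DecidableEq

open Letter

instance : Fintype Letter := ⟨{opener, closer, fixed}, fun c => by cases c <;> simp⟩

lemma sum_letter {M : Type*} [AddCommMonoid M] (f : Letter → M) :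
    ∑ c, f c = f opener + f closer + f fixed := by
  simp [univ, Fintype.elems, add_assoc]

variable {n : ℕ}

section Word

def positions (w : Fin n → Letter) (c : Letter) : Finset (Fin n) := {i | w i = c}

def count (w : Fin n → Letter) (c : Letter) (j : ℕ) : ℕ := #{i ∈ positions w c | i.val < j}

structure IsAdmissible (w : Fin n → Letter) : Prop where
  ballot : ∀ j ≤ n, count w closer j ≤ count w opener j
  fixed_balanced : ∀ i, w i = fixed → count w opener i = count w closer i

def descents (w : Fin n → Letter) : Finset ℕ :=
  {i ∈ Ico 1 n | ∃ h : i < n, w ⟨i - 1, by omega⟩ = opener ∧ w ⟨i, h⟩ = closer}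

def EndsWithOpener (w : Fin n → Letter) : Prop := ∃ h : 0 < n, w ⟨n - 1, by omega⟩ = opener

instance : DecidablePred (EndsWithOpener (n := n)) := fun w => by
  unfold EndsWithOpener; infer_instance

variable {w : Fin n → Letter} {c : Letter}

lemma mem_positions {i : Fin n} : i ∈ positions w c ↔ w i = c := by
  simp [positions]

variable (w c)

lemma count_mono : Monotone (count w c) :=
  fun _ _ hj => card_le_card <| monotone_filter_right _ fun _ _ hi => hi.trans_le hj

lemma count_of_le {j : ℕ} (hj : n ≤ j) : count w c j = #(positions w c) := by
  rw [count, filter_true_of_mem fun i _ => i.isLt.trans_le hj]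

lemma count_succ_of_eq {x : Fin n} (hx : w x = c) :
    count w c (x.val + 1) = count w c x + 1 := by
  have : {i ∈ positions w c | i.val < x.val + 1} =
      insert x {i ∈ positions w c | i.val < x.val} := by
    ext i
    simp only [mem_insert, mem_filter, mem_positions, Nat.lt_succ_iff_lt_or_eq, Fin.val_inj]
    constructor
    · rintro ⟨hi, h | rfl⟩ <;> simp_all
    · rintro (rfl | ⟨hi, h⟩) <;> simp_all
  rw [count, this, card_insert_of_notMem (by simp), count]

end Word

section Permutation

def letter (π : Perm (Fin n)) (i : Fin n) : Letter :=
  if i < π i then opener else if π i < i then closer else fixed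

variable {π : Perm (Fin n)} {i : Fin n}

lemma letter_eq_opener : letter π i = opener ↔ i < π i := by
  unfold letter; split_ifs <;> simp_all

lemma letter_eq_closer : letter π i = closer ↔ π i < i := by
  unfold letter; split_ifs <;> simp_all [lt_asymm]

lemma letter_eq_fixed : letter π i = fixed ↔ π i = i := by
  unfold letter; split_ifs <;> simp_all [ne_of_gt, ne_of_lt, le_antisymm_iff]

lemma strictMonoOn_openers (hinv : isInvolution π) (h321 : avoids321 π) :
    StrictMonoOn π {x | letter π x = opener} := by
  intro x hx y hy hxy
  have hy : y < π y := letter_eq_opener.1 hy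
  by_contra! h
  have hlt : π y < π x := h.lt_of_ne (π.injective.ne hxy.ne')
  exact h321 ⟨x, y, π x, hxy, hy.trans hlt, by rw [hinv]; exact hxy.trans hy, hlt⟩

lemma apply_lt_of_lt_fixed (hinv : isInvolution π) (h321 : avoids321 π) {x : Fin n}
    (hxi : x < i) (hi : π i = i) : π x < i := by
  have hne : π x ≠ i := fun h => hxi.ne (by rw [← hinv x, h, hi])
  refine hne.lt_or_gt.resolve_right fun hlt => h321 ⟨x, i, π x, hxi, hlt, ?_, ?_⟩
  · rwa [hinv, hi]
  · rwa [hi]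

lemma count_closer_le_count_opener (hinv : isInvolution π) (j : ℕ) :
    count (letter π) closer j ≤ count (letter π) opener j := by
  refine card_le_card_of_injOn π (fun i hi => ?_) π.injective.injOn
  simp only [mem_coe, mem_filter, mem_positions, letter_eq_closer, letter_eq_opener] at hi ⊢
  rw [hinv]
  exact ⟨hi.1, lt_trans (Fin.lt_def.1 hi.1) hi.2⟩

lemma count_opener_le_count_closer_of_fixed (hinv : isInvolution π) (h321 : avoids321 π)
    (hi : π i = i) : count (letter π) opener i ≤ count (letter π) closer i := by
  refine card_le_card_of_injOn π (fun x hx => ?_) π.injective.injOn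
  simp only [mem_coe, mem_filter, mem_positions, letter_eq_closer, letter_eq_opener] at hx ⊢
  rw [hinv]
  exact ⟨hx.1, apply_lt_of_lt_fixed hinv h321 (Fin.lt_def.2 hx.2) hi⟩

lemma count_opener_le_count_closer (hinv : isInvolution π) :
    count (letter π) opener n ≤ count (letter π) closer n := by
  refine card_le_card_of_injOn π (fun x hx => ?_) π.injective.injOn
  simp only [mem_coe, mem_filter, mem_positions, letter_eq_closer, letter_eq_opener] at hx ⊢
  rw [hinv]
  exact ⟨hx.1, (π x).isLt⟩

lemma isAdmissible_letter (hinv : isInvolution π) (h321 : avoids321 π) :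
    IsAdmissible (letter π) where
  ballot j _ := count_closer_le_count_opener hinv j
  fixed_balanced i hi :=
    (count_opener_le_count_closer_of_fixed hinv h321 (letter_eq_fixed.1 hi)).antisymm
      (count_closer_le_count_opener hinv i)

lemma count_opener_eq_count_closer (hinv : isInvolution π) :
    count (letter π) opener n = count (letter π) closer n :=
  (count_opener_le_count_closer hinv).antisymm (count_closer_le_count_opener hinv n)

-- Any other descent extends to a 321 pattern through `π j` or through `π i`.
lemma apply_lt_apply_iff_of_succ (hinv : isInvolution π) (h321 : avoids321 π) {i j : Fin n}
    (hij : j.val = i.val + 1) : π j < π i ↔ i < π i ∧ π j < j := by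
  constructor
  · intro hlt
    by_contra hne
    rcases le_or_gt (π i) i with hi | hi
    · refine h321 ⟨π j, i, j, hlt.trans_le hi, Fin.lt_def.2 (by omega), hlt, ?_⟩
      rw [hinv, Fin.lt_def]
      exact Nat.lt_of_le_of_lt hi (by omega)
    · have hj : j ≤ π j := not_lt.1 fun h => hne ⟨hi, h⟩
      refine h321 ⟨i, j, π i, Fin.lt_def.2 (by omega), hj.trans_lt hlt, ?_, hlt⟩
      rw [hinv, Fin.lt_def]
      exact Nat.lt_of_lt_of_le (by omega) hj
  · rintro ⟨hi, hj⟩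
    exact lt_of_le_of_lt (Fin.le_def.2 (by have := Fin.lt_def.1 hj; omega)) hi

lemma desSet_eq_descents_letter (hinv : isInvolution π) (h321 : avoids321 π) :
    desSet π = descents (letter π) := by
  refine filter_congr fun i hi => exists_congr fun h => ?_
  rw [letter_eq_opener, letter_eq_closer]
  exact apply_lt_apply_iff_of_succ hinv h321 (Nat.sub_add_cancel (mem_Ico.1 hi).1).symm

lemma image_openers (hinv : isInvolution π) :
    π '' {x | letter π x = opener} = {y | letter π y = closer} := by
  ext y
  simp only [Set.mem_image, Set.mem_ofPred_eq, letter_eq_opener, letter_eq_closer]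
  constructor
  · rintro ⟨x, hx, rfl⟩
    rwa [hinv]
  · intro hy
    exact ⟨π y, by rwa [hinv], hinv y⟩

-- On the openers both are the unique increasing bijection onto the closers.
lemma eq_of_letter_eq {σ τ : Perm (Fin n)} (hσ : isInvolution σ) (hσ321 : avoids321 σ)
    (hτ : isInvolution τ) (hτ321 : avoids321 τ) (h : letter σ = letter τ) : σ = τ := by
  set S := {x | letter σ x = opener}
  have hmono : StrictMono (fun x : S => σ x) :=
    fun x y hxy => strictMonoOn_openers hσ hσ321 x.2 y.2 hxy
  have hmono' : StrictMono (fun x : S => τ x) :=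
    fun x y hxy => strictMonoOn_openers hτ hτ321 (h ▸ x.2) (h ▸ y.2) hxy
  have hrange : Set.range (fun x : S => σ x) = Set.range (fun x : S => τ x) := by
    have hS : S = {x | letter τ x = opener} := by rw [← h]
    rw [← Set.image_eq_range, ← Set.image_eq_range, image_openers hσ, hS, image_openers hτ, h]
  have hopen : ∀ x, letter σ x = opener → σ x = τ x := fun x hx =>
    congrFun ((hmono.range_inj hmono').1 hrange) ⟨x, hx⟩
  ext x
  rcases hx : letter σ x with _ | _ | _
  · rw [hopen x hx]
  · have hx' : letter σ (σ x) = opener := by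
      rw [letter_eq_opener, hσ]
      exact letter_eq_closer.1 hx
    rw [← hτ (σ x), ← hopen _ hx', hσ]
  · rw [letter_eq_fixed.1 hx, letter_eq_fixed.1 (h ▸ hx)]

end Permutation

section Matching

variable {w : Fin n → Letter} (hB : #(positions w closer) = #(positions w opener))

def matching : positions w opener ≃o positions w closer :=
  ((positions w opener).orderIsoOfFin rfl).symm.trans ((positions w closer).orderIsoOfFin hB)

lemma count_matching (x : positions w opener) :
    count w closer (matching hB x : Fin n) = count w opener (x : Fin n) :=
  card_filter_lt_orderIso (matching hB) x

lemma lt_matching (hw : IsAdmissible w) (x : positions w opener) :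
    (x : Fin n) < matching hB x := by
  set y := matching hB x
  have hx := mem_positions.1 x.2
  have hy := mem_positions.1 y.2
  refine lt_of_le_of_ne (not_lt.1 fun hyx => ?_) fun h => by simp_all
  have hballot := hw.ballot (y.1.val + 1) y.1.isLt
  rw [count_succ_of_eq w closer hy, count_matching] at hballot
  have := count_mono w opener (Nat.lt_iff_add_one_le.1 (Fin.lt_def.1 hyx))
  omega

lemma matching_lt_of_fixed (hw : IsAdmissible w) (x : positions w opener) {i : Fin n}
    (hi : w i = fixed) (hxi : (x : Fin n) < i) : (matching hB x : Fin n) < i := by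
  set y := matching hB x
  have hx := mem_positions.1 x.2
  have hy := mem_positions.1 y.2
  refine lt_of_le_of_ne (not_lt.1 fun hiy => ?_) fun h => by simp_all
  have h1 := count_mono w closer hiy.le
  have h2 := count_mono w opener (Nat.lt_iff_add_one_le.1 (Fin.lt_def.1 hxi))
  rw [count_matching] at h1
  rw [count_succ_of_eq w opener hx, hw.fixed_balanced i hi] at h2
  omega

def matchingFun (x : Fin n) : Fin n :=
  if hx : w x = opener then matching hB ⟨x, mem_positions.2 hx⟩
  else if hx : w x = closer then (matching hB).symm ⟨x, mem_positions.2 hx⟩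
  else x

lemma matchingFun_of_opener {x : Fin n} (hx : w x = opener) :
    matchingFun hB x = matching hB ⟨x, mem_positions.2 hx⟩ :=
  dif_pos hx

lemma matchingFun_of_closer {y : Fin n} (hy : w y = closer) :
    matchingFun hB y = (matching hB).symm ⟨y, mem_positions.2 hy⟩ := by
  rw [matchingFun, dif_neg (by simp [hy]), dif_pos hy]

lemma matchingFun_of_fixed {i : Fin n} (hi : w i = fixed) : matchingFun hB i = i := by
  rw [matchingFun, dif_neg (by simp [hi]), dif_neg (by simp [hi])]

lemma matchingFun_involutive : Function.Involutive (matchingFun hB) := by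
  intro x
  rcases hx : w x
  · rw [matchingFun_of_opener hB hx, matchingFun_of_closer hB (mem_positions.1 (coe_mem _))]
    simp
  · rw [matchingFun_of_closer hB hx, matchingFun_of_opener hB (mem_positions.1 (coe_mem _))]
    simp
  · rw [matchingFun_of_fixed hB hx, matchingFun_of_fixed hB hx]

def involutionOf : Perm (Fin n) := (matchingFun_involutive hB).toPerm

lemma isInvolution_involutionOf : isInvolution (involutionOf hB) := matchingFun_involutive hB

lemma letter_involutionOf (hw : IsAdmissible w) : letter (involutionOf hB) = w := by
  funext x
  rcases hx : w x
  · rw [letter_eq_opener]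
    change x < matchingFun hB x
    rw [matchingFun_of_opener hB hx]
    exact lt_matching hB hw ⟨x, mem_positions.2 hx⟩
  · rw [letter_eq_closer]
    change matchingFun hB x < x
    rw [matchingFun_of_closer hB hx]
    have := lt_matching hB hw ((matching hB).symm ⟨x, mem_positions.2 hx⟩)
    rwa [OrderIso.apply_symm_apply] at this
  · rw [letter_eq_fixed]
    exact matchingFun_of_fixed hB hx

lemma avoids321_involutionOf (hw : IsAdmissible w) : avoids321 (involutionOf hB) := by
  refine avoids321_of_strictMonoOn {x | w x = closer} (fun x hx y hy hxy => ?_)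
    (fun x hx y hy hxy => ?_)
  · change matchingFun hB x < matchingFun hB y
    rw [matchingFun_of_closer hB hx, matchingFun_of_closer hB hy, Subtype.coe_lt_coe,
      OrderIso.lt_iff_lt]
    exact hxy
  · change matchingFun hB x < matchingFun hB y
    have hx : w x ≠ closer := hx
    have hy : w y ≠ closer := hy
    rcases hx' : w x <;> rcases hy' : w y <;>
      simp only [hx', hy', ne_eq, not_true_eq_false] at hx hy
    · rw [matchingFun_of_opener hB hx', matchingFun_of_opener hB hy', Subtype.coe_lt_coe,
        OrderIso.lt_iff_lt]
      exact hxy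
    · rw [matchingFun_of_opener hB hx', matchingFun_of_fixed hB hy']
      exact matching_lt_of_fixed hB hw _ hy' hxy
    · rw [matchingFun_of_fixed hB hx', matchingFun_of_opener hB hy']
      exact hxy.trans (lt_matching hB hw ⟨y, mem_positions.2 hy'⟩)
    · rwa [matchingFun_of_fixed hB hx', matchingFun_of_fixed hB hy']

end Matching

open Classical in
noncomputable def admissibleWords (n h k : ℕ) : Finset (Fin n → Letter) :=
  {w | IsAdmissible w ∧ count w opener n = count w closer n + h ∧ #(descents w) = k}

lemma mem_admissibleWords {h k : ℕ} {w : Fin n → Letter} :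
    w ∈ admissibleWords n h k ↔
      IsAdmissible w ∧ count w opener n = count w closer n + h ∧ #(descents w) = k := by
  simp [admissibleWords]

theorem card_involutions_eq_card_admissibleWords (k : ℕ) :
    #{π : Perm (Fin n) | isInvolution π ∧ avoids321 π ∧ #(desSet π) = k} =
      #(admissibleWords n 0 k) := by
  refine card_bij (fun π _ => letter π) (fun π hπ => ?_) (fun σ hσ τ hτ h => ?_)
    (fun w hw => ?_)
  · obtain ⟨hinv, h321, hk⟩ := (mem_filter.1 hπ).2
    rw [desSet_eq_descents_letter hinv h321] at hk
    exact mem_admissibleWords.2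
      ⟨isAdmissible_letter hinv h321, count_opener_eq_count_closer hinv, hk⟩
  · obtain ⟨hσ, hσ321, -⟩ := (mem_filter.1 hσ).2
    obtain ⟨hτ, hτ321, -⟩ := (mem_filter.1 hτ).2
    exact eq_of_letter_eq hσ hσ321 hτ hτ321 h
  · obtain ⟨hw, hbal, hk⟩ := mem_admissibleWords.1 hw
    have hB : #(positions w closer) = #(positions w opener) := by
      rw [← count_of_le w closer le_rfl, ← count_of_le w opener le_rfl, hbal, add_zero]
    have h321 := avoids321_involutionOf hB hw
    refine ⟨involutionOf hB, mem_filter.2 ⟨mem_univ _, isInvolution_involutionOf hB, h321, ?_⟩,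
      letter_involutionOf hB hw⟩
    rw [desSet_eq_descents_letter (isInvolution_involutionOf hB) h321, letter_involutionOf hB hw,
      hk]

section Snoc

variable (v : Fin n → Letter) (c : Letter)

lemma snoc_mk_of_lt {i : ℕ} (hi : i < n) :
    (Fin.snoc v c : Fin (n + 1) → Letter) ⟨i, by omega⟩ = v ⟨i, hi⟩ :=
  Fin.snoc_castSucc (α := fun _ => Letter) c v ⟨i, hi⟩

lemma snoc_mk_self : (Fin.snoc v c : Fin (n + 1) → Letter) ⟨n, n.lt_succ_self⟩ = c :=
  Fin.snoc_last (α := fun _ => Letter) c v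

lemma count_snoc (c' : Letter) (j : ℕ) :
    count (Fin.snoc v c : Fin (n + 1) → Letter) c' j =
      count v c' j + if n < j ∧ c = c' then 1 else 0 := by
  simp only [count, positions, filter_filter, card_filter, Fin.sum_univ_castSucc,
    Fin.snoc_castSucc, Fin.val_castSucc, Fin.snoc_last, Fin.val_last]
  congr 1
  simp [and_comm]

lemma count_snoc_of_le (c' : Letter) {j : ℕ} (hj : j ≤ n) :
    count (Fin.snoc v c : Fin (n + 1) → Letter) c' j = count v c' j := by
  simp [count_snoc, hj.not_gt]

lemma isAdmissible_snoc :
    IsAdmissible (Fin.snoc v c : Fin (n + 1) → Letter) ↔ IsAdmissible v ∧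
      (c = closer → count v closer n < count v opener n) ∧
      (c = fixed → count v opener n = count v closer n) := by
  have hlast : ∀ c', count (Fin.snoc v c : Fin (n + 1) → Letter) c' (n + 1) =
      count v c' n + if c = c' then 1 else 0 := fun c' => by
    simp [count_snoc, count_of_le v c' (Nat.le_succ n), count_of_le v c' le_rfl]
  constructor
  · rintro ⟨hbal, hfix⟩
    refine ⟨⟨fun j hj => ?_, fun i hi => ?_⟩, fun hc => ?_, fun hc => ?_⟩
    · simpa [count_snoc_of_le v c _ hj] using hbal j (hj.trans n.le_succ)
    · simpa [count_snoc_of_le v c _ i.isLt.le] using hfix i.castSucc (by simpa using hi)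
    · have := hbal (n + 1) le_rfl
      rw [hlast, hlast, hc] at this
      simpa using this
    · simpa [count_snoc_of_le v c _ le_rfl] using hfix (Fin.last n) (by simpa using hc)
  · rintro ⟨⟨hbal, hfix⟩, hcl, hfx⟩
    refine ⟨fun j hj => ?_, fun i hi => ?_⟩
    · rcases Nat.lt_succ_iff_lt_or_eq.1 (Nat.lt_succ_of_le hj) with hj | rfl
      · rw [count_snoc_of_le v c _ (Nat.lt_succ_iff.1 hj),
          count_snoc_of_le v c _ (Nat.lt_succ_iff.1 hj)]
        exact hbal j (Nat.lt_succ_iff.1 hj)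
      · rw [hlast, hlast]
        have := hbal n le_rfl
        rcases c <;>
          simp only [reduceCtorEq, ↓reduceIte, add_zero, forall_const, IsEmpty.forall_iff]
            at hcl ⊢ <;>
          omega
    · induction i using Fin.lastCases with
      | last =>
        simp only [Fin.snoc_last] at hi
        simpa [count_snoc_of_le v c _ le_rfl] using hfx hi
      | cast i =>
        simp only [Fin.snoc_castSucc] at hi
        simpa [count_snoc_of_le v c _ i.isLt.le] using hfix i hi

lemma endsWithOpener_snoc :
    EndsWithOpener (Fin.snoc v c : Fin (n + 1) → Letter) ↔ c = opener := by
  simp [EndsWithOpener, snoc_mk_self]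

lemma descents_snoc :
    descents (Fin.snoc v c : Fin (n + 1) → Letter) =
      if c = closer ∧ EndsWithOpener v then insert n (descents v) else descents v := by
  ext i
  rcases lt_trichotomy i n with hi | rfl | hi
  · have : i ∈ descents (Fin.snoc v c : Fin (n + 1) → Letter) ↔ i ∈ descents v := by
      simp only [descents, mem_filter, mem_Ico, hi, hi.trans n.lt_succ_self, exists_true_left,
        snoc_mk_of_lt v c hi, snoc_mk_of_lt v c (show i - 1 < n by omega)]
    split_ifs <;> simp [this, hi.ne]
  · rcases Nat.eq_zero_or_pos i with rfl | hpos
    · simp [descents, EndsWithOpener]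
    have hv : i ∉ descents v := by simp [descents]
    have hsnoc : i ∈ descents (Fin.snoc v c : Fin (i + 1) → Letter) ↔
        c = closer ∧ EndsWithOpener v := by
      simp [descents, EndsWithOpener, hpos, Nat.one_le_iff_ne_zero.2 hpos.ne', snoc_mk_self,
        snoc_mk_of_lt v c (show i - 1 < i by omega), and_comm]
    rw [hsnoc]
    split_ifs with h <;> simp [h, hv]
  · have h1 : i ∉ descents (Fin.snoc v c : Fin (n + 1) → Letter) := by
      simp only [descents, mem_filter, mem_Ico, not_and, not_exists]
      omega
    have h2 : i ∉ descents v := by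
      simp only [descents, mem_filter, mem_Ico, not_and, not_exists]
      omega
    simp only [h1, false_iff]
    split_ifs <;> simp [h2, hi.ne']

lemma card_descents_snoc :
    #(descents (Fin.snoc v c : Fin (n + 1) → Letter)) =
      #(descents v) + if c = closer ∧ EndsWithOpener v then 1 else 0 := by
  rw [descents_snoc]
  split_ifs
  · exact card_insert_of_notMem (by simp [descents])
  · rfl

lemma snoc_mem_admissibleWords {h k : ℕ} :
    (Fin.snoc v c : Fin (n + 1) → Letter) ∈ admissibleWords (n + 1) h k ↔ IsAdmissible v ∧
      (c = closer → count v closer n < count v opener n) ∧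
      (c = fixed → count v opener n = count v closer n) ∧
      count v opener n + (if c = opener then 1 else 0) =
        count v closer n + (if c = closer then 1 else 0) + h ∧
      #(descents v) + (if c = closer ∧ EndsWithOpener v then 1 else 0) = k := by
  simp only [mem_admissibleWords, isAdmissible_snoc, card_descents_snoc, count_snoc, n.lt_succ_self,
    true_and, count_of_le v _ n.le_succ, ← count_of_le v _ le_rfl, and_assoc]

variable {v} {h k : ℕ}

lemma snoc_opener_mem_admissibleWords :
    (Fin.snoc v opener : Fin (n + 1) → Letter) ∈ admissibleWords (n + 1) (h + 1) k ↔
      v ∈ admissibleWords n h k := by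
  rw [snoc_mem_admissibleWords, mem_admissibleWords]
  simp only [reduceCtorEq, IsEmpty.forall_iff, ↓reduceIte, add_zero, false_and, true_and,
    and_congr_right_iff, and_congr_left_iff]
  omega

lemma snoc_opener_notMem_admissibleWords_zero :
    (Fin.snoc v opener : Fin (n + 1) → Letter) ∉ admissibleWords (n + 1) 0 k := by
  rw [snoc_mem_admissibleWords]
  simp only [reduceCtorEq, IsEmpty.forall_iff, ↓reduceIte, add_zero, false_and, true_and,
    not_and]
  intro hv
  have := hv.ballot n le_rfl
  omega

lemma snoc_closer_mem_admissibleWords_of_endsWithOpener (hv : EndsWithOpener v) :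
    (Fin.snoc v closer : Fin (n + 1) → Letter) ∈ admissibleWords (n + 1) h k ↔
      k ≠ 0 ∧ v ∈ admissibleWords n (h + 1) (k - 1) := by
  rw [snoc_mem_admissibleWords, mem_admissibleWords]
  simp only [hv, reduceCtorEq, and_self, if_true, if_false, forall_const, IsEmpty.forall_iff,
    true_and]
  constructor
  · rintro ⟨hw, -, hc, hd⟩
    exact ⟨by omega, hw, by omega, by omega⟩
  · rintro ⟨hk, hw, hc, hd⟩
    exact ⟨hw, by omega, by omega, by omega⟩

lemma snoc_closer_mem_admissibleWords_of_not_endsWithOpener (hv : ¬EndsWithOpener v) :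
    (Fin.snoc v closer : Fin (n + 1) → Letter) ∈ admissibleWords (n + 1) h k ↔
      v ∈ admissibleWords n (h + 1) k := by
  rw [snoc_mem_admissibleWords, mem_admissibleWords]
  simp only [forall_const, reduceCtorEq, IsEmpty.forall_iff, ↓reduceIte, add_zero, hv, and_false,
    true_and, and_congr_right_iff]
  omega

lemma snoc_fixed_mem_admissibleWords :
    (Fin.snoc v fixed : Fin (n + 1) → Letter) ∈ admissibleWords (n + 1) h k ↔
      h = 0 ∧ v ∈ admissibleWords n 0 k := by
  rw [snoc_mem_admissibleWords, mem_admissibleWords]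
  simp only [reduceCtorEq, false_and, if_false, forall_const, IsEmpty.forall_iff, true_and,
    add_zero]
  constructor
  · rintro ⟨hw, hb, hc, hd⟩
    exact ⟨by omega, hw, hb, hd⟩
  · rintro ⟨rfl, hw, hb, hd⟩
    exact ⟨hw, hb, hb, hd⟩

end Snoc

noncomputable def numEndOpener (n h k : ℕ) : ℕ :=
  #{w | w ∈ admissibleWords n h k ∧ EndsWithOpener w}

noncomputable def numEndOther (n h k : ℕ) : ℕ :=
  #{w | w ∈ admissibleWords n h k ∧ ¬EndsWithOpener w}

variable {h k : ℕ}

lemma numEndOpener_add_numEndOther :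
    numEndOpener n h k + numEndOther n h k = #(admissibleWords n h k) := by
  rw [numEndOpener, numEndOther, ← filter_filter, ← filter_filter, filter_mem_eq_inter,
    univ_inter]
  exact card_filter_add_card_filter_not _

lemma numEndOpener_zero : numEndOpener 0 h k = 0 := by
  simp [numEndOpener, EndsWithOpener]

lemma numEndOther_zero : numEndOther 0 h k = if h = 0 ∧ k = 0 then 1 else 0 := by
  have hw (w : Fin 0 → Letter) : IsAdmissible w :=
    ⟨fun _ _ => by simp [count, positions], fun i => i.elim0⟩
  have hmem (w : Fin 0 → Letter) : w ∈ admissibleWords 0 h k ↔ h = 0 ∧ k = 0 := by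
    simp [mem_admissibleWords, hw, count, descents, eq_comm]
  simp only [numEndOther, EndsWithOpener, lt_irrefl, IsEmpty.exists_iff, not_false_eq_true,
    and_true, hmem]
  split_ifs <;> simp [*]

lemma numEndOpener_succ_zero : numEndOpener (n + 1) 0 k = 0 := by
  rw [numEndOpener, card_filter_pi_succ, sum_letter]
  simp [endsWithOpener_snoc, snoc_opener_notMem_admissibleWords_zero]

lemma numEndOpener_succ_succ : numEndOpener (n + 1) (h + 1) k = #(admissibleWords n h k) := by
  rw [numEndOpener, card_filter_pi_succ, sum_letter]
  simp [endsWithOpener_snoc, snoc_opener_mem_admissibleWords]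

lemma card_snoc_closer_mem_admissibleWords :
    #{v : Fin n → Letter | Fin.snoc v closer ∈ admissibleWords (n + 1) h k} =
      (if k = 0 then 0 else numEndOpener n (h + 1) (k - 1)) + numEndOther n (h + 1) k := by
  rw [← card_filter_add_card_filter_not EndsWithOpener, filter_filter, filter_filter,
    numEndOpener, numEndOther]
  congr 1
  · split_ifs with hk
    · simp only [hk, card_eq_zero, filter_eq_empty_iff, mem_univ, forall_const, not_and]
      exact fun v hv hE => ((snoc_closer_mem_admissibleWords_of_endsWithOpener hE).1 hv).1 rfl
    · congr 1
      exact filter_congr fun v _ => by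
        simp +contextual [snoc_closer_mem_admissibleWords_of_endsWithOpener, hk]
  · congr 1
    exact filter_congr fun v _ => by
      simp +contextual [snoc_closer_mem_admissibleWords_of_not_endsWithOpener]

lemma numEndOther_succ : numEndOther (n + 1) h k =
    (if k = 0 then 0 else numEndOpener n (h + 1) (k - 1)) + numEndOther n (h + 1) k +
      if h = 0 then #(admissibleWords n 0 k) else 0 := by
  rw [numEndOther, card_filter_pi_succ, sum_letter]
  simp only [endsWithOpener_snoc, reduceCtorEq, not_true_eq_false, not_false_eq_true, and_false,
    and_true, filter_false, card_empty, zero_add, card_snoc_closer_mem_admissibleWords,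
    snoc_fixed_mem_admissibleWords]
  split_ifs <;> simp [*]

def endOpenerFormula (n h k : ℕ) : ℕ :=
  if 1 ≤ h ∧ h ≤ n then ((n - h) / 2).choose k * (n - 1 - (n - h) / 2).choose k else 0

def endOtherFormula (n h k : ℕ) : ℕ :=
  if h = 0 then ((n + 1) / 2).choose k * (n / 2).choose k
  else if h ≤ n ∧ 1 ≤ k then ((n - h) / 2).choose k * (n - 1 - (n - h) / 2).choose (k - 1)
  else 0

lemma endOpenerFormula_succ_succ :
    endOpenerFormula (n + 1) (h + 1) k = endOpenerFormula n h k + endOtherFormula n h k := by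
  rw [endOpenerFormula, endOpenerFormula, endOtherFormula, Nat.add_sub_add_right,
    Nat.add_sub_cancel]
  rcases lt_or_ge n h with hn | hn
  · rw [if_neg (by omega), if_neg (by omega), if_neg (by omega), if_neg (by omega)]
  rcases Nat.eq_zero_or_pos h with rfl | hh
  · rw [if_pos (by omega), if_neg (by omega), if_pos rfl, Nat.sub_zero,
      show n - n / 2 = (n + 1) / 2 by omega, zero_add, mul_comm]
  rw [if_pos (by omega), if_pos (by omega), if_neg (by omega),
    show n - (n - h) / 2 = n - 1 - (n - h) / 2 + 1 by omega]
  rcases k with _ | k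
  · simp
  · rw [if_pos (by omega), Nat.choose_succ_succ', Nat.add_sub_cancel]
    ring

lemma endOtherFormula_succ_zero : endOtherFormula (n + 1) 0 (k + 1) =
    endOpenerFormula n 1 k + endOtherFormula n 1 (k + 1) +
      (endOpenerFormula n 0 (k + 1) + endOtherFormula n 0 (k + 1)) := by
  simp only [endOpenerFormula, endOtherFormula, if_neg one_ne_zero, if_true, le_refl, true_and,
    show 1 ≤ k + 1 by omega, and_true, Nat.add_sub_cancel, Nat.sub_zero, show ¬1 ≤ 0 by omega,
    false_and, if_false, zero_add]
  rcases Nat.eq_zero_or_pos n with rfl | hn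
  · simp
  rw [if_pos (show 1 ≤ n from hn), if_pos (show 1 ≤ n from hn)]
  obtain ⟨j, rfl | rfl⟩ := Nat.even_or_odd' n
  · obtain ⟨j, rfl⟩ : ∃ i, j = i + 1 := ⟨j - 1, by omega⟩
    rw [show (2 * (j + 1) + 1 + 1) / 2 = j + 2 by omega,
      show (2 * (j + 1) + 1) / 2 = j + 1 by omega, show (2 * (j + 1) - 1) / 2 = j by omega,
      show 2 * (j + 1) - 1 - j = j + 1 by omega, show 2 * (j + 1) / 2 = j + 1 by omega,
      Nat.choose_succ_succ' (j + 1) k, Nat.choose_succ_succ' j k]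
    ring
  · rw [show (2 * j + 1 + 1 + 1) / 2 = j + 1 by omega, show (2 * j + 1 + 1) / 2 = j + 1 by omega,
      show (2 * j + 1 - 1) / 2 = j by omega, show 2 * j + 1 - 1 - j = j by omega,
      show (2 * j + 1) / 2 = j by omega, Nat.choose_succ_succ' j k]
    ring

lemma endOtherFormula_succ_succ : endOtherFormula (n + 1) (h + 1) (k + 1) =
    endOpenerFormula n (h + 2) k + endOtherFormula n (h + 2) (k + 1) := by
  simp only [endOpenerFormula, endOtherFormula, Nat.add_sub_cancel, if_neg (Nat.succ_ne_zero _),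
    show 1 ≤ k + 1 by omega, and_true, show 1 ≤ h + 2 by omega, true_and]
  rcases lt_or_ge n (h + 2) with hn | hn
  · rw [if_neg (show ¬h + 2 ≤ n by omega), if_neg (show ¬h + 2 ≤ n by omega),
      show (n + 1 - (h + 1)) / 2 = 0 by omega]
    simp
  · rw [if_pos (by omega), if_pos hn, if_pos hn,
      show (n + 1 - (h + 1)) / 2 = (n - (h + 2)) / 2 + 1 by omega,
      show n - ((n - (h + 2)) / 2 + 1) = n - 1 - (n - (h + 2)) / 2 by omega,
      Nat.choose_succ_succ']
    ring

lemma endOtherFormula_succ : endOtherFormula (n + 1) h k =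
    (if k = 0 then 0 else endOpenerFormula n (h + 1) (k - 1)) + endOtherFormula n (h + 1) k +
      if h = 0 then endOpenerFormula n 0 k + endOtherFormula n 0 k else 0 := by
  rcases k with _ | k
  · simp only [endOpenerFormula, endOtherFormula]
    rcases h with _ | h <;> simp
  rcases h with _ | h
  · simpa using endOtherFormula_succ_zero
  · simpa using endOtherFormula_succ_succ

theorem numEndOpener_eq_and_numEndOther_eq (n : ℕ) : ∀ h k,
    numEndOpener n h k = endOpenerFormula n h k ∧ numEndOther n h k = endOtherFormula n h k := by
  induction n with
  | zero =>
    intro h k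
    refine ⟨by rw [numEndOpener_zero, endOpenerFormula, if_neg (by omega)], ?_⟩
    rw [numEndOther_zero, endOtherFormula]
    rcases h with _ | h <;> rcases k with _ | k <;> simp
  | succ n ih =>
    intro h k
    refine ⟨?_, ?_⟩
    · rcases h with _ | h
      · rw [numEndOpener_succ_zero, endOpenerFormula, if_neg (by omega)]
      · rw [numEndOpener_succ_succ, endOpenerFormula_succ_succ, ← numEndOpener_add_numEndOther,
          (ih h k).1, (ih h k).2]
    · rw [numEndOther_succ, endOtherFormula_succ, ← numEndOpener_add_numEndOther, (ih 0 k).1,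
        (ih 0 k).2, (ih (h + 1) k).2, (ih (h + 1) (k - 1)).1]

theorem card_admissibleWords_zero (n k : ℕ) :
    #(admissibleWords n 0 k) = ((n + 1) / 2).choose k * (n / 2).choose k := by
  obtain ⟨hP, hQ⟩ := numEndOpener_eq_and_numEndOther_eq n 0 k
  rw [← numEndOpener_add_numEndOther, hP, hQ, endOpenerFormula, endOtherFormula,
    if_neg (by omega), if_pos rfl, zero_add]

end Involution321

theorem descents_involutions_321_general (n k : ℕ) :
    ((Finset.univ : Finset (Equiv.Perm (Fin n))).filter
      (fun π => isInvolution π ∧ avoids321 π ∧ (desSet π).card = k)).card =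
    Nat.choose ((n + 1) / 2) k * Nat.choose (n / 2) k := by
  rw [Involution321.card_involutions_eq_card_admissibleWords,
    Involution321.card_admissibleWords_zero]

/-- The number of 321-avoiding involutions of {1,…,n} with exactly k descents is
C(⌈n/2⌉,k)·C(⌊n/2⌋,k). -/
theorem descents_involutions_321 (n k : ℕ) (hn : 1 ≤ n) (hk : k < n) :
    ((Finset.univ : Finset (Equiv.Perm (Fin n))).filter
      (fun π => isInvolution π ∧ avoids321 π ∧ (desSet π).card = k)).card =
    Nat.choose ((n + 1) / 2) k * Nat.choose (n / 2) k :=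
  descents_involutions_321_general n k
end

section
/- The bijection ξ from Dyck path prefixes of length n to Grand Dyck paths of length n (obtained by changing the first ⌈j/2⌉ unmatched N steps into E steps) preserves the peak set: Peak(P) = Peak(ξ(P)) for every Dyck path prefix P of length n. -/
open Finset

-- A lattice path with unit north and east steps is encoded as a list of booleans:
-- `true` is an N = (0,1) step and `false` is an E = (1,0) step.

/-- The height (#N − #E) of the path after its first t steps. -/
def ht (w : List Bool) (t : ℕ) : ℤ :=
  ((w.take t).count true : ℤ) - ((w.take t).count false : ℤ)

/-- A Dyck path prefix: a path that never goes below the diagonal y = x. -/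
def IsPrefixPath (w : List Bool) : Prop := ∀ t, 0 ≤ ht w t

/-- The peak set of a path: labels (1,…,length−1) of vertices that lie in the middle
of an NE factor. -/
def peakSet (w : List Bool) : Finset ℕ :=
  (Finset.Ico 1 w.length).filter
    (fun i => w.getD (i - 1) false = true ∧ w.getD i true = false)

/-- The N step at position i and the E step at position j face each other (are
matched): the slope-1 segment joining their midpoints stays weakly below the path,
i.e. the height just after step i is attained again just after step j and is never
undercut in between. -/
def Matched (w : List Bool) (i j : ℕ) : Prop :=
  i < j ∧ j < w.length ∧ w.getD i false = true ∧ w.getD j true = false ∧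
    ht w j = ht w (i + 1) ∧ ∀ t ∈ Finset.Icc (i + 1) j, ht w (i + 1) ≤ ht w t

instance (w : List Bool) (i j : ℕ) : Decidable (Matched w i j) := by
  unfold Matched; infer_instance

/-- Position i carries an unmatched N step. -/
def UnmatchedN (w : List Bool) (i : ℕ) : Prop :=
  i < w.length ∧ w.getD i false = true ∧ ∀ j < w.length, ¬ Matched w i j

instance (w : List Bool) (i : ℕ) : Decidable (UnmatchedN w i) := by
  unfold UnmatchedN; infer_instance

/-- The map ξ: change the first ⌈j/2⌉ unmatched N steps into E steps, where j is the
number of unmatched N steps. -/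
def xi (w : List Bool) : List Bool :=
  let U := (Finset.range w.length).filter (fun i => UnmatchedN w i)
  let F := (U.sort (· ≤ ·)).take ((U.card + 1) / 2)
  w.mapIdx (fun i b => if i ∈ F then false else b)

/-!
ξ only turns unmatched N steps into E steps. An NE factor survives, because its N step is
matched with the E step right after it. No NE factor is created either: if ξ turns the N step
at `i + 1` into an E step and step `i` is N, then step `i` is unmatched too (a path never dips
below the level reached by an unmatched N step), and since ξ turns an initial segment of the
unmatched N steps, it turns step `i` as well.
-/
theorem List.mem_take_of_lt_of_pairwise_le {α : Type*} [LinearOrder α] {l : List α}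
    (hl : l.Pairwise (· ≤ ·)) {k : ℕ} {a b : α} (ha : a ∈ l.take k) (hb : b ∈ l) (hba : b < a) :
    b ∈ l.take k := by
  rw [← List.take_append_drop k l] at hl hb
  rcases List.mem_append.mp hb with hb | hb
  · exact hb
  · exact absurd ((List.pairwise_append.mp hl).2.2 a ha b hb) (not_le.mpr hba)

theorem ht_succ {w : List Bool} {t : ℕ} (hlt : t < w.length) :
    ht w (t + 1) = ht w t + if w[t] then 1 else -1 := by
  unfold ht
  rw [List.take_add_one, List.getElem?_eq_getElem hlt]
  cases w[t] <;> simp <;> ring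

theorem matched_succ {w : List Bool} {i : ℕ} (hi : i + 1 < w.length)
    (hN : w.getD i false = true) (hE : w.getD (i + 1) true = false) : Matched w i (i + 1) := by
  refine ⟨i.lt_succ_self, hi, hN, hE, rfl, fun t hti => ?_⟩
  rw [Icc_self, mem_singleton] at hti
  rw [hti]

namespace UnmatchedN

variable {w : List Bool} {i : ℕ}

theorem getElem_eq_true (hu : UnmatchedN w i) : w[i]'hu.1 = true :=
  (List.getD_eq_getElem _ false hu.1).symm.trans hu.2.1

/-- The first descent below the level reached by an unmatched N step would be an E step
matched with it. -/
theorem ht_le (hu : UnmatchedN w i) {t : ℕ} (hit : i < t) (htl : t ≤ w.length) :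
    ht w (i + 1) ≤ ht w t := by
  induction t using Nat.strong_induction_on with
  | _ t ih =>
  obtain ⟨s, rfl⟩ : ∃ s, t = s + 1 := ⟨t - 1, by omega⟩
  rcases (Nat.le_of_lt_succ hit).eq_or_lt with rfl | his
  · exact le_rfl
  have hs : s < w.length := by omega
  have hbefore : ∀ r ∈ Icc (i + 1) s, ht w (i + 1) ≤ ht w r := fun r hr =>
    ih r (by grind) (by grind) (by grind)
  have hstep := ht_succ hs
  have hlast := hbefore s (right_mem_Icc.mpr his)
  cases hws : w[s]
  · have hne : ht w s ≠ ht w (i + 1) := fun heq =>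
      hu.2.2 s hs ⟨by omega, hs, hu.2.1, by rwa [List.getD_eq_getElem _ _ hs], heq, hbefore⟩
    simp only [hws, Bool.false_eq_true, if_false] at hstep
    omega
  · simp only [hws, if_true] at hstep
    omega

theorem of_succ (hu : UnmatchedN w (i + 1)) (hN : w.getD i false = true) : UnmatchedN w i := by
  refine ⟨by have := hu.1; omega, hN, fun j hj ⟨hij, _, _, hE, hback, _⟩ => ?_⟩
  have hj' : i + 1 < j := by
    refine lt_of_le_of_ne hij fun h => ?_
    subst h
    rw [List.getD_eq_getElem _ _ hj] at hE
    exact Bool.false_ne_true (hE.symm.trans hu.getElem_eq_true)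
  have hup : ht w (i + 1 + 1) = ht w (i + 1) + 1 := by
    simpa [hu.getElem_eq_true] using ht_succ hu.1
  have := hu.ht_le (t := j) (by omega) hj.le
  omega

end UnmatchedN

def xiFlips (w : List Bool) : List ℕ :=
  let U := (range w.length).filter (fun i => UnmatchedN w i)
  (U.sort (· ≤ ·)).take ((U.card + 1) / 2)

theorem xi_eq_mapIdx (w : List Bool) :
    xi w = w.mapIdx (fun i b => if i ∈ xiFlips w then false else b) := rfl

theorem length_xi (w : List Bool) : (xi w).length = w.length := List.length_mapIdx

theorem getD_xi {w : List Bool} {i : ℕ} (hi : i < w.length) (d : Bool) :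
    (xi w).getD i d = if i ∈ xiFlips w then false else w.getD i d := by
  rw [xi_eq_mapIdx, List.getD_eq_getElem _ d (by rwa [List.length_mapIdx]), List.getElem_mapIdx,
    List.getD_eq_getElem _ d hi]

theorem unmatchedN_of_mem_xiFlips {w : List Bool} {i : ℕ} (h : i ∈ xiFlips w) :
    UnmatchedN w i :=
  (mem_filter.mp ((mem_sort _).mp (List.mem_of_mem_take h))).2

theorem mem_xiFlips_of_lt {w : List Bool} {i j : ℕ} (hi : i ∈ xiFlips w) (hj : UnmatchedN w j)
    (hji : j < i) : j ∈ xiFlips w :=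
  List.mem_take_of_lt_of_pairwise_le (pairwise_sort _ _) hi
    ((mem_sort _).mpr (mem_filter.mpr ⟨mem_range.mpr hj.1, hj⟩)) hji

theorem peak_xi_iff {w : List Bool} {i : ℕ} (hi : i + 1 < w.length) :
    (xi w).getD i false = true ∧ (xi w).getD (i + 1) true = false ↔
      w.getD i false = true ∧ w.getD (i + 1) true = false := by
  rw [getD_xi (by omega), getD_xi hi]
  constructor
  · rintro ⟨hN, hE⟩
    have hi₀ : i ∉ xiFlips w := fun h => by simp [h] at hN
    rw [if_neg hi₀] at hN
    have hi₁ : i + 1 ∉ xiFlips w := fun h =>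
      hi₀ (mem_xiFlips_of_lt h ((unmatchedN_of_mem_xiFlips h).of_succ hN) i.lt_succ_self)
    rw [if_neg hi₁] at hE
    exact ⟨hN, hE⟩
  · rintro ⟨hN, hE⟩
    have hi₀ : i ∉ xiFlips w := fun h =>
      (unmatchedN_of_mem_xiFlips h).2.2 _ hi (matched_succ hi hN hE)
    have hi₁ : i + 1 ∉ xiFlips w := fun h => by
      rw [List.getD_eq_getElem _ _ hi] at hE
      exact Bool.false_ne_true (hE.symm.trans (unmatchedN_of_mem_xiFlips h).getElem_eq_true)
    rw [if_neg hi₀, if_neg hi₁]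
    exact ⟨hN, hE⟩

theorem peakSet_xi_general (w : List Bool) :
    peakSet (xi w) = peakSet w := by
  ext i
  simp only [peakSet, mem_filter, mem_Ico, length_xi]
  refine and_congr_right fun ⟨hi₁, hi⟩ => ?_
  obtain ⟨k, rfl⟩ := Nat.exists_eq_add_of_le' hi₁
  exact peak_xi_iff hi

/-- ξ preserves the peak set of a Dyck path prefix. -/
theorem peakSet_xi (w : List Bool) (hw : IsPrefixPath w) :
    peakSet (xi w) = peakSet w :=
  peakSet_xi_general w
end

section
/- For every n and k, the number of lattice paths from (0,0) to (⌈n/2⌉, ⌊n/2⌋) with steps N = (0,1) and E = (1,0) that have exactly k peaks (occurrences of NE) equals C(⌈n/2⌉, k) · C(⌊n/2⌋, k). -/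
open Finset

/-!
Induction on the first step. Removing a leading E keeps the number of peaks; removing a leading
N loses a peak exactly when the next step is E, so the remainder has to be counted together with
that N. Among the paths with `a + 1` N steps and `b + 1` E steps that start with N, none is
peakless and C(a+1, k+1)·C(b, k) have `k + 1` peaks, and with these counts both recursions reduce
to Pascal's rule.
-/

lemma card_peakSet_eq_sum (w : List Bool) :
    #(peakSet w) = ∑ i ∈ range (w.length - 1),
      if w.getD i false = true ∧ w.getD (i + 1) true = false then 1 else 0 := by
  rw [peakSet, card_filter, sum_Ico_eq_sum_range]
  refine sum_congr rfl fun i _ => ?_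
  simp [add_comm 1 i]

lemma card_peakSet_cons (c : Bool) (w : List Bool) :
    #(peakSet (c :: w)) = #(peakSet w) + if c = true ∧ w.head? = some false then 1 else 0 := by
  rw [card_peakSet_eq_sum, card_peakSet_eq_sum]
  cases w with
  | nil => simp
  | cons d w =>
    rw [List.length_cons, List.length_cons, Nat.add_sub_cancel, sum_range_succ']
    simp

@[simp]
lemma card_peakSet_false_cons (w : List Bool) : #(peakSet (false :: w)) = #(peakSet w) := by
  simp [card_peakSet_cons]

@[simp]
lemma card_peakSet_true_cons_true (w : List Bool) :
    #(peakSet (true :: true :: w)) = #(peakSet (true :: w)) := by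
  simp [card_peakSet_cons]

@[simp]
lemma card_peakSet_true_cons_false (w : List Bool) :
    #(peakSet (true :: false :: w)) = #(peakSet w) + 1 := by
  simp [card_peakSet_cons]

@[simp]
lemma card_peakSet_replicate (n : ℕ) (c : Bool) : #(peakSet (List.replicate n c)) = 0 := by
  induction n with
  | zero => simp [peakSet]
  | succ n ih => cases n <;> cases c <;> simp_all [List.replicate_succ, card_peakSet_cons]

lemma card_peakSet_true_cons_ne_zero {w : List Bool} (hw : false ∈ w) :
    #(peakSet (true :: w)) ≠ 0 := by
  induction w with
  | nil => simp at hw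
  | cons c w ih => cases c <;> simp_all

lemma finite_setOf_count_eq (a b : ℕ) :
    {w : List Bool | w.count true = a ∧ w.count false = b}.Finite :=
  (List.finite_length_eq Bool (a + b)).subset fun w ⟨ha, hb⟩ => by
    simp [← w.count_true_add_count_false, ha, hb]

noncomputable def latticePaths (a b : ℕ) : Finset (List Bool) :=
  (finite_setOf_count_eq a b).toFinset

@[simp]
lemma mem_latticePaths {a b : ℕ} {w : List Bool} :
    w ∈ latticePaths a b ↔ w.count true = a ∧ w.count false = b := by
  simp [latticePaths]

lemma latticePaths_zero_right (a : ℕ) : latticePaths a 0 = {List.replicate a true} := by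
  ext w
  rw [mem_latticePaths, mem_singleton, List.eq_replicate_iff]
  grind [List.count_eq_zero]

lemma latticePaths_zero_left (b : ℕ) : latticePaths 0 b = {List.replicate b false} := by
  ext w
  rw [mem_latticePaths, mem_singleton, List.eq_replicate_iff]
  grind [List.count_eq_zero]

lemma latticePaths_succ_succ (a b : ℕ) :
    latticePaths (a + 1) (b + 1) =
      (latticePaths a (b + 1)).map ⟨_, List.cons_injective (a := true)⟩ ∪
        (latticePaths (a + 1) b).map ⟨_, List.cons_injective (a := false)⟩ := by
  ext (_ | ⟨_ | _, w⟩) <;> simp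

lemma card_filter_latticePaths_succ_succ (a b : ℕ) (p : List Bool → Prop) [DecidablePred p] :
    #{w ∈ latticePaths (a + 1) (b + 1) | p w} =
      #{w ∈ latticePaths a (b + 1) | p (true :: w)} +
        #{w ∈ latticePaths (a + 1) b | p (false :: w)} := by
  rw [latticePaths_succ_succ, filter_union, card_union_of_disjoint, filter_map, filter_map,
    card_map, card_map]
  · rfl
  · refine disjoint_filter_filter (disjoint_left.2 ?_)
    simp only [mem_map]
    rintro _ ⟨u, -, rfl⟩ ⟨v, -, h⟩
    simp at h

lemma card_filter_peakSet_latticePaths_zero_right (a k : ℕ) :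
    #{w ∈ latticePaths a 0 | #(peakSet w) = k} = a.choose k * Nat.choose 0 k := by
  rw [latticePaths_zero_right, filter_singleton, card_peakSet_replicate]
  cases k <;> simp

lemma card_filter_peakSet_latticePaths_zero_left (b k : ℕ) :
    #{w ∈ latticePaths 0 b | #(peakSet w) = k} = Nat.choose 0 k * b.choose k := by
  rw [latticePaths_zero_left, filter_singleton, card_peakSet_replicate]
  cases k <;> simp

lemma card_filter_peakSet_true_cons_latticePaths (a b k : ℕ)
    (h : ∀ a k, #{w ∈ latticePaths a b | #(peakSet w) = k} = a.choose k * b.choose k) :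
    #{w ∈ latticePaths a (b + 1) | #(peakSet (true :: w)) = k + 1} =
      (a + 1).choose (k + 1) * b.choose k := by
  induction a with
  | zero =>
    rw [latticePaths_zero_left, filter_singleton, List.replicate_succ,
      card_peakSet_true_cons_false, card_peakSet_replicate]
    cases k <;> simp [Nat.choose_eq_zero_of_lt]
  | succ a ih =>
    rw [card_filter_latticePaths_succ_succ]
    simp only [card_peakSet_true_cons_true, card_peakSet_true_cons_false,
      Nat.add_right_cancel_iff, ih, h]
    rw [Nat.choose_succ_succ' (a + 1)]
    ring

lemma card_filter_peakSet_latticePaths (a b k : ℕ) :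
    #{w ∈ latticePaths a b | #(peakSet w) = k} = a.choose k * b.choose k := by
  induction b generalizing a k with
  | zero => exact card_filter_peakSet_latticePaths_zero_right a k
  | succ b ih =>
    cases a with
    | zero => exact card_filter_peakSet_latticePaths_zero_left (b + 1) k
    | succ a =>
      rw [card_filter_latticePaths_succ_succ]
      simp only [card_peakSet_false_cons, ih]
      cases k with
      | zero =>
        have hS : #{w ∈ latticePaths a (b + 1) | #(peakSet (true :: w)) = 0} = 0 := by
          rw [card_eq_zero, filter_eq_empty_iff]
          intro w hw
          refine card_peakSet_true_cons_ne_zero (List.count_pos_iff.mp ?_)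
          simp only [mem_latticePaths] at hw
          omega
        rw [hS, zero_add]
        simp
      | succ k =>
        rw [card_filter_peakSet_true_cons_latticePaths a b k ih, Nat.choose_succ_succ' b]
        ring

/-- The number of lattice paths from (0,0) to (⌈n/2⌉, ⌊n/2⌋) with exactly k peaks is
C(⌈n/2⌉,k)·C(⌊n/2⌋,k). -/
theorem count_grand_paths_with_k_peaks (n k : ℕ) :
    Nat.card {w : List Bool //
        w.length = n ∧ w.count true = n / 2 ∧ (peakSet w).card = k} =
    Nat.choose ((n + 1) / 2) k * Nat.choose (n / 2) k := by
  have hpaths (w : List Bool) : (w.length = n ∧ w.count true = n / 2 ∧ #(peakSet w) = k) ↔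
      w ∈ {w ∈ latticePaths (n / 2) ((n + 1) / 2) | #(peakSet w) = k} := by
    rw [mem_filter, mem_latticePaths, ← w.count_true_add_count_false]
    omega
  rw [Nat.card_congr (Equiv.subtypeEquivRight hpaths), Nat.card_eq_finsetCard,
    card_filter_peakSet_latticePaths, mul_comm]
end

section
/- There is a bijection ψ from the set of partitions whose Young diagram fits inside a ⌊n/2⌋ × ⌈n/2⌉ box to the set of lattice paths from (0,0) to (⌈n/2⌉, ⌊n/2⌋) with steps N and E, such that for every partition λ, the hook decomposition of λ equals the peak set of ψ(λ). -/
open Finset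

/-- A partition, encoded as the weakly decreasing sequence of its (0-indexed) part
sizes, padded with zeros. -/
def IsPartitionFun (lam : ℕ → ℕ) : Prop := Antitone lam ∧ ∃ N, lam N = 0

/-- The length of the c-th column (0-indexed) of the Young diagram of lam,
i.e. the c-th part of the conjugate partition. -/
noncomputable def colLen (lam : ℕ → ℕ) (c : ℕ) : ℕ := Nat.card {r : ℕ // c + 1 ≤ lam r}

/-- The side of the Durfee square of lam. -/
noncomputable def durfee (lam : ℕ → ℕ) : ℕ := Nat.card {r : ℕ // r + 1 ≤ lam r}

/-- The hook decomposition of lam: the set of sizes of the hooks obtained by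
repeatedly removing the largest hook (first row plus first column); the j-th hook
removed (j = 0,1,…, from the outside in) has size `lam j + colLen lam j - (2j+1)`. -/
noncomputable def hookDecomposition (lam : ℕ → ℕ) : Finset ℕ :=
  (Finset.range (durfee lam)).image (fun j => lam j + colLen lam j - (2 * j + 1))

private lemma hp_card_lt (m : ℕ) : Nat.card {r : ℕ // r < m} = m := by
  rw [← Nat.card_congr (Fin.equivSubtype (n := m))]
  simp

private lemma hp_colLen_lt_iff {lam : ℕ → ℕ} (hA : Antitone lam) {N : ℕ} (hN : lam N = 0)
    (c r : ℕ) : r < colLen lam c ↔ c + 1 ≤ lam r := by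
  have hex : ∃ s, lam s < c + 1 := ⟨N, by omega⟩
  have key : ∀ s, c + 1 ≤ lam s ↔ s < Nat.find hex := by
    intro s
    constructor
    · intro h
      by_contra h'
      push_neg at h'
      have h1 := Nat.find_spec hex
      have h2 := hA h'
      omega
    · intro h
      have := Nat.find_min hex h
      omega
  have hcol : colLen lam c = Nat.find hex := by
    rw [colLen, Nat.card_congr (Equiv.subtypeEquivRight key), hp_card_lt]
  rw [hcol, ← key]

private lemma hp_durfee_lt_iff {lam : ℕ → ℕ} (hA : Antitone lam) {N : ℕ} (hN : lam N = 0)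
    (r : ℕ) : r < durfee lam ↔ r + 1 ≤ lam r := by
  have hex : ∃ s, lam s < s + 1 := ⟨N, by omega⟩
  have key : ∀ s, s + 1 ≤ lam s ↔ s < Nat.find hex := by
    intro s
    constructor
    · intro h
      by_contra h'
      push_neg at h'
      have h1 := Nat.find_spec hex
      have h2 := hA h'
      omega
    · intro h
      have := Nat.find_min hex h
      omega
  have hd : durfee lam = Nat.find hex := by
    rw [durfee, Nat.card_congr (Equiv.subtypeEquivRight key), hp_card_lt]
  rw [hd, ← key]

def IsBox (a b : ℕ) (lam : ℕ → ℕ) : Prop :=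
  Antitone lam ∧ (∀ t, lam t ≤ b) ∧ (∀ t, a ≤ t → lam t = 0)

namespace IsBox
variable {a b : ℕ} {lam : ℕ → ℕ} (h : IsBox a b lam)

include h

lemma zero_a : lam a = 0 := h.2.2 a le_rfl

lemma colLen_iff (c r : ℕ) : r < colLen lam c ↔ c + 1 ≤ lam r :=
  hp_colLen_lt_iff h.1 h.zero_a c r

lemma durfee_iff (r : ℕ) : r < durfee lam ↔ r + 1 ≤ lam r :=
  hp_durfee_lt_iff h.1 h.zero_a r

lemma colLen_le (c : ℕ) : colLen lam c ≤ a := by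
  by_contra hc
  have := (h.colLen_iff c a).1 (by omega)
  have := h.zero_a
  omega

lemma colLen_anti {c c' : ℕ} (hc : c ≤ c') : colLen lam c' ≤ colLen lam c := by
  by_contra hcon
  have h1 := (h.colLen_iff c' (colLen lam c)).1 (by omega)
  have h2 := (h.colLen_iff c (colLen lam c)).2 (by omega)
  omega

lemma lam_ge {j : ℕ} (hj : j < durfee lam) : j + 1 ≤ lam j := (h.durfee_iff j).1 hj

lemma colLen_ge {j : ℕ} (hj : j < durfee lam) : j + 1 ≤ colLen lam j :=
  (h.colLen_iff j j).2 (h.lam_ge hj)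

lemma durfee_le_a : durfee lam ≤ a := by
  by_contra hc
  have := h.lam_ge (show a < durfee lam by omega)
  have := h.zero_a
  omega

lemma durfee_le_b : durfee lam ≤ b := by
  by_contra hc
  have := h.lam_ge (show b < durfee lam by omega)
  have := h.2.1 b
  omega

/-- arm gap: for i ≤ j < d, A j + (j-i) ≤ A i where A j = lam j - (j+1). -/
lemma arm_gap {i j : ℕ} (hij : i ≤ j) (hj : j < durfee lam) :
    (lam j - (j + 1)) + (j - i) ≤ lam i - (i + 1) := by
  have h1 := h.1 hij
  have h2 := h.lam_ge hj
  omega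

/-- leg gap (in terms of B j = colLen j - j ≥ 1). -/
lemma leg_gap {i j : ℕ} (hij : i ≤ j) (hj : j < durfee lam) :
    (colLen lam j - j) + (j - i) ≤ colLen lam i - i := by
  have h1 := h.colLen_anti hij
  have h2 := h.colLen_ge hj
  omega

lemma arm_lt {j : ℕ} (hj : j < durfee lam) : (lam j - (j + 1)) + 1 ≤ b := by
  have h1 := h.2.1 j
  have h2 := h.lam_ge hj
  omega

lemma leg_le {j : ℕ} (hj : j < durfee lam) : (colLen lam j - j) + j ≤ a := by
  have h1 := h.colLen_le j
  have h2 := h.colLen_ge hj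
  omega

end IsBox

/-- the profile function -/
noncomputable def fp (b : ℕ) (lam : ℕ → ℕ) (t : ℕ) : ℕ :=
  max (t - b)
    ((Finset.range (durfee lam)).sup fun j => min (t - (lam j - (j + 1))) (colLen lam j - j))

lemma fp_zero (b : ℕ) (lam : ℕ → ℕ) : fp b lam 0 = 0 := by
  unfold fp
  apply Nat.le_antisymm _ (Nat.zero_le _)
  apply max_le (by omega)
  apply Finset.sup_le
  intro j _
  omega

lemma fp_le_succ (b : ℕ) (lam : ℕ → ℕ) (t : ℕ) : fp b lam t ≤ fp b lam (t + 1) := by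
  unfold fp
  apply max_le
  · exact le_max_of_le_left (by omega)
  · apply le_max_of_le_right
    apply Finset.sup_le
    intro j hj
    have h1 : min (t + 1 - (lam j - (j + 1))) (colLen lam j - j) ≤
        (Finset.range (durfee lam)).sup fun j => min (t + 1 - (lam j - (j + 1))) (colLen lam j - j) :=
      Finset.le_sup (f := fun j => min (t + 1 - (lam j - (j + 1))) (colLen lam j - j)) hj
    omega

lemma fp_succ_le (b : ℕ) (lam : ℕ → ℕ) (t : ℕ) : fp b lam (t + 1) ≤ fp b lam t + 1 := by
  unfold fp
  have hm := le_max_left (t - b) ((Finset.range (durfee lam)).sup fun j => min (t - (lam j - (j + 1))) (colLen lam j - j))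
  have hm2 := le_max_right (t - b) ((Finset.range (durfee lam)).sup fun j => min (t - (lam j - (j + 1))) (colLen lam j - j))
  apply max_le
  · omega
  · apply Finset.sup_le
    intro j hj
    have h1 : min (t - (lam j - (j + 1))) (colLen lam j - j) ≤
        (Finset.range (durfee lam)).sup fun j => min (t - (lam j - (j + 1))) (colLen lam j - j) :=
      Finset.le_sup (f := fun j => min (t - (lam j - (j + 1))) (colLen lam j - j)) hj
    omega

lemma fp_n {a b n : ℕ} {lam : ℕ → ℕ} (h : IsBox a b lam) (hab : a + b = n) :
    fp b lam n = a := by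
  unfold fp
  apply Nat.le_antisymm
  · apply max_le (by omega)
    apply Finset.sup_le
    intro j hj
    have := h.leg_le (Finset.mem_range.1 hj)
    omega
  · exact le_max_of_le_left (by omega)

lemma le_fp_left (b : ℕ) (lam : ℕ → ℕ) (t : ℕ) : t - b ≤ fp b lam t := by
  unfold fp; exact le_max_left _ _

lemma le_fp_term {lam : ℕ → ℕ} {j : ℕ} (b : ℕ) (hj : j ∈ Finset.range (durfee lam)) (t : ℕ) :
    min (t - (lam j - (j + 1))) (colLen lam j - j) ≤ fp b lam t := by
  unfold fp
  exact le_max_of_le_right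
    (Finset.le_sup (f := fun j => min (t - (lam j - (j + 1))) (colLen lam j - j)) hj)

lemma fp_peak_iff {a b : ℕ} {lam : ℕ → ℕ} (h : IsBox a b lam) (i : ℕ) :
    (fp b lam i = fp b lam (i - 1) + 1 ∧ fp b lam (i + 1) = fp b lam i) ↔
      ∃ j < durfee lam, i = (lam j - (j + 1)) + (colLen lam j - j) := by
  constructor
  · rintro ⟨h1, h2⟩
    have hfp : fp b lam i =
        max (i - b) ((Finset.range (durfee lam)).sup fun j => min (i - (lam j - (j + 1))) (colLen lam j - j)) := rfl
    have hf1 : 1 ≤ fp b lam i := by omega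
    rcases max_choice (i - b) ((Finset.range (durfee lam)).sup fun j => min (i - (lam j - (j + 1))) (colLen lam j - j)) with hc | hc
    · exfalso
      have h4 : fp b lam i = i - b := by rw [hfp, hc]
      have h3 := le_fp_left b lam (i + 1)
      omega
    · have hd : durfee lam ≠ 0 := by
        intro h0
        have h5 : fp b lam i = ((Finset.range (durfee lam)).sup fun j =>
            min (i - (lam j - (j + 1))) (colLen lam j - j)) := by rw [hfp, hc]
        rw [h0] at h5
        simp at h5
        omega
      obtain ⟨j, hj, hsup⟩ := Finset.exists_mem_eq_sup (Finset.range (durfee lam))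
        ⟨0, Finset.mem_range.2 (by omega)⟩ (fun j => min (i - (lam j - (j + 1))) (colLen lam j - j))
      have hsup' : ((Finset.range (durfee lam)).sup fun j => min (i - (lam j - (j + 1))) (colLen lam j - j))
          = min (i - (lam j - (j + 1))) (colLen lam j - j) := hsup
      have h4 : fp b lam i = min (i - (lam j - (j + 1))) (colLen lam j - j) := by
        rw [hfp, hc, hsup']
      have hBj : 1 ≤ colLen lam j - j := by
        have := h.colLen_ge (Finset.mem_range.1 hj); omega
      rcases lt_or_ge (i - (lam j - (j + 1))) (colLen lam j - j) with hm | hm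
      · exfalso
        have h3 := le_fp_term b hj (i + 1)
        omega
      · have h3 := le_fp_term b hj (i - 1)
        refine ⟨j, Finset.mem_range.1 hj, ?_⟩
        omega
  · rintro ⟨j, hjd, rfl⟩
    have hBj : 1 ≤ colLen lam j - j := by have := h.colLen_ge hjd; omega
    have hAb := h.arm_lt hjd
    have hS : ∀ t, (lam j - (j + 1)) + (colLen lam j - j) - 1 ≤ t →
        t ≤ (lam j - (j + 1)) + (colLen lam j - j) + 1 →
        fp b lam t = min (t - (lam j - (j + 1))) (colLen lam j - j) := by
      intro t ht1 ht2
      unfold fp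
      apply le_antisymm
      · apply max_le
        · omega
        · apply Finset.sup_le
          intro j' hj'
          show min (t - (lam j' - (j' + 1))) (colLen lam j' - j') ≤
            min (t - (lam j - (j + 1))) (colLen lam j - j)
          rw [Finset.mem_range] at hj'
          rcases lt_trichotomy j' j with hlt | heq | hgt
          · have hg := h.arm_gap (le_of_lt hlt) hjd
            omega
          · subst heq; omega
          · have hg := h.leg_gap (le_of_lt hgt) hj'
            omega
      · exact le_max_of_le_right
          (Finset.le_sup (f := fun j' => min (t - (lam j' - (j' + 1))) (colLen lam j' - j'))
            (Finset.mem_range.2 hjd))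
    have hC1 := hS ((lam j - (j + 1)) + (colLen lam j - j)) (by omega) (by omega)
    have hC2 := hS ((lam j - (j + 1)) + (colLen lam j - j) - 1) (by omega) (by omega)
    have hC3 := hS ((lam j - (j + 1)) + (colLen lam j - j) + 1) (by omega) (by omega)
    exact ⟨by omega, by omega⟩

noncomputable def wd (n b : ℕ) (lam : ℕ → ℕ) : List Bool :=
  (List.range n).map fun t => decide (fp b lam t < fp b lam (t + 1))

lemma wd_length (n b : ℕ) (lam : ℕ → ℕ) : (wd n b lam).length = n := by simp [wd]

lemma wd_getD (n b : ℕ) (lam : ℕ → ℕ) {t : ℕ} (ht : t < n) (dflt : Bool) :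
    (wd n b lam).getD t dflt = decide (fp b lam t < fp b lam (t + 1)) := by
  rw [List.getD_eq_getElem _ _ (by simpa [wd] using ht)]
  simp [wd]

/-- prefix count of trues -/
def pc (w : List Bool) (t : ℕ) : ℕ := (w.take t).count true

lemma pc_zero (w : List Bool) : pc w 0 = 0 := rfl

lemma pc_succ (w : List Bool) (t : ℕ) (ht : t < w.length) :
    pc w (t + 1) = pc w t + (if w.getD t false = true then 1 else 0) := by
  unfold pc
  rw [List.take_succ, List.getElem?_eq_getElem ht, List.getD_eq_getElem _ _ ht]
  cases hb : w[t] <;> simp [hb, List.count_append]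

lemma pc_succ_ge (w : List Bool) (t : ℕ) (ht : w.length ≤ t) : pc w (t + 1) = pc w t := by
  unfold pc
  rw [List.take_of_length_le ht, List.take_of_length_le (by omega)]

lemma pc_le_succ (w : List Bool) (t : ℕ) : pc w t ≤ pc w (t + 1) := by
  rcases lt_or_ge t w.length with ht | ht
  · rw [pc_succ w t ht]; omega
  · rw [pc_succ_ge w t ht]

lemma pc_succ_le (w : List Bool) (t : ℕ) : pc w (t + 1) ≤ pc w t + 1 := by
  rcases lt_or_ge t w.length with ht | ht
  · rw [pc_succ w t ht]; split <;> omega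
  · rw [pc_succ_ge w t ht]; omega

lemma pc_length (w : List Bool) : pc w w.length = w.count true := by
  unfold pc; rw [List.take_length]

lemma pc_true_iff (w : List Bool) {t : ℕ} (ht : t < w.length) :
    w.getD t false = true ↔ pc w (t + 1) = pc w t + 1 := by
  have h2 := pc_succ w t ht
  constructor
  · intro hb
    rw [hb] at h2
    simpa using h2
  · intro hp
    cases hb : w.getD t false
    · exfalso
      rw [hb] at h2
      simp at h2
      omega
    · rfl

lemma pc_false_iff (w : List Bool) {t : ℕ} (ht : t < w.length) :
    w.getD t true = false ↔ pc w (t + 1) = pc w t := by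
  have h2 := pc_succ w t ht
  have hg : w.getD t true = w.getD t false := by
    rw [List.getD_eq_getElem _ _ ht, List.getD_eq_getElem _ _ ht]
  rw [hg]
  constructor
  · intro hb
    rw [hb] at h2
    simpa using h2
  · intro hp
    cases hb : w.getD t false
    · rfl
    · exfalso
      rw [hb] at h2
      simp at h2
      omega

lemma mem_peakSet_iff (w : List Bool) (i : ℕ) :
    i ∈ peakSet w ↔
      1 ≤ i ∧ i < w.length ∧ pc w i = pc w (i - 1) + 1 ∧ pc w (i + 1) = pc w i := by
  unfold peakSet
  rw [Finset.mem_filter, Finset.mem_Ico]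
  constructor
  · rintro ⟨⟨hi1, hi2⟩, hp1, hp2⟩
    have h1 : i - 1 < w.length := by omega
    have e1 := (pc_true_iff w h1).1 hp1
    have e2 := (pc_false_iff w hi2).1 hp2
    rw [show i - 1 + 1 = i by omega] at e1
    exact ⟨hi1, hi2, e1, e2⟩
  · rintro ⟨hi1, hi2, hp1, hp2⟩
    have h1 : i - 1 < w.length := by omega
    refine ⟨⟨hi1, hi2⟩, (pc_true_iff w h1).2 ?_, (pc_false_iff w hi2).2 hp2⟩
    rw [show i - 1 + 1 = i by omega]
    exact hp1

lemma pc_wd {a b n : ℕ} {lam : ℕ → ℕ} (h : IsBox a b lam) :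
    ∀ t, t ≤ n → pc (wd n b lam) t = fp b lam t := by
  intro t
  induction t with
  | zero => intro _; rw [pc_zero, fp_zero]
  | succ t ih =>
    intro ht
    have h1 : t < n := by omega
    have h2 := pc_succ (wd n b lam) t (by rw [wd_length]; omega)
    rw [wd_getD n b lam h1] at h2
    have h4 := fp_le_succ b lam t
    have h5 := fp_succ_le b lam t
    rw [ih (by omega)] at h2
    by_cases hc : fp b lam t < fp b lam (t + 1) <;> simp [hc] at h2 <;> omega

lemma wd_count {a b n : ℕ} {lam : ℕ → ℕ} (h : IsBox a b lam) (hab : a + b = n) :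
    (wd n b lam).count true = a := by
  have h1 := pc_length (wd n b lam)
  rw [wd_length] at h1
  rw [← h1, pc_wd h n le_rfl, fp_n h hab]

/-- peaks of the word of lam are exactly the principal hooks -/
lemma peakSet_wd {a b n : ℕ} {lam : ℕ → ℕ} (h : IsBox a b lam) (hab : a + b = n) (i : ℕ) :
    i ∈ peakSet (wd n b lam) ↔
      ∃ j < durfee lam, i = (lam j - (j + 1)) + (colLen lam j - j) := by
  rw [mem_peakSet_iff, wd_length]
  constructor
  · rintro ⟨hi1, hi2, hp1, hp2⟩
    rw [pc_wd (n := n) h i (by omega), pc_wd (n := n) h (i-1) (by omega)] at hp1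
    rw [pc_wd (n := n) h (i+1) (by omega), pc_wd (n := n) h i (by omega)] at hp2
    exact (fp_peak_iff h i).1 ⟨hp1, hp2⟩
  · intro hex
    obtain ⟨j, hj, hi⟩ := hex
    have hBj : 1 ≤ colLen lam j - j := by have := h.colLen_ge hj; omega
    have hAb := h.arm_lt hj
    have hLa := h.leg_le hj
    have hi1 : 1 ≤ i := by omega
    have hi2 : i < n := by omega
    have hpk := (fp_peak_iff h i).2 ⟨j, hj, hi⟩
    obtain ⟨hk1, hk2⟩ := hpk
    rw [← pc_wd (n := n) h i (by omega), ← pc_wd (n := n) h (i-1) (by omega)] at hk1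
    rw [← pc_wd (n := n) h (i+1) (by omega), ← pc_wd (n := n) h i (by omega)] at hk2
    exact ⟨hi1, hi2, hk1, hk2⟩

lemma chain_le {g : ℕ → ℕ} (hstep : ∀ t, g (t + 1) ≤ g t + 1) :
    ∀ {s t : ℕ}, s ≤ t → g t + s ≤ g s + t := by
  intro s t hst
  induction t, hst using Nat.le_induction with
  | base => omega
  | succ t ht ih => have := hstep t; omega

lemma step_formula {n a b : ℕ} (hab : a + b = n) (g : ℕ → ℕ) (hg0 : g 0 = 0)
    (hmono : ∀ t, g t ≤ g (t + 1)) (hstep : ∀ t, g (t + 1) ≤ g t + 1) (hgn : g n = a)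
    (P : Finset ℕ)
    (hP : ∀ i, i ∈ P ↔ (1 ≤ i ∧ i < n ∧ g i = g (i - 1) + 1 ∧ g (i + 1) = g i)) :
    ∀ t, t ≤ n → g t = max (t - b) (P.sup fun p => min (t - (p - g p)) (g p)) := by
  have hMono : Monotone g := monotone_nat_of_le_succ hmono
  have hch := @chain_le g hstep
  have hle_t : ∀ t, g t ≤ t := by intro t; have := hch (Nat.zero_le t); omega
  have hLB : ∀ t, t ≤ n → max (t - b) (P.sup fun p => min (t - (p - g p)) (g p)) ≤ g t := by
    intro t htn
    apply max_le
    · have := hch htn; omega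
    · apply Finset.sup_le
      intro p hp
      show min (t - (p - g p)) (g p) ≤ g t
      obtain ⟨hp1, hp2, hp3, hp4⟩ := (hP p).1 hp
      rcases le_or_gt p t with hc | hc
      · have := hMono hc; omega
      · have := hch (le_of_lt hc); omega
  have hUB : ∀ k t, t + k = n → g t ≤ max (t - b) (P.sup fun p => min (t - (p - g p)) (g p)) := by
    intro k
    induction k with
    | zero =>
      intro t htn
      have hteq : t = n := by omega
      subst hteq
      exact le_max_of_le_left (by omega)
    | succ k ih =>
      intro t htn
      have htn' : t < n := by omega
      rcases eq_or_lt_of_le (hmono t) with hc | hc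
      · -- flat step at t
        by_cases hz : g t = 0
        · exact hz ▸ Nat.zero_le _
        · have hex : ∃ s, s < t ∧ g (s + 1) = g s + 1 := by
            by_contra hcon
            push_neg at hcon
            have hzero : ∀ u, u ≤ t → g u = 0 := by
              intro u hu
              induction u with
              | zero => exact hg0
              | succ u ih2 =>
                have h5 := hcon u (by omega)
                have h6 := hmono u
                have h7 := hstep u
                have h8 := ih2 (by omega)
                omega
            exact hz (hzero t le_rfl)
          obtain ⟨s, hs1, hs2⟩ := hex
          set s0 := Nat.findGreatest (fun s => g (s + 1) = g s + 1) (t - 1) with hs0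
          have hspec : g (s0 + 1) = g s0 + 1 :=
            Nat.findGreatest_spec (P := fun s => g (s + 1) = g s + 1) (m := s) (n := t - 1)
              (by omega) hs2
          have hs0le : s0 ≤ t - 1 := Nat.findGreatest_le _
          have hgreat : ∀ u, s0 < u → u ≤ t - 1 → ¬ (g (u + 1) = g u + 1) :=
            fun u hu1 hu2 =>
              Nat.findGreatest_is_greatest (P := fun s => g (s + 1) = g s + 1) (n := t - 1)
                hu1 hu2
          have hconst : ∀ u, s0 + 1 ≤ u → u ≤ t → g u = g (s0 + 1) := by
            intro u hu1
            induction u, hu1 using Nat.le_induction with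
            | base => intro _; rfl
            | succ u hu ih2 =>
              intro hut
              have h5 := hgreat u (by omega) (by omega)
              have h6 := hmono u
              have h7 := hstep u
              have h8 := ih2 (by omega)
              omega
          have hpP : (s0 + 1) ∈ P := by
            rw [hP]
            refine ⟨by omega, by omega, by simpa using hspec, ?_⟩
            by_cases hq : s0 + 1 = t
            · rw [hq]; omega
            · have h5 := hconst (s0 + 1 + 1) (by omega) (by omega)
              have h6 := hconst (s0 + 1) (by omega) (by omega)
              omega
          have hterm : min (t - ((s0 + 1) - g (s0 + 1))) (g (s0 + 1)) ≤
              P.sup fun p => min (t - (p - g p)) (g p) :=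
            Finset.le_sup (f := fun p => min (t - (p - g p)) (g p)) hpP
          have hgt : g t = g (s0 + 1) := hconst t (by omega) le_rfl
          have hle := hle_t (s0 + 1)
          apply le_max_of_le_right
          omega
      · -- rising step at t
        have hrise : g (t + 1) = g t + 1 := by have := hstep t; omega
        have h1 := ih (t + 1) (by omega)
        have h2 : max ((t + 1) - b) (P.sup fun p => min ((t + 1) - (p - g p)) (g p)) ≤
            max (t - b) (P.sup fun p => min (t - (p - g p)) (g p)) + 1 := by
          have hm1 := le_max_left (t - b) (P.sup fun p => min (t - (p - g p)) (g p))
          have hm2 := le_max_right (t - b) (P.sup fun p => min (t - (p - g p)) (g p))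
          apply max_le
          · omega
          · apply Finset.sup_le
            intro p hp
            show min ((t + 1) - (p - g p)) (g p) ≤ _
            have h3 : min (t - (p - g p)) (g p) ≤ P.sup fun p => min (t - (p - g p)) (g p) :=
              Finset.le_sup (f := fun p => min (t - (p - g p)) (g p)) hp
            omega
        omega
  intro t htn
  exact le_antisymm (hUB (n - t) t (by omega)) (hLB t htn)

lemma gaps {d : ℕ} {A : ℕ → ℕ} (h : ∀ j, j + 1 < d → A (j + 1) + 1 ≤ A j) :
    ∀ j, j < d → ∀ i, i ≤ j → A j + (j - i) ≤ A i := by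
  intro j
  induction j with
  | zero =>
    intro _ i hi
    have hi0 : i = 0 := by omega
    subst hi0; omega
  | succ j ih =>
    intro hd i hi
    rcases Nat.eq_or_lt_of_le hi with he | hlt
    · subst he; omega
    · have h1 := h j (by omega)
      have h2 := ih (by omega) i (by omega)
      omega

lemma filter_range_eq {d : ℕ} {p : ℕ → Prop} [DecidablePred p]
    (hdc : ∀ i j, i ≤ j → j < d → p j → p i) :
    (Finset.range d).filter p = Finset.range (((Finset.range d).filter p).card) := by
  have hsub : Finset.range (((Finset.range d).filter p).card) ⊆ (Finset.range d).filter p := by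
    intro k hk
    rw [Finset.mem_range] at hk
    by_contra hkn
    have hss : (Finset.range d).filter p ⊆ Finset.range k := by
      intro x hx
      rw [Finset.mem_range]
      by_contra hxk
      push_neg at hxk
      obtain ⟨hx1, hx2⟩ := Finset.mem_filter.1 hx
      rw [Finset.mem_range] at hx1
      exact hkn (Finset.mem_filter.2 ⟨Finset.mem_range.2 (by omega), hdc k x hxk hx1 hx2⟩)
    have := Finset.card_le_card hss
    rw [Finset.card_range] at this
    omega
  exact (Finset.eq_of_subset_of_card_le hsub (by rw [Finset.card_range])).symm

/-- partition from Frobenius coordinates -/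
def lamF (d : ℕ) (A L : ℕ → ℕ) : ℕ → ℕ := fun r =>
  if r < d then A r + r + 1 else ((Finset.range d).filter fun i => r ≤ L i + i).card

lemma lamF_spec {a b d : ℕ} {A L : ℕ → ℕ}
    (hAs : ∀ j, j + 1 < d → A (j + 1) + 1 ≤ A j) (hLs : ∀ j, j + 1 < d → L (j + 1) + 1 ≤ L j)
    (hAb : ∀ j, j < d → A j + 1 ≤ b) (hLa : ∀ j, j < d → L j + 1 ≤ a) :
    IsBox a b (lamF d A L) ∧ durfee (lamF d A L) = d ∧
      (∀ j, j < d → colLen (lamF d A L) j = L j + j + 1) := by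
  have gA := gaps hAs
  have gL := gaps hLs
  have hflt : ∀ r, r < d → lamF d A L r = A r + r + 1 := fun r hr => if_pos hr
  have hfge : ∀ r, d ≤ r → lamF d A L r = ((Finset.range d).filter fun i => r ≤ L i + i).card :=
    fun r hr => if_neg (by omega)
  have hcard_le : ∀ r, ((Finset.range d).filter fun i => r ≤ L i + i).card ≤ d := by
    intro r
    have := Finset.card_filter_le (Finset.range d) (fun i => r ≤ L i + i)
    rwa [Finset.card_range] at this
  have hdc : ∀ r, ∀ i j : ℕ, i ≤ j → j < d → (r ≤ L j + j) → (r ≤ L i + i) := by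
    intro r i j hij hj hr
    have := gL j hj i hij
    omega
  have hmem : ∀ r c, d ≤ r → (c + 1 ≤ lamF d A L r ↔ (c < d ∧ r ≤ L c + c)) := by
    intro r c hr
    rw [hfge r hr]
    constructor
    · intro hc
      have : c ∈ (Finset.range d).filter fun i => r ≤ L i + i := by
        rw [filter_range_eq (hdc r)]
        exact Finset.mem_range.2 (by omega)
      rw [Finset.mem_filter, Finset.mem_range] at this
      exact this
    · rintro ⟨hc1, hc2⟩
      have : c ∈ (Finset.range d).filter fun i => r ≤ L i + i :=
        Finset.mem_filter.2 ⟨Finset.mem_range.2 hc1, hc2⟩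
      rw [filter_range_eq (hdc r), Finset.mem_range] at this
      omega
  have hanti : Antitone (lamF d A L) := by
    apply antitone_nat_of_succ_le
    intro r
    by_cases h1 : r + 1 < d
    · rw [hflt r (by omega), hflt (r + 1) h1]
      have := hAs r h1
      omega
    · by_cases h2 : r < d
      · rw [hflt r h2, hfge (r + 1) (by omega)]
        have := hcard_le (r + 1)
        omega
      · rw [hfge r (by omega), hfge (r + 1) (by omega)]
        apply Finset.card_le_card
        intro x hx
        rw [Finset.mem_filter] at hx ⊢
        exact ⟨hx.1, by omega⟩
  have hble : ∀ r, lamF d A L r ≤ b := by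
    intro r
    by_cases h1 : r < d
    · rw [hflt r h1]
      have h2 := gA r h1 0 (by omega)
      have h3 := hAb 0 (by omega)
      omega
    · rw [hfge r (by omega)]
      rcases Nat.eq_zero_or_pos d with hd0 | hd0
      · have := hcard_le r; omega
      · have h2 := gA (d - 1) (by omega) 0 (by omega)
        have h3 := hAb 0 (by omega)
        have := hcard_le r
        omega
  have hda : d ≤ a := by
    rcases Nat.eq_zero_or_pos d with hd0 | hd0
    · omega
    · have h2 := gL (d - 1) (by omega) 0 (by omega)
      have h3 := hLa 0 (by omega)
      omega
  have hvan : ∀ r, a ≤ r → lamF d A L r = 0 := by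
    intro r hr
    rw [hfge r (by omega)]
    rw [Finset.filter_false_of_mem, Finset.card_empty]
    intro i hi
    rw [Finset.mem_range] at hi
    have h2 := gL i hi 0 (by omega)
    have h3 := hLa 0 (by omega)
    omega
  have hbox : IsBox a b (lamF d A L) := ⟨hanti, hble, hvan⟩
  refine ⟨hbox, ?_, ?_⟩
  · have key : ∀ r, r < durfee (lamF d A L) ↔ r < d := by
      intro r
      rw [hbox.durfee_iff]
      constructor
      · intro hl
        by_contra hrd
        rw [hfge r (by omega)] at hl
        have := hcard_le r
        omega
      · intro hrd
        rw [hflt r hrd]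
        omega
    have k1 := key (durfee (lamF d A L))
    have k2 := key d
    omega
  · intro c hc
    have key : ∀ r, r < colLen (lamF d A L) c ↔ r < L c + c + 1 := by
      intro r
      rw [hbox.colLen_iff]
      by_cases hrd : r < d
      · rw [hflt r hrd]
        have h2 := gA r hrd 0 (by omega)
        have h3 := gA (d - 1) (by omega) r (by omega)
        have h4 := gL (d - 1) (by omega) c (by omega)
        constructor <;> intro <;> omega
      · rw [hmem r c (by omega)]
        constructor <;> intro <;> omega
    have k1 := key (colLen (lamF d A L) c)
    have k2 := key (L c + c + 1)
    omega

lemma fp_near_hook {a b : ℕ} {lam : ℕ → ℕ} (h : IsBox a b lam) {j : ℕ} (hj : j < durfee lam)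
    {t : ℕ} (ht1 : (lam j - (j + 1)) + (colLen lam j - j) - 1 ≤ t)
    (ht2 : t ≤ (lam j - (j + 1)) + (colLen lam j - j) + 1) :
    fp b lam t = min (t - (lam j - (j + 1))) (colLen lam j - j) := by
  have hBj : 1 ≤ colLen lam j - j := by have := h.colLen_ge hj; omega
  have hAb := h.arm_lt hj
  unfold fp
  apply le_antisymm
  · apply max_le
    · omega
    · apply Finset.sup_le
      intro j' hj'
      show min (t - (lam j' - (j' + 1))) (colLen lam j' - j') ≤
        min (t - (lam j - (j + 1))) (colLen lam j - j)
      rw [Finset.mem_range] at hj'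
      rcases lt_trichotomy j' j with hlt | heq | hgt
      · have hg := h.arm_gap (le_of_lt hlt) hj
        omega
      · subst heq; omega
      · have hg := h.leg_gap (le_of_lt hgt) hj'
        omega
  · exact le_max_of_le_right
      (Finset.le_sup (f := fun j' => min (t - (lam j' - (j' + 1))) (colLen lam j' - j'))
        (Finset.mem_range.2 hj))

lemma fp_at_hook {a b : ℕ} {lam : ℕ → ℕ} (h : IsBox a b lam) {j : ℕ} (hj : j < durfee lam) :
    fp b lam ((lam j - (j + 1)) + (colLen lam j - j)) = colLen lam j - j := by
  have hBj : 1 ≤ colLen lam j - j := by have := h.colLen_ge hj; omega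
  have := fp_near_hook h hj (t := (lam j - (j + 1)) + (colLen lam j - j)) (by omega) (by omega)
  omega

lemma lam_le_durfee {a b : ℕ} {lam : ℕ → ℕ} (h : IsBox a b lam) {r : ℕ} (hr : durfee lam ≤ r) :
    lam r ≤ durfee lam := by
  by_contra hc
  have h2 := h.1 hr
  have h4 : durfee lam < durfee lam := (h.durfee_iff (durfee lam)).2 (by omega)
  omega

lemma lam_tail {a b : ℕ} {lam : ℕ → ℕ} (h : IsBox a b lam) {r : ℕ} (hr : durfee lam ≤ r) :
    lam r = ((Finset.range (durfee lam)).filter fun i => r + 1 ≤ colLen lam i).card := by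
  have hlamr := lam_le_durfee h hr
  have hfilter : ((Finset.range (durfee lam)).filter fun i => r + 1 ≤ colLen lam i)
      = Finset.range (lam r) := by
    ext c
    rw [Finset.mem_filter, Finset.mem_range, Finset.mem_range]
    constructor
    · rintro ⟨hc1, hc2⟩
      have h5 := (h.colLen_iff c r).1 (by omega)
      omega
    · intro hc
      have h5 := (h.colLen_iff c r).2 (by omega)
      exact ⟨by omega, by omega⟩
  rw [hfilter, Finset.card_range]

lemma desc_enum {P : Finset ℕ} {d : ℕ} (hP : P.card = d) (q : ℕ → ℕ)
    (hq : ∀ i j, i ≤ j → j < d → q j + (j - i) ≤ q i)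
    (hmem : ∀ j, j < d → q j ∈ P) :
    ∀ j (hj : j < d), q j = P.orderEmbOfFin hP ⟨d - 1 - j, by omega⟩ := by
  have hmono : StrictMono (fun i : Fin d => q (d - 1 - (i : ℕ))) := by
    intro i i' hii'
    have hi := i.2
    have hi' := i'.2
    have := hq (d - 1 - (i' : ℕ)) (d - 1 - (i : ℕ)) (by omega) (by omega)
    simp only []
    omega
  have heq := Finset.orderEmbOfFin_unique hP
    (f := fun i : Fin d => q (d - 1 - (i : ℕ))) (fun x => hmem _ (by omega)) hmono
  intro j hj
  have h1 := congrFun heq ⟨d - 1 - j, by omega⟩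
  simp only [] at h1
  rw [show d - 1 - (d - 1 - j) = j by omega] at h1
  exact h1

/-- hook sizes -/
noncomputable def hk (lam : ℕ → ℕ) (j : ℕ) : ℕ := (lam j - (j + 1)) + (colLen lam j - j)

lemma hk_gap {a b : ℕ} {lam : ℕ → ℕ} (h : IsBox a b lam) :
    ∀ i j, i ≤ j → j < durfee lam → hk lam j + (j - i) ≤ hk lam i := by
  intro i j hij hj
  have h1 := h.arm_gap hij hj
  have h2 := h.leg_gap hij hj
  unfold hk
  omega

lemma peakSet_wd_eq_image {a b n : ℕ} {lam : ℕ → ℕ} (h : IsBox a b lam) (hab : a + b = n) :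
    peakSet (wd n b lam) = (Finset.range (durfee lam)).image (hk lam) := by
  ext i
  rw [peakSet_wd h hab, Finset.mem_image]
  constructor
  · rintro ⟨j, hj, hi⟩
    exact ⟨j, Finset.mem_range.2 hj, hi.symm⟩
  · rintro ⟨j, hj, hi⟩
    exact ⟨j, Finset.mem_range.1 hj, hi.symm⟩

lemma card_peakSet_wd {a b n : ℕ} {lam : ℕ → ℕ} (h : IsBox a b lam) (hab : a + b = n) :
    (peakSet (wd n b lam)).card = durfee lam := by
  rw [peakSet_wd_eq_image h hab]
  rw [Finset.card_image_of_injOn, Finset.card_range]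
  intro x hx y hy hxy
  rw [Finset.mem_coe, Finset.mem_range] at hx hy
  rcases lt_trichotomy x y with hc | hc | hc
  · have := hk_gap h x y (by omega) hy; omega
  · exact hc
  · have := hk_gap h y x (by omega) hx; omega

lemma hk_lt_n {a b n : ℕ} {lam : ℕ → ℕ} (h : IsBox a b lam) (hab : a + b = n)
    {j : ℕ} (hj : j < durfee lam) : hk lam j < n ∧ 1 ≤ hk lam j := by
  have h1 := h.arm_lt hj
  have h2 := h.leg_le hj
  have h3 := h.colLen_ge hj
  unfold hk
  omega

lemma wd_inj {a b n : ℕ} (hab : a + b = n) {lam1 lam2 : ℕ → ℕ}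
    (h1 : IsBox a b lam1) (h2 : IsBox a b lam2) (he : wd n b lam1 = wd n b lam2) :
    lam1 = lam2 := by
  set d := durfee lam1 with hd1
  have hPeq : peakSet (wd n b lam1) = peakSet (wd n b lam2) := by rw [he]
  have hc1 := card_peakSet_wd h1 hab
  have hc2 := card_peakSet_wd h2 hab
  have hdd : durfee lam2 = d := by rw [← hc2, ← hPeq, hc1]
  have hcard : (peakSet (wd n b lam1)).card = d := hc1
  have he1 := desc_enum hcard (hk lam1) (hk_gap h1) (fun j hj => by
    rw [peakSet_wd_eq_image h1 hab]
    exact Finset.mem_image_of_mem _ (Finset.mem_range.2 hj))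
  have he2 := desc_enum hcard (hk lam2) (fun i j hij hj => hk_gap h2 i j hij (by omega))
    (fun j hj => by
      rw [hPeq, peakSet_wd_eq_image h2 hab]
      exact Finset.mem_image_of_mem _ (Finset.mem_range.2 (by omega)))
  have hhk : ∀ j, j < d → hk lam1 j = hk lam2 j := fun j hj => by
    rw [he1 j hj, he2 j hj]
  have hB : ∀ j, j < d → colLen lam1 j - j = colLen lam2 j - j := by
    intro j hj
    have q1 := fp_at_hook h1 (j := j) hj
    have q2 := fp_at_hook h2 (j := j) (by omega)
    have hb1 := hk_lt_n h1 hab hj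
    have hb2 := hk_lt_n h2 hab (j := j) (by omega)
    have w1 := pc_wd (n := n) h1 (hk lam1 j) (by omega)
    have w2 := pc_wd (n := n) h2 (hk lam2 j) (by omega)
    have hkk := hhk j hj
    have : pc (wd n b lam1) (hk lam1 j) = pc (wd n b lam2) (hk lam2 j) := by
      rw [he, hkk]
    simp only [hk] at w1 w2 this
    omega
  have hcol : ∀ j, j < d → colLen lam1 j = colLen lam2 j := by
    intro j hj
    have := hB j hj
    have := h1.colLen_ge (show j < durfee lam1 from hj)
    have := h2.colLen_ge (show j < durfee lam2 by omega)
    omega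
  have hlamlt : ∀ j, j < d → lam1 j = lam2 j := by
    intro j hj
    have hkk := hhk j hj
    have hbb := hB j hj
    have := h1.lam_ge (show j < durfee lam1 from hj)
    have := h2.lam_ge (show j < durfee lam2 by omega)
    unfold hk at hkk
    omega
  funext r
  rcases lt_or_ge r d with hr | hr
  · exact hlamlt r hr
  · rw [lam_tail h1 (show durfee lam1 ≤ r by omega), lam_tail h2 (show durfee lam2 ≤ r by omega)]
    rw [hdd, ← hd1]
    congr 1
    apply Finset.filter_congr
    intro c hc
    rw [Finset.mem_range] at hc
    simp [hcol c hc]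

lemma wd_surj {a b n : ℕ} (hab : a + b = n) (w : List Bool) (hlen : w.length = n)
    (hcount : w.count true = a) :
    ∃ lam : ℕ → ℕ, IsBox a b lam ∧ wd n b lam = w := by
  classical
  set P := peakSet w with hPdef
  set d := P.card with hd
  have hcard : P.card = d := hd.symm
  set p : ℕ → ℕ := fun j =>
    if hj : j < d then (P.orderEmbOfFin hcard ⟨d - 1 - j, by omega⟩ : ℕ) else 0 with hp
  have hpP : ∀ j, j < d → p j ∈ P := by
    intro j hj
    rw [hp]
    simp only [dif_pos hj]
    exact Finset.orderEmbOfFin_mem P hcard _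
  have hpdec : ∀ j, j + 1 < d → p (j + 1) + 1 ≤ p j := by
    intro j hj
    rw [hp]
    simp only [dif_pos (show j + 1 < d by omega), dif_pos (show j < d by omega)]
    have := (P.orderEmbOfFin hcard).strictMono
      (show (⟨d - 1 - (j + 1), by omega⟩ : Fin d) < ⟨d - 1 - j, by omega⟩ by
        simp [Fin.lt_def]; omega)
    omega
  have hPchar : ∀ i, i ∈ P ↔
      (1 ≤ i ∧ i < n ∧ pc w i = pc w (i - 1) + 1 ∧ pc w (i + 1) = pc w i) := by
    intro i
    rw [hPdef, mem_peakSet_iff, hlen]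
  have hg0 : pc w 0 = 0 := pc_zero w
  have hgn : pc w n = a := by rw [← hlen, pc_length, hcount]
  have hMono : Monotone (pc w) := monotone_nat_of_le_succ (pc_le_succ w)
  have hch := @chain_le (pc w) (pc_succ_le w)
  have hpc_le : ∀ t, pc w t ≤ t := by intro t; have := hch (Nat.zero_le t); omega
  -- peak facts
  have hpk : ∀ j, j < d → 1 ≤ p j ∧ p j < n ∧ pc w (p j) = pc w (p j - 1) + 1 ∧
      pc w (p j + 1) = pc w (p j) := fun j hj => (hPchar (p j)).1 (hpP j hj)
  set A : ℕ → ℕ := fun j => p j - pc w (p j) with hA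
  set L : ℕ → ℕ := fun j => pc w (p j) - 1 with hL
  have hAs : ∀ j, j + 1 < d → A (j + 1) + 1 ≤ A j := by
    intro j hj
    obtain ⟨ha1, ha2, ha3, ha4⟩ := hpk j (by omega)
    obtain ⟨hb1, hb2, hb3, hb4⟩ := hpk (j + 1) hj
    have hd1 := hpdec j hj
    have hc1 := hch (show p (j + 1) + 1 ≤ p j from hd1)
    have hl1 := hpc_le (p (j + 1))
    show (p (j + 1) - pc w (p (j + 1))) + 1 ≤ p j - pc w (p j)
    omega
  have hLs : ∀ j, j + 1 < d → L (j + 1) + 1 ≤ L j := by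
    intro j hj
    obtain ⟨ha1, ha2, ha3, ha4⟩ := hpk j (by omega)
    obtain ⟨hb1, hb2, hb3, hb4⟩ := hpk (j + 1) hj
    have hd1 := hpdec j hj
    have hm1 := hMono (show p (j + 1) ≤ p j - 1 by omega)
    show (pc w (p (j + 1)) - 1) + 1 ≤ pc w (p j) - 1
    omega
  have hAb : ∀ j, j < d → A j + 1 ≤ b := by
    intro j hj
    obtain ⟨ha1, ha2, ha3, ha4⟩ := hpk j hj
    have hc1 := hch (show p j + 1 ≤ n by omega)
    have hm1 := hpc_le (p j)
    show (p j - pc w (p j)) + 1 ≤ b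
    omega
  have hLa : ∀ j, j < d → L j + 1 ≤ a := by
    intro j hj
    obtain ⟨ha1, ha2, ha3, ha4⟩ := hpk j hj
    have hm1 := hMono (show p j ≤ n by omega)
    show (pc w (p j) - 1) + 1 ≤ a
    omega
  obtain ⟨hbox, hdur, hcol⟩ := lamF_spec (a := a) (b := b) hAs hLs hAb hLa
  refine ⟨lamF d A L, hbox, ?_⟩
  -- P as image of p
  have hgap := gaps (d := d) (A := p) hpdec
  have himg : (Finset.range d).image p = P := by
    apply Finset.eq_of_subset_of_card_le
    · intro x hx
      rw [Finset.mem_image] at hx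
      obtain ⟨j, hj, hx⟩ := hx
      rw [Finset.mem_range] at hj
      exact hx ▸ hpP j hj
    · rw [hcard, Finset.card_image_of_injOn, Finset.card_range]
      intro x hx y hy hxy
      rw [Finset.mem_coe, Finset.mem_range] at hx hy
      rcases lt_trichotomy x y with hc | hc | hc
      · have := hgap y hy x (by omega); omega
      · exact hc
      · have := hgap x hx y (by omega); omega
  -- the profile of lamF equals pc w
  have hsf := step_formula hab (pc w) hg0 (pc_le_succ w) (pc_succ_le w) hgn P hPchar
  have hfp : ∀ t, t ≤ n → fp b (lamF d A L) t = pc w t := by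
    intro t htn
    rw [hsf t htn]
    unfold fp
    rw [hdur]
    congr 1
    rw [← himg, Finset.sup_image]
    apply Finset.sup_congr rfl
    intro j hj
    rw [Finset.mem_range] at hj
    obtain ⟨ha1, ha2, ha3, ha4⟩ := hpk j hj
    have hlam : lamF d A L j = A j + j + 1 := if_pos hj
    have hcl := hcol j hj
    show min (t - (lamF d A L j - (j + 1))) (colLen (lamF d A L) j - j) =
      min (t - (p j - pc w (p j))) (pc w (p j))
    have haj : A j = p j - pc w (p j) := rfl
    have hlj : L j = pc w (p j) - 1 := rfl
    have hone : 1 ≤ pc w (p j) := by omega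
    rw [hlam, hcl]
    congr 1 <;> omega
  -- conclude the words are equal
  apply List.ext_getElem (by rw [wd_length, hlen])
  intro t h1 h2
  have htn : t < n := by rwa [wd_length] at h1
  have htw : t < w.length := by omega
  have e1 : (wd n b (lamF d A L))[t] = decide (fp b (lamF d A L) t < fp b (lamF d A L) (t + 1)) := by
    rw [← List.getD_eq_getElem (wd n b (lamF d A L)) false h1]
    exact wd_getD n b (lamF d A L) htn false
  have e2 : w[t] = w.getD t false := (List.getD_eq_getElem w false htw).symm
  have hf1 := hfp t (by omega)
  have hf2 := hfp (t + 1) (by omega)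
  have hps := pc_succ w t htw
  rw [e1, e2]
  cases hb : w.getD t false
  · rw [hb] at hps
    simp at hps
    simp [hf1, hf2, hps]
  · rw [hb] at hps
    simp at hps
    simp [hf1, hf2, hps]


lemma hookDecomposition_eq {a b n : ℕ} {lam : ℕ → ℕ} (h : IsBox a b lam) (hab : a + b = n) :
    hookDecomposition lam = peakSet (wd n b lam) := by
  ext i
  rw [hookDecomposition, peakSet_wd h hab, Finset.mem_image]
  constructor
  · rintro ⟨j, hj, hi⟩
    rw [Finset.mem_range] at hj
    refine ⟨j, hj, ?_⟩
    have h1 := h.lam_ge hj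
    have h2 := h.colLen_ge hj
    omega
  · rintro ⟨j, hj, hi⟩
    refine ⟨j, Finset.mem_range.2 hj, ?_⟩
    have h1 := h.lam_ge hj
    have h2 := h.colLen_ge hj
    omega


/-- There is a bijection ψ from partitions fitting inside a ⌊n/2⌋ × ⌈n/2⌉ box to
lattice paths from (0,0) to (⌈n/2⌉, ⌊n/2⌋) mapping the hook decomposition to the
peak set. -/
theorem exists_psi_hook_to_peak (n : ℕ) :
    ∃ ψ : {lam : ℕ → ℕ // Antitone lam ∧ (∀ t, lam t ≤ (n + 1) / 2) ∧
            (∀ t, n / 2 ≤ t → lam t = 0)} →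
          {w : List Bool // w.length = n ∧ w.count true = n / 2},
      Function.Bijective ψ ∧
        ∀ lam, hookDecomposition lam.1 = peakSet (ψ lam).1 := by
  have hab : n / 2 + (n + 1) / 2 = n := by omega
  have hbox : ∀ lam : {lam : ℕ → ℕ // Antitone lam ∧ (∀ t, lam t ≤ (n + 1) / 2) ∧
      (∀ t, n / 2 ≤ t → lam t = 0)}, IsBox (n / 2) ((n + 1) / 2) lam.1 :=
    fun lam => ⟨lam.2.1, lam.2.2.1, lam.2.2.2⟩
  refine ⟨fun lam => ⟨wd n ((n + 1) / 2) lam.1,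
    wd_length n ((n + 1) / 2) lam.1, wd_count (hbox lam) hab⟩, ⟨?_, ?_⟩, ?_⟩
  · intro l1 l2 hψ
    exact Subtype.ext (wd_inj hab (hbox l1) (hbox l2) (congrArg Subtype.val hψ))
  · rintro ⟨w, hlen, hcount⟩
    obtain ⟨lam, hb, hwd⟩ := wd_surj hab w hlen hcount
    exact ⟨⟨lam, hb.1, hb.2.1, hb.2.2⟩, Subtype.ext hwd⟩
  · intro lam
    exact hookDecomposition_eq (hbox lam) hab
end

section
/- Let 1 ≤ i₁ < ... < i_k with i_j − i_{j−1} ≥ 2 for all j. The number of partitions with hook decomposition exactly {i₁,...,i_k} equals i₁ · ∏_{j=2}^{k} (i_j − i_{j−1} − 1). -/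
open Finset

namespace HookAux

lemma initial_card {P : ℕ → Prop} {n : ℕ} (h : ∀ r, P r ↔ r < n) :
    Nat.card {r : ℕ // P r} = n := by
  have e : {r : ℕ // P r} ≃ Fin n :=
    ⟨fun x => ⟨x.1, (h x.1).1 x.2⟩, fun x => ⟨x.1, (h x.1).2 x.2⟩,
     fun x => rfl, fun x => rfl⟩
  rw [Nat.card_congr e, Nat.card_eq_fintype_card, Fintype.card_fin]

lemma eq_of_iff_lt {a b : ℕ} (h : ∀ r : ℕ, r < a ↔ r < b) : a = b := by
  have h1 := h a; have h2 := h b; omega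

variable {lam : ℕ → ℕ}

lemma colLen_iff (ha : Antitone lam) {N : ℕ} (hz : lam N = 0) (c r : ℕ) :
    c + 1 ≤ lam r ↔ r < colLen lam c := by
  have ex : ∃ m, lam m ≤ c := ⟨N, by omega⟩
  have key : ∀ r, c + 1 ≤ lam r ↔ r < Nat.find ex := by
    intro r
    constructor
    · intro h
      by_contra hcon
      have h1 : lam r ≤ lam (Nat.find ex) := ha (by omega)
      have h2 := Nat.find_spec ex
      omega
    · intro h
      have := Nat.find_min ex h
      omega
  rw [show colLen lam c = Nat.find ex from initial_card key]
  exact key r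

lemma durfee_iff (ha : Antitone lam) {N : ℕ} (hz : lam N = 0) (r : ℕ) :
    r + 1 ≤ lam r ↔ r < durfee lam := by
  have ex : ∃ m, lam m ≤ m := ⟨N, by omega⟩
  have key : ∀ r, r + 1 ≤ lam r ↔ r < Nat.find ex := by
    intro r
    constructor
    · intro h
      by_contra hcon
      have h1 : lam r ≤ lam (Nat.find ex) := ha (by omega)
      have h2 := Nat.find_spec ex
      omega
    · intro h
      have := Nat.find_min ex h
      omega
  rw [show durfee lam = Nat.find ex from initial_card key]
  exact key r

lemma colLen_anti (ha : Antitone lam) {N : ℕ} (hz : lam N = 0) : Antitone (colLen lam) := by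
  intro c c' hcc
  by_contra hcon
  push_neg at hcon
  have h1 := (colLen_iff ha hz c' (colLen lam c)).2 hcon
  have h2 := (colLen_iff ha hz c (colLen lam c)).1 (by omega)
  omega

lemma chain_anti {f : ℕ → ℕ} {d : ℕ} (h : ∀ j, j + 1 < d → f (j + 1) + 1 ≤ f j) :
    ∀ a b, a ≤ b → b < d → f b + (b - a) ≤ f a := by
  intro a b hab hbd
  induction b, hab using Nat.le_induction with
  | base => omega
  | succ b hb ih =>
    have h1 := h b (by omega)
    have h2 := ih (by omega)
    omega

lemma i_mono {k : ℕ} {i : ℕ → ℕ} (hgap : ∀ j, 2 ≤ j → j ≤ k → i (j - 1) + 2 ≤ i j) :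
    ∀ a b, 1 ≤ a → a ≤ b → b ≤ k → i a + 2 * (b - a) ≤ i b := by
  intro a b ha hab hbk
  induction b, hab using Nat.le_induction with
  | base => omega
  | succ b hb ih =>
    have h1 := hgap (b + 1) (by omega) (by omega)
    simp only [Nat.add_sub_cancel] at h1
    have h2 := ih (by omega)
    omega

lemma image_eq_rank {f : ℕ → ℕ} {k j : ℕ} (hf : ∀ a b, a < b → b < k → f b < f a)
    (hj : j < k) :
    (((Finset.range k).image f).filter (fun x => f j < x)).card = j := by
  have hset : ((Finset.range k).image f).filter (fun x => f j < x)
      = (Finset.range j).image f := by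
    ext x
    simp only [Finset.mem_filter, Finset.mem_image, Finset.mem_range]
    constructor
    · rintro ⟨⟨a, hak, rfl⟩, hlt⟩
      refine ⟨a, ?_, rfl⟩
      by_contra hcon
      push_neg at hcon
      rcases eq_or_lt_of_le hcon with h | h
      · rw [← h] at hlt; omega
      · have := hf j a h hak; omega
    · rintro ⟨a, haj, rfl⟩
      exact ⟨⟨a, by omega, rfl⟩, hf a j haj hj⟩
  rw [hset, Finset.card_image_of_injOn, Finset.card_range]
  intro a ha b hb hab
  simp only [Finset.coe_range, Set.mem_Iio] at ha hb
  rcases lt_trichotomy a b with h | h | h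
  · have := hf a b h (by omega); omega
  · exact h
  · have := hf b a h (by omega); omega

lemma eq_of_image_eq {f g : ℕ → ℕ} {k : ℕ}
    (hf : ∀ a b, a < b → b < k → f b < f a)
    (hg : ∀ a b, a < b → b < k → g b < g a)
    (him : (Finset.range k).image f = (Finset.range k).image g) :
    ∀ j, j < k → f j = g j := by
  intro j hj
  have hrf := image_eq_rank hf hj
  have hrg := image_eq_rank hg hj
  rw [← him] at hrg
  have hgj : g j ∈ (Finset.range k).image f := by
    rw [him]; exact Finset.mem_image_of_mem g (Finset.mem_range.2 hj)
  have hfj : f j ∈ (Finset.range k).image g := by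
    rw [← him]; exact Finset.mem_image_of_mem f (Finset.mem_range.2 hj)
  rcases lt_trichotomy (f j) (g j) with h | h | h
  · exfalso
    have hss : ((Finset.range k).image f).filter (fun x => g j < x)
        ⊂ ((Finset.range k).image f).filter (fun x => f j < x) := by
      rw [Finset.ssubset_def]
      constructor
      · intro x hx
        simp only [Finset.mem_filter] at hx ⊢
        exact ⟨hx.1, by omega⟩
      · intro hsub
        have hmem : g j ∈ ((Finset.range k).image f).filter (fun x => f j < x) := by
          simp only [Finset.mem_filter]; exact ⟨hgj, h⟩
        have := hsub hmem
        simp only [Finset.mem_filter] at this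
        omega
    have := Finset.card_lt_card hss
    omega
  · exact h
  · exfalso
    have hss : ((Finset.range k).image f).filter (fun x => f j < x)
        ⊂ ((Finset.range k).image f).filter (fun x => g j < x) := by
      rw [Finset.ssubset_def]
      constructor
      · intro x hx
        simp only [Finset.mem_filter] at hx ⊢
        exact ⟨hx.1, by omega⟩
      · intro hsub
        have hmem : f j ∈ ((Finset.range k).image f).filter (fun x => g j < x) := by
          simp only [Finset.mem_filter]
          exact ⟨Finset.mem_image_of_mem f (Finset.mem_range.2 hj), h⟩
        have := hsub hmem
        simp only [Finset.mem_filter] at this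
        omega
    have := Finset.card_lt_card hss
    omega

end HookAux

namespace HookAux
set_option linter.unusedSectionVars false

def armF (k : ℕ) (t : ℕ → ℕ) (j : ℕ) : ℕ := (k - 1 - j) + ∑ m ∈ Finset.Ico j k, t m

def legF (k : ℕ) (i t : ℕ → ℕ) (j : ℕ) : ℕ := i (k - j) - 1 - armF k t j

def sizeF (k : ℕ) (i : ℕ → ℕ) (j : ℕ) : ℕ :=
  if j + 1 = k then i 1 else i (k - j) - i (k - j - 1) - 1

def lamF (k : ℕ) (i t : ℕ → ℕ) (r : ℕ) : ℕ :=
  if r < k then armF k t r + r + 1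
  else ((Finset.range k).filter (fun j => r ≤ legF k i t j + j)).card

lemma armF_succ {k : ℕ} (t : ℕ → ℕ) {j : ℕ} (h : j + 1 < k) :
    armF k t j = armF k t (j + 1) + t j + 1 := by
  unfold armF
  rw [Finset.sum_eq_sum_Ico_succ_bot (show j < k by omega)]
  omega

lemma armF_last {k : ℕ} (t : ℕ → ℕ) {j : ℕ} (h : j + 1 = k) :
    armF k t j = t j := by
  unfold armF
  rw [← h, Nat.Ico_succ_singleton, Finset.sum_singleton]
  omega

lemma armF_ge (k : ℕ) (t : ℕ → ℕ) (j : ℕ) : k - 1 - j ≤ armF k t j :=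
  Nat.le_add_right _ _

lemma image_shift {k : ℕ} {i : ℕ → ℕ} (hk : 1 ≤ k) :
    (Finset.range k).image (fun j => i (k - j)) = (Finset.Icc 1 k).image i := by
  ext x
  simp only [Finset.mem_image, Finset.mem_range, Finset.mem_Icc]
  constructor
  · rintro ⟨j, hj, rfl⟩
    exact ⟨k - j, ⟨by omega, by omega⟩, rfl⟩
  · rintro ⟨m, ⟨hm1, hm2⟩, rfl⟩
    exact ⟨k - m, by omega, by rw [show k - (k - m) = m by omega]⟩

section construct

variable {k : ℕ} {i : ℕ → ℕ} (hk : 1 ≤ k) (h1 : 1 ≤ i 1)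
  (hgap : ∀ j, 2 ≤ j → j ≤ k → i (j - 1) + 2 ≤ i j)
  {t : ℕ → ℕ} (ht : ∀ j, j < k → t j < sizeF k i j)

include h1 hgap ht

lemma arm_le_aux : ∀ d j, j < k → k - j = d + 1 → armF k t j + 1 ≤ i (k - j) := by
  intro d
  induction d with
  | zero =>
    intro j hj hd
    have hj1 : j + 1 = k := by omega
    rw [armF_last t hj1]
    have hs := ht j hj
    rw [sizeF, if_pos hj1] at hs
    rw [show k - j = 1 by omega]
    omega
  | succ d ih =>
    intro j hj hd
    have hj1 : j + 1 < k := by omega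
    have h2 := ih (j + 1) (by omega) (by omega)
    rw [armF_succ t hj1]
    have hs := ht j hj
    rw [sizeF, if_neg (by omega)] at hs
    have hg := hgap (k - j) (by omega) (by omega)
    rw [show k - (j + 1) = k - j - 1 by omega] at h2
    omega

lemma arm_le : ∀ j, j < k → armF k t j + 1 ≤ i (k - j) :=
  fun j hj => arm_le_aux h1 hgap ht (k - j - 1) j hj (by omega)

lemma leg_exact : ∀ j, j < k → legF k i t j + armF k t j + 1 = i (k - j) := by
  intro j hj
  have := arm_le h1 hgap ht j hj
  unfold legF
  omega

lemma leg_succ : ∀ j, j + 1 < k → legF k i t (j + 1) + 1 ≤ legF k i t j := by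
  intro j hj
  have e1 := leg_exact h1 hgap ht j (by omega)
  have e2 := leg_exact h1 hgap ht (j + 1) hj
  have hrec := armF_succ t hj
  have hs := ht j (by omega)
  rw [sizeF, if_neg (by omega)] at hs
  have hg := hgap (k - j) (by omega) (by omega)
  rw [show k - (j + 1) = k - j - 1 by omega] at e2
  omega

lemma leg_ge_aux : ∀ d j, j < k → k - j = d + 1 → k ≤ legF k i t j + j + 1 := by
  intro d
  induction d with
  | zero => intro j hj hd; omega
  | succ d ih =>
    intro j hj hd
    have h2 := ih (j + 1) (by omega) (by omega)
    have h3 := leg_succ h1 hgap ht j (by omega)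
    omega

lemma leg_ge : ∀ j, j < k → k ≤ legF k i t j + j + 1 :=
  fun j hj => leg_ge_aux h1 hgap ht (k - j - 1) j hj (by omega)

lemma m_anti : ∀ c j, c ≤ j → j < k → legF k i t j + j ≤ legF k i t c + c := by
  intro c j hcj
  induction j, hcj using Nat.le_induction with
  | base => intro _; omega
  | succ j hj ih =>
    intro hjk
    have h3 := leg_succ h1 hgap ht j hjk
    have h4 := ih (by omega)
    omega

lemma lamF_anti : Antitone (lamF k i t) := by
  apply antitone_nat_of_succ_le
  intro r
  by_cases hr1 : r + 1 < k
  · simp only [lamF]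
    rw [if_pos hr1, if_pos (show r < k by omega)]
    rw [armF_succ t hr1]
    omega
  · by_cases hr : r < k
    · simp only [lamF]
      rw [if_neg hr1, if_pos hr]
      have hcard : ((Finset.range k).filter (fun j => r + 1 ≤ legF k i t j + j)).card ≤ k := by
        calc _ ≤ (Finset.range k).card := Finset.card_filter_le _ _
        _ = k := Finset.card_range k
      have := armF_ge k t r
      omega
    · simp only [lamF]
      rw [if_neg hr1, if_neg hr]
      apply Finset.card_le_card
      intro x hx
      simp only [Finset.mem_filter] at hx ⊢
      exact ⟨hx.1, by omega⟩

lemma lamF_le : ∀ r, k ≤ r → lamF k i t r ≤ k := by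
  intro r hr
  rw [lamF, if_neg (by omega)]
  calc _ ≤ (Finset.range k).card := Finset.card_filter_le _ _
  _ = k := Finset.card_range k

include hk in
lemma lamF_zero : lamF k i t (k + i k) = 0 := by
  have hik : 1 ≤ i k := by
    have := i_mono hgap 1 k (le_refl 1) hk (le_refl k)
    omega
  rw [lamF, if_neg (by omega), Finset.card_eq_zero, Finset.filter_eq_empty_iff]
  intro j hj
  rw [Finset.mem_range] at hj
  have ha := arm_le h1 hgap ht j hj
  have hmono := i_mono hgap (k - j) k (by omega) (by omega) (le_refl k)
  have hleg : legF k i t j ≤ i (k - j) - 1 := by unfold legF; omega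
  omega

include hk in
lemma colLen_lamF : ∀ c, c < k → colLen (lamF k i t) c = legF k i t c + c + 1 := by
  intro c hc
  have hiff : ∀ r, c + 1 ≤ lamF k i t r ↔ r < legF k i t c + c + 1 := by
    intro r
    by_cases hr : r < k
    · rw [lamF, if_pos hr]
      have hg := leg_ge h1 hgap ht c hc
      have := armF_ge k t r
      constructor
      · intro _; omega
      · intro _; omega
    · rw [lamF, if_neg hr]
      constructor
      · intro hcard
        by_contra hcon
        push_neg at hcon
        have hsub : (Finset.range k).filter (fun j => r ≤ legF k i t j + j)
            ⊆ Finset.range c := by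
          intro x hx
          simp only [Finset.mem_filter, Finset.mem_range] at hx ⊢
          by_contra hxc
          push_neg at hxc
          have := m_anti h1 hgap ht c x hxc hx.1
          omega
        have := Finset.card_le_card hsub
        rw [Finset.card_range] at this
        omega
      · intro hr2
        have hsub : Finset.range (c + 1)
            ⊆ (Finset.range k).filter (fun j => r ≤ legF k i t j + j) := by
          intro x hx
          simp only [Finset.mem_range, Finset.mem_filter] at hx ⊢
          have := m_anti h1 hgap ht x c (by omega) hc
          exact ⟨by omega, by omega⟩
        have := Finset.card_le_card hsub
        rw [Finset.card_range] at this
        omega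
  apply eq_of_iff_lt
  intro r
  rw [← colLen_iff (lamF_anti h1 hgap ht) (lamF_zero hk h1 hgap ht) c r, hiff r]

include hk in
lemma durfee_lamF : durfee (lamF k i t) = k := by
  have hiff : ∀ r, r + 1 ≤ lamF k i t r ↔ r < k := by
    intro r
    by_cases hr : r < k
    · rw [lamF, if_pos hr]
      constructor
      · intro _; exact hr
      · intro _; omega
    · have := lamF_le h1 hgap ht r (by omega)
      constructor
      · intro h; omega
      · intro h; omega
  apply eq_of_iff_lt
  intro r
  rw [← durfee_iff (lamF_anti h1 hgap ht) (lamF_zero hk h1 hgap ht) r, hiff r]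


include hk in
lemma hookDecomp_lamF : hookDecomposition (lamF k i t) = (Finset.Icc 1 k).image i := by
  unfold hookDecomposition
  rw [durfee_lamF hk h1 hgap ht]
  have hfun : Set.EqOn (fun j => lamF k i t j + colLen (lamF k i t) j - (2 * j + 1))
      (fun j => i (k - j)) ↑(Finset.range k) := by
    intro j hj
    simp only [Finset.coe_range, Set.mem_Iio] at hj
    simp only
    rw [lamF, if_pos hj, colLen_lamF hk h1 hgap ht j hj]
    have := leg_exact h1 hgap ht j hj
    omega
  rw [Finset.image_congr hfun, image_shift hk]

end construct
end HookAux

namespace HookAux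
set_option linter.unusedSectionVars false

lemma hook_step {lam : ℕ → ℕ} (ha : Antitone lam) {N : ℕ} (hz : lam N = 0) :
    ∀ j, j + 1 < durfee lam →
    (lam (j + 1) + colLen lam (j + 1) - (2 * (j + 1) + 1)) + 2
      ≤ lam j + colLen lam j - (2 * j + 1) := by
  intro j hj
  have hr1 : j + 1 + 1 ≤ lam (j + 1) := (durfee_iff ha hz (j + 1)).2 hj
  have hc1 : j + 1 < colLen lam (j + 1) := (colLen_iff ha hz (j + 1) (j + 1)).1 hr1
  have hl : lam (j + 1) ≤ lam j := ha (by omega)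
  have hcl : colLen lam (j + 1) ≤ colLen lam j := colLen_anti ha hz (by omega)
  omega

lemma hook_anti {lam : ℕ → ℕ} (ha : Antitone lam) {N : ℕ} (hz : lam N = 0) :
    ∀ a b, a < b → b < durfee lam →
    lam b + colLen lam b - (2 * b + 1) < lam a + colLen lam a - (2 * a + 1) := by
  intro a b hab
  induction b, hab using Nat.le_induction with
  | base =>
    intro h
    have := hook_step ha hz a h
    simp only [Nat.succ_eq_add_one]
    omega
  | succ b hb ih =>
    intro h
    have h2 := hook_step ha hz b h
    have h3 := ih (by omega)
    omega

lemma durfee_eq {k : ℕ} {i : ℕ → ℕ}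
    (hgap : ∀ j, 2 ≤ j → j ≤ k → i (j - 1) + 2 ≤ i j)
    {lam : ℕ → ℕ} (ha : Antitone lam) {N : ℕ} (hz : lam N = 0)
    (hH : hookDecomposition lam = (Finset.Icc 1 k).image i) :
    durfee lam = k := by
  have hinj : Set.InjOn (fun j => lam j + colLen lam j - (2 * j + 1))
      ↑(Finset.range (durfee lam)) := by
    intro a haa b hbb hab
    simp only [Finset.coe_range, Set.mem_Iio] at haa hbb
    simp only at hab
    rcases lt_trichotomy a b with h | h | h
    · have := hook_anti ha hz a b h hbb; omega
    · exact h
    · have := hook_anti ha hz b a h haa; omega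
  have h2 : (hookDecomposition lam).card = durfee lam := by
    unfold hookDecomposition
    rw [Finset.card_image_of_injOn hinj, Finset.card_range]
  have hiinj : Set.InjOn i ↑(Finset.Icc 1 k) := by
    intro a haa b hbb hab
    simp only [Finset.coe_Icc, Set.mem_Icc] at haa hbb
    rcases lt_trichotomy a b with h | h | h
    · have := i_mono hgap a b haa.1 (by omega) hbb.2; omega
    · exact h
    · have := i_mono hgap b a hbb.1 (by omega) haa.2; omega
  have h3 : ((Finset.Icc 1 k).image i).card = k := by
    rw [Finset.card_image_of_injOn hiinj, Nat.card_Icc]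
    omega
  rw [hH, h3] at h2
  omega

lemma hook_eq {k : ℕ} {i : ℕ → ℕ} (hk : 1 ≤ k)
    (hgap : ∀ j, 2 ≤ j → j ≤ k → i (j - 1) + 2 ≤ i j)
    {lam : ℕ → ℕ} (ha : Antitone lam) {N : ℕ} (hz : lam N = 0)
    (hH : hookDecomposition lam = (Finset.Icc 1 k).image i) :
    ∀ j, j < k → lam j + colLen lam j - (2 * j + 1) = i (k - j) := by
  have hd := durfee_eq hgap ha hz hH
  intro j hj
  refine eq_of_image_eq (f := fun j => lam j + colLen lam j - (2 * j + 1))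
    (g := fun j => i (k - j)) ?_ ?_ ?_ j hj
  · intro a b h1' h2'
    exact hook_anti ha hz a b h1' (by rw [hd]; exact h2')
  · intro a b h1' h2'
    show i (k - b) < i (k - a)
    have := i_mono hgap (k - b) (k - a) (by omega) (by omega) (by omega)
    omega
  · have h4 : (Finset.range k).image (fun j => lam j + colLen lam j - (2 * j + 1))
        = hookDecomposition lam := by
      unfold hookDecomposition
      rw [hd]
    rw [h4, hH, ← image_shift hk]

lemma hook_sum {k : ℕ} {i : ℕ → ℕ} (hk : 1 ≤ k)
    (hgap : ∀ j, 2 ≤ j → j ≤ k → i (j - 1) + 2 ≤ i j)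
    {lam : ℕ → ℕ} (ha : Antitone lam) {N : ℕ} (hz : lam N = 0)
    (hH : hookDecomposition lam = (Finset.Icc 1 k).image i) :
    ∀ j, j < k → lam j + colLen lam j = i (k - j) + 2 * j + 1 := by
  have hd := durfee_eq hgap ha hz hH
  intro j hj
  have he := hook_eq hk hgap ha hz hH j hj
  have hr : j + 1 ≤ lam j := (durfee_iff ha hz j).2 (by omega)
  have hc : j < colLen lam j := (colLen_iff ha hz j j).1 hr
  omega

lemma tOf_lt {k : ℕ} {i : ℕ → ℕ} (hk : 1 ≤ k) (h1 : 1 ≤ i 1)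
    (hgap : ∀ j, 2 ≤ j → j ≤ k → i (j - 1) + 2 ≤ i j)
    {lam : ℕ → ℕ} (ha : Antitone lam) {N : ℕ} (hz : lam N = 0)
    (hH : hookDecomposition lam = (Finset.Icc 1 k).image i) :
    ∀ j, j < k → (if j + 1 = k then lam j - k else lam j - lam (j + 1)) < sizeF k i j := by
  have hd := durfee_eq hgap ha hz hH
  intro j hj
  have hs := hook_sum hk hgap ha hz hH j hj
  have hr : j + 1 ≤ lam j := (durfee_iff ha hz j).2 (by omega)
  have hc : j < colLen lam j := (colLen_iff ha hz j j).1 hr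
  by_cases hjk : j + 1 = k
  · rw [if_pos hjk, sizeF, if_pos hjk]
    rw [show k - j = 1 by omega] at hs
    omega
  · rw [if_neg hjk, sizeF, if_neg hjk]
    have hj1 : j + 1 < k := by omega
    have hs2 := hook_sum hk hgap ha hz hH (j + 1) hj1
    rw [show k - (j + 1) = k - j - 1 by omega] at hs2
    have hr2 : j + 2 ≤ lam (j + 1) := (durfee_iff ha hz (j + 1)).2 (by omega)
    have hc2 : j + 1 < colLen lam (j + 1) := (colLen_iff ha hz (j + 1) (j + 1)).1 hr2
    have hl : lam (j + 1) ≤ lam j := ha (by omega)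
    have hcl : colLen lam (j + 1) ≤ colLen lam j := colLen_anti ha hz (by omega)
    have hg := hgap (k - j) (by omega) (by omega)
    omega

lemma lamF_tOf {k : ℕ} {i : ℕ → ℕ} (hk : 1 ≤ k) (h1 : 1 ≤ i 1)
    (hgap : ∀ j, 2 ≤ j → j ≤ k → i (j - 1) + 2 ≤ i j)
    {lam : ℕ → ℕ} (ha : Antitone lam) {N : ℕ} (hz : lam N = 0)
    (hH : hookDecomposition lam = (Finset.Icc 1 k).image i)
    (t' : ℕ → ℕ)
    (ht' : ∀ j, j < k → t' j = if j + 1 = k then lam j - k else lam j - lam (j + 1)) :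
    lamF k i t' = lam := by
  have hd := durfee_eq hgap ha hz hH
  have hrow : ∀ j, j < k → j + 1 ≤ lam j :=
    fun j hj => (durfee_iff ha hz j).2 (by omega)
  have hcol : ∀ j, j < k → j < colLen lam j :=
    fun j hj => (colLen_iff ha hz j j).1 (hrow j hj)
  have hsum := hook_sum hk hgap ha hz hH
  have harm_aux : ∀ d j, j < k → k - j = d + 1 → armF k t' j + j + 1 = lam j := by
    intro d
    induction d with
    | zero =>
      intro j hj hjd
      have hj1 : j + 1 = k := by omega
      rw [armF_last t' hj1, ht' j hj, if_pos hj1]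
      have := hrow j hj
      omega
    | succ d ih =>
      intro j hj hjd
      have hj1 : j + 1 < k := by omega
      rw [armF_succ t' hj1, ht' j hj, if_neg (by omega)]
      have h2 := ih (j + 1) (by omega) (by omega)
      have hl : lam (j + 1) ≤ lam j := ha (by omega)
      have := hrow (j + 1) hj1
      omega
  have harm : ∀ j, j < k → armF k t' j + j + 1 = lam j :=
    fun j hj => harm_aux (k - j - 1) j hj (by omega)
  have hleg : ∀ j, j < k → legF k i t' j + j + 1 = colLen lam j := by
    intro j hj
    have hs := hsum j hj
    have h2 := harm j hj
    have h3 := hrow j hj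
    have h4 := hcol j hj
    unfold legF
    omega
  funext r
  by_cases hr : r < k
  · simp only [lamF]
    rw [if_pos hr]
    exact harm r hr
  · simp only [lamF]
    rw [if_neg hr]
    have hlamk : lam r ≤ k := by
      have h5 : ¬(k + 1 ≤ lam k) := by
        intro hcon
        have := (durfee_iff ha hz k).1 hcon
        omega
      have h6 : lam r ≤ lam k := ha (by omega)
      omega
    have hfe : (Finset.range k).filter (fun j => r ≤ legF k i t' j + j)
        = Finset.range (lam r) := by
      ext x
      simp only [Finset.mem_filter, Finset.mem_range]
      constructor
      · rintro ⟨hxk, hxr⟩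
        have hl := hleg x hxk
        have h6 : r < colLen lam x := by omega
        have h7 := (colLen_iff ha hz x r).2 h6
        omega
      · intro hx
        have hxk : x < k := by omega
        have hl := hleg x hxk
        have h7 := (colLen_iff ha hz x r).1 (by omega)
        exact ⟨hxk, by omega⟩
    rw [hfe, Finset.card_range]

def extT (k : ℕ) (sz : ℕ → ℕ) (t : ∀ j : Fin k, Fin (sz j.1)) (m : ℕ) : ℕ :=
  if h : m < k then (t ⟨m, h⟩ : ℕ) else 0

end HookAux

/-- For 1 ≤ i₁ < … < i_k with consecutive gaps ≥ 2, the number of partitions whose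
hook decomposition is exactly {i₁,…,i_k} is i₁·∏_{j=2}^{k} (i_j − i_{j−1} − 1). -/
theorem count_partitions_with_hookDecomposition (k : ℕ) (i : ℕ → ℕ) (hk : 1 ≤ k)
    (h1 : 1 ≤ i 1) (hgap : ∀ j, 2 ≤ j → j ≤ k → i (j - 1) + 2 ≤ i j) :
    Nat.card {lam : ℕ → ℕ //
        IsPartitionFun lam ∧ hookDecomposition lam = (Finset.Icc 1 k).image i} =
    i 1 * ∏ j ∈ Finset.Icc 2 k, (i j - i (j - 1) - 1) := by
  classical
  have hextlt : ∀ (t : ∀ j : Fin k, Fin (HookAux.sizeF k i j.1)) (j : ℕ), j < k →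
      HookAux.extT k (HookAux.sizeF k i) t j < HookAux.sizeF k i j := by
    intro t j hj
    unfold HookAux.extT
    rw [dif_pos hj]
    exact (t ⟨j, hj⟩).2
  have E : {lam : ℕ → ℕ //
      IsPartitionFun lam ∧ hookDecomposition lam = (Finset.Icc 1 k).image i} ≃
      (∀ j : Fin k, Fin (HookAux.sizeF k i j.1)) :=
    { toFun := fun L j =>
        ⟨if (j : ℕ) + 1 = k then L.1 j.1 - k else L.1 j.1 - L.1 (j.1 + 1), by
          obtain ⟨⟨ha, N, hz⟩, hH⟩ := L.2
          exact HookAux.tOf_lt hk h1 hgap ha hz hH j.1 j.2⟩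
      invFun := fun t =>
        ⟨HookAux.lamF k i (HookAux.extT k (HookAux.sizeF k i) t),
          ⟨HookAux.lamF_anti h1 hgap (hextlt t),
            ⟨k + i k, HookAux.lamF_zero hk h1 hgap (hextlt t)⟩⟩,
          HookAux.hookDecomp_lamF hk h1 hgap (hextlt t)⟩
      left_inv := by
        rintro ⟨lam, ⟨ha, N, hz⟩, hH⟩
        apply Subtype.ext
        apply HookAux.lamF_tOf hk h1 hgap ha hz hH
        intro j hj
        unfold HookAux.extT
        rw [dif_pos hj]
      right_inv := by
        intro t
        funext j
        apply Fin.ext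
        show (if (j : ℕ) + 1 = k
            then HookAux.lamF k i (HookAux.extT k (HookAux.sizeF k i) t) j.1 - k
            else HookAux.lamF k i (HookAux.extT k (HookAux.sizeF k i) t) j.1 -
              HookAux.lamF k i (HookAux.extT k (HookAux.sizeF k i) t) (j.1 + 1))
          = (t j : ℕ)
        by_cases hj : (j : ℕ) + 1 = k
        · rw [if_pos hj]
          simp only [HookAux.lamF]
          rw [if_pos j.2, HookAux.armF_last _ hj]
          unfold HookAux.extT
          rw [dif_pos j.2]
          simp only [Fin.eta]
          omega
        · rw [if_neg hj]
          have hj1 : (j : ℕ) + 1 < k := by have := j.2; omega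
          simp only [HookAux.lamF]
          rw [if_pos j.2, if_pos hj1, HookAux.armF_succ _ hj1]
          unfold HookAux.extT
          rw [dif_pos j.2]
          simp only [Fin.eta]
          omega }
  rw [Nat.card_congr E, Nat.card_pi]
  simp only [Nat.card_eq_fintype_card, Fintype.card_fin]
  rw [Fin.prod_univ_eq_prod_range (fun j => HookAux.sizeF k i j) k]
  obtain ⟨k', rfl⟩ : ∃ k', k = k' + 1 := ⟨k - 1, by omega⟩
  rw [Finset.prod_range_succ, show HookAux.sizeF (k' + 1) i k' = i 1 from if_pos rfl,
    mul_comm]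
  congr 1
  refine Finset.prod_nbij' (fun j => k' + 1 - j) (fun m => k' + 1 - m) ?_ ?_ ?_ ?_ ?_
  · intro a haa
    simp only [Finset.mem_range] at haa
    simp only [Finset.mem_Icc]
    omega
  · intro a haa
    simp only [Finset.mem_Icc] at haa
    simp only [Finset.mem_range]
    omega
  · intro a haa
    simp only [Finset.mem_range] at haa
    show k' + 1 - (k' + 1 - a) = a
    omega
  · intro a haa
    simp only [Finset.mem_Icc] at haa
    show k' + 1 - (k' + 1 - a) = a
    omega
  · intro a haa
    simp only [Finset.mem_range] at haa
    rw [HookAux.sizeF, if_neg (by omega)]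
end

section
/- A permutation π is an involution avoiding both 321 and 312 if and only if π is a direct sum of blocks each equal to 1 or 21. Consequently, the number of involutions of {1,...,n} avoiding 321 and 312 with exactly k descents equals the number of ways to tile a row of n cells by monominoes and k dominoes, i.e., C(n−k, k). -/
open Finset Polynomial

/-- π avoids the pattern 312: no i < j < k with π(j) < π(k) < π(i). -/
def avoids312 {n : ℕ} (π : Equiv.Perm (Fin n)) : Prop :=
  ¬ ∃ i j k : Fin n, i < j ∧ j < k ∧ π j < π k ∧ π k < π i

instance {n : ℕ} (π : Equiv.Perm (Fin n)) : Decidable (avoids312 π) := by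
  unfold avoids312; infer_instance

/-- π is a direct sum of blocks each equal to 1 or 21: every position is either a
fixed point, or the first or second entry of an adjacent transposed pair. -/
def isDirectSumOf1and21 {n : ℕ} (π : Equiv.Perm (Fin n)) : Prop :=
  ∀ i : Fin n, π i = i ∨
    ((π i : ℕ) = (i : ℕ) + 1 ∧ π (π i) = i) ∨
    ((π i : ℕ) + 1 = (i : ℕ) ∧ π (π i) = i)

lemma ds_bounds {n : ℕ} {π : Equiv.Perm (Fin n)} (h : isDirectSumOf1and21 π) (i : Fin n) :
    (π i : ℕ) ≤ (i : ℕ) + 1 ∧ (i : ℕ) ≤ (π i : ℕ) + 1 := by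
  rcases h i with h1 | ⟨h1, -⟩ | ⟨h1, -⟩
  · rw [h1]; omega
  · omega
  · omega

lemma ds_inv {n : ℕ} {π : Equiv.Perm (Fin n)} (h : isDirectSumOf1and21 π) : isInvolution π := by
  intro i
  rcases h i with h1 | ⟨-, h1⟩ | ⟨-, h1⟩
  · rw [h1, h1]
  · exact h1
  · exact h1

lemma ds_av321 {n : ℕ} {π : Equiv.Perm (Fin n)} (h : isDirectSumOf1and21 π) : avoids321 π := by
  rintro ⟨i, j, k, hij, hjk, h1, h2⟩
  have bi := ds_bounds h i
  have bk := ds_bounds h k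
  rw [Fin.lt_def] at hij hjk h1 h2
  omega

lemma ds_av312 {n : ℕ} {π : Equiv.Perm (Fin n)} (h : isDirectSumOf1and21 π) : avoids312 π := by
  rintro ⟨i, j, k, hij, hjk, h1, h2⟩
  have bi := ds_bounds h i
  have bj := ds_bounds h j
  rw [Fin.lt_def] at hij hjk h1 h2
  omega

lemma key_step {n : ℕ} {π : Equiv.Perm (Fin n)} (hinv : isInvolution π)
    (h321 : avoids321 π) (h312 : avoids312 π) (i : Fin n) (hlt : (i : ℕ) < (π i : ℕ)) :
    (π i : ℕ) = (i : ℕ) + 1 := by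
  by_contra hne
  have h2 : (i : ℕ) + 2 ≤ (π i : ℕ) := by omega
  have hin : (i : ℕ) + 1 < n := lt_of_le_of_lt h2 (π i).isLt |>.trans_le (le_refl n) |> fun _ => Nat.lt_of_le_of_lt (by omega) (π i).isLt
  set j : Fin n := ⟨(i : ℕ) + 1, hin⟩ with hj
  have hjv : (j : ℕ) = (i : ℕ) + 1 := rfl
  have hpi : π (π i) = i := hinv i
  have hpj : π (π j) = j := hinv j
  have hne1 : (π j : ℕ) ≠ (i : ℕ) := by
    intro hc
    have : π j = π (π i) := by rw [hpi]; exact Fin.ext hc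
    have := π.injective this
    rw [hj] at this
    have := congrArg Fin.val this
    simp at this
    omega
  have hne2 : (π j : ℕ) ≠ (π i : ℕ) := by
    intro hc
    have : π j = π i := Fin.ext hc
    have := π.injective this
    rw [hj] at this
    have := congrArg Fin.val this
    simp at this
  rcases Nat.lt_trichotomy ((π j : ℕ)) (i : ℕ) with hc | hc | hc
  · -- 312 at positions i < j < π i : values π i large, π j small, π (π i) = i middle
    exact h312 ⟨i, j, π i, by rw [Fin.lt_def]; omega,
      by rw [Fin.lt_def]; omega,
      by rw [Fin.lt_def, hpi]; omega,
      by rw [Fin.lt_def, hpi]; omega⟩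
  · exact hne1 hc
  · rcases Nat.lt_trichotomy ((π j : ℕ)) ((π i : ℕ)) with hd | hd | hd
    · -- 321 at positions i < j < π i
      exact h321 ⟨i, j, π i, by rw [Fin.lt_def]; omega,
        by rw [Fin.lt_def]; omega,
        by rw [Fin.lt_def, hpi]; omega,
        by rw [Fin.lt_def]; omega⟩
    · exact hne2 hd
    · -- 312 at positions j < π i < π j
      exact h312 ⟨j, π i, π j, by rw [Fin.lt_def]; omega,
        by rw [Fin.lt_def]; omega,
        by rw [Fin.lt_def, hpi, hpj]; omega,
        by rw [Fin.lt_def, hpj]; omega⟩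

lemma ds_of {n : ℕ} {π : Equiv.Perm (Fin n)} (hinv : isInvolution π)
    (h321 : avoids321 π) (h312 : avoids312 π) : isDirectSumOf1and21 π := by
  intro i
  rcases Nat.lt_trichotomy ((π i : ℕ)) (i : ℕ) with hc | hc | hc
  · right; right
    refine ⟨?_, hinv i⟩
    have h := key_step hinv h321 h312 (π i) (by rw [hinv i]; exact hc)
    rw [hinv i] at h
    omega
  · left; exact Fin.ext hc
  · right; left
    exact ⟨key_step hinv h321 h312 i hc, hinv i⟩

lemma ds_desSet_iff {n : ℕ} {π : Equiv.Perm (Fin n)} (h : isDirectSumOf1and21 π) (j : ℕ) :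
    j ∈ desSet π ↔ ∃ hj : j < n, 1 ≤ j ∧ (π ⟨j, hj⟩ : ℕ) + 1 = j ∧
      (π ⟨j - 1, Nat.lt_of_le_of_lt (Nat.sub_le j 1) hj⟩ : ℕ) = j := by
  simp only [desSet, Finset.mem_filter, Finset.mem_Ico]
  constructor
  · rintro ⟨⟨h1j, hjn⟩, hjn', hdesc⟩
    refine ⟨hjn, h1j, ?_⟩
    have b1 := ds_bounds h ⟨j, hjn⟩
    have b2 := ds_bounds h ⟨j - 1, Nat.lt_of_le_of_lt (Nat.sub_le j 1) hjn⟩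
    rw [Fin.lt_def] at hdesc
    simp only [Fin.val_mk] at b1 b2
    omega
  · rintro ⟨hjn, h1j, he1, he2⟩
    exact ⟨⟨h1j, hjn⟩, hjn, by rw [Fin.lt_def]; omega⟩

lemma ds_sparse {n : ℕ} {π : Equiv.Perm (Fin n)} (h : isDirectSumOf1and21 π) :
    ∀ j ∈ desSet π, j + 1 ∉ desSet π := by
  intro j hjmem hj1mem
  rw [ds_desSet_iff h] at hjmem hj1mem
  obtain ⟨hjn, h1j, he1, he2⟩ := hjmem
  obtain ⟨hj1n, -, he1', he2'⟩ := hj1mem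
  have : (⟨j + 1 - 1, Nat.lt_of_le_of_lt (Nat.sub_le (j+1) 1) hj1n⟩ : Fin n) = ⟨j, hjn⟩ :=
    Fin.ext (by simp)
  rw [this] at he2'
  omega

lemma desSet_subset {n : ℕ} (π : Equiv.Perm (Fin n)) : desSet π ⊆ Finset.Ico 1 n :=
  Finset.filter_subset _ _

def permOfFun (n : ℕ) (S : Finset ℕ) (hS : ∀ s ∈ S, 1 ≤ s ∧ s < n) : Fin n → Fin n :=
  fun i => if h : (i : ℕ) + 1 ∈ S then ⟨(i : ℕ) + 1, (hS _ h).2⟩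
    else if (i : ℕ) ∈ S then ⟨(i : ℕ) - 1, Nat.lt_of_le_of_lt (Nat.sub_le _ _) i.isLt⟩ else i

lemma permOfFun_inv {n : ℕ} {S : Finset ℕ} (hS : ∀ s ∈ S, 1 ≤ s ∧ s < n)
    (hsp : ∀ s ∈ S, s + 1 ∉ S) : Function.Involutive (permOfFun n S hS) := by
  intro i
  by_cases h1 : (i : ℕ) + 1 ∈ S
  · have e1 : permOfFun n S hS i = ⟨(i : ℕ) + 1, (hS _ h1).2⟩ := dif_pos h1
    rw [e1]
    have h2 : (i : ℕ) + 1 + 1 ∉ S := hsp _ h1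
    have e2 : permOfFun n S hS ⟨(i : ℕ) + 1, (hS _ h1).2⟩ =
        ⟨(i : ℕ) + 1 - 1, Nat.lt_of_le_of_lt (Nat.sub_le _ _) (hS _ h1).2⟩ := by
      unfold permOfFun
      rw [dif_neg (by simpa using h2), if_pos (by simpa using h1)]
    rw [e2]
    exact Fin.ext (by simp)
  · by_cases h2 : (i : ℕ) ∈ S
    · have h3 : 1 ≤ (i : ℕ) := (hS _ h2).1
      have e1 : permOfFun n S hS i = ⟨(i : ℕ) - 1, Nat.lt_of_le_of_lt (Nat.sub_le _ _) i.isLt⟩ := by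
        unfold permOfFun; rw [dif_neg h1, if_pos h2]
      rw [e1]
      have e2 : permOfFun n S hS ⟨(i : ℕ) - 1, Nat.lt_of_le_of_lt (Nat.sub_le _ _) i.isLt⟩ = i := by
        unfold permOfFun
        have : (i : ℕ) - 1 + 1 = (i : ℕ) := by omega
        rw [dif_pos (by rw [Fin.val_mk, this]; exact h2)]
        exact Fin.ext (by simp [this])
      rw [e2]
    · have e1 : permOfFun n S hS i = i := by
        unfold permOfFun; rw [dif_neg h1, if_neg h2]
      rw [e1, e1]

def permOf (n : ℕ) (S : Finset ℕ) (hS : ∀ s ∈ S, 1 ≤ s ∧ s < n)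
    (hsp : ∀ s ∈ S, s + 1 ∉ S) : Equiv.Perm (Fin n) :=
  Function.Involutive.toPerm _ (permOfFun_inv hS hsp)

lemma permOf_apply {n : ℕ} (S : Finset ℕ) (hS : ∀ s ∈ S, 1 ≤ s ∧ s < n)
    (hsp : ∀ s ∈ S, s + 1 ∉ S) (i : Fin n) : permOf n S hS hsp i = permOfFun n S hS i := rfl

lemma permOf_ds {n : ℕ} (S : Finset ℕ) (hS : ∀ s ∈ S, 1 ≤ s ∧ s < n)
    (hsp : ∀ s ∈ S, s + 1 ∉ S) : isDirectSumOf1and21 (permOf n S hS hsp) := by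
  intro i
  have hinv := permOfFun_inv hS hsp i
  by_cases h1 : (i : ℕ) + 1 ∈ S
  · right; left
    constructor
    · rw [permOf_apply]
      unfold permOfFun
      rw [dif_pos h1]
    · exact hinv
  · by_cases h2 : (i : ℕ) ∈ S
    · right; right
      constructor
      · rw [permOf_apply]
        unfold permOfFun
        rw [dif_neg h1, if_pos h2]
        have := (hS _ h2).1
        simp only [Fin.val_mk]
        omega
      · exact hinv
    · left
      rw [permOf_apply]
      unfold permOfFun
      rw [dif_neg h1, if_neg h2]

lemma permOf_desSet {n : ℕ} (S : Finset ℕ) (hS : ∀ s ∈ S, 1 ≤ s ∧ s < n)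
    (hsp : ∀ s ∈ S, s + 1 ∉ S) : desSet (permOf n S hS hsp) = S := by
  ext j
  rw [ds_desSet_iff (permOf_ds S hS hsp)]
  constructor
  · rintro ⟨hjn, h1j, he1, he2⟩
    -- from he2 : permOf ⟨j-1⟩ = j, deduce j ∈ S
    by_contra hjS
    rw [permOf_apply] at he2
    unfold permOfFun at he2
    have hj1 : j - 1 + 1 = j := by omega
    rw [dif_neg (by simp only [Fin.val_mk]; rw [hj1]; exact hjS)] at he2
    by_cases h2 : j - 1 ∈ S
    · rw [if_pos (by simpa using h2)] at he2
      simp only [Fin.val_mk] at he2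
      omega
    · rw [if_neg (by simpa using h2)] at he2
      simp only [Fin.val_mk] at he2
      omega
  · intro hjS
    obtain ⟨h1j, hjn⟩ := hS _ hjS
    refine ⟨hjn, h1j, ?_, ?_⟩
    · rw [permOf_apply]
      unfold permOfFun
      rw [dif_neg (by simpa using hsp _ hjS), if_pos (by simpa using hjS)]
      simp only [Fin.val_mk]
      omega
    · rw [permOf_apply]
      unfold permOfFun
      have hj1 : j - 1 + 1 = j := by omega
      rw [dif_pos (by simp only [Fin.val_mk]; rw [hj1]; exact hjS)]
      simp only [Fin.val_mk]
      omega

lemma permOf_eq {n : ℕ} {π : Equiv.Perm (Fin n)} (h : isDirectSumOf1and21 π)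
    (hS : ∀ s ∈ desSet π, 1 ≤ s ∧ s < n) (hsp : ∀ s ∈ desSet π, s + 1 ∉ desSet π) :
    permOf n (desSet π) hS hsp = π := by
  apply Equiv.ext
  intro i
  rw [permOf_apply]
  unfold permOfFun
  by_cases h1 : (i : ℕ) + 1 ∈ desSet π
  · rw [dif_pos h1]
    obtain ⟨hjn, -, he1, he2⟩ := (ds_desSet_iff h _).mp h1
    have : (⟨(i : ℕ) + 1 - 1, Nat.lt_of_le_of_lt (Nat.sub_le _ 1) hjn⟩ : Fin n) = i :=
      Fin.ext (by simp)
    rw [this] at he2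
    exact Fin.ext (by simp [← he2])
  · rw [dif_neg h1]
    by_cases h2 : (i : ℕ) ∈ desSet π
    · rw [if_pos h2]
      obtain ⟨hjn, h1j, he1, he2⟩ := (ds_desSet_iff h _).mp h2
      have : (⟨(i : ℕ), hjn⟩ : Fin n) = i := Fin.ext rfl
      rw [this] at he1
      exact Fin.ext (by simp only [Fin.val_mk]; omega)
    · rw [if_neg h2]
      rcases h i with hc | ⟨hc1, hc2⟩ | ⟨hc1, hc2⟩
      · exact hc.symm
      · exfalso
        apply h1
        rw [ds_desSet_iff h]
        have hjn : (i : ℕ) + 1 < n := by rw [← hc1]; exact (π i).isLt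
        refine ⟨hjn, by omega, ?_, ?_⟩
        · have : (⟨(i : ℕ) + 1, hjn⟩ : Fin n) = π i := Fin.ext (by simp [hc1])
          rw [this, hc2]
        · have : (⟨(i : ℕ) + 1 - 1, Nat.lt_of_le_of_lt (Nat.sub_le _ 1) hjn⟩ : Fin n) = i :=
            Fin.ext (by simp)
          rw [this]
          omega
      · exfalso
        apply h2
        rw [ds_desSet_iff h]
        refine ⟨i.isLt, by omega, ?_, ?_⟩
        · have : (⟨(i : ℕ), i.isLt⟩ : Fin n) = i := Fin.ext rfl
          rw [this]
          omega
        · have : (⟨(i : ℕ) - 1, Nat.lt_of_le_of_lt (Nat.sub_le _ 1) i.isLt⟩ : Fin n) = π i :=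
            Fin.ext (by simp only [Fin.val_mk]; omega)
          rw [this, hc2]

lemma sparse_count_zero (n : ℕ) :
    (((Finset.Ico 1 n).powerset).filter
      (fun S => (∀ i ∈ S, i + 1 ∉ S) ∧ S.card = 0)).card = 1 := by
  have : ((Finset.Ico 1 n).powerset).filter
      (fun S => (∀ i ∈ S, i + 1 ∉ S) ∧ S.card = 0) = {∅} := by
    ext S
    simp only [Finset.mem_filter, Finset.mem_powerset, Finset.mem_singleton,
      Finset.card_eq_zero]
    constructor
    · rintro ⟨-, -, h⟩; exact h
    · rintro rfl
      exact ⟨Finset.empty_subset _, fun i hi => absurd hi (Finset.notMem_empty i), rfl⟩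
  rw [this, Finset.card_singleton]

lemma sparse_count (n k : ℕ) :
    (((Finset.Ico 1 n).powerset).filter
      (fun S => (∀ i ∈ S, i + 1 ∉ S) ∧ S.card = k)).card = Nat.choose (n - k) k := by
  induction n using Nat.strong_induction_on generalizing k with
  | _ n ih =>
    match n, k with
    | n, 0 => simpa using sparse_count_zero n
    | 0, (k+1) =>
      rw [show ((0:ℕ) - (k+1)) = 0 by omega, Nat.choose_eq_zero_of_lt (by omega)]
      rw [Finset.card_eq_zero, Finset.filter_eq_empty_iff]
      intro S hS
      simp only [Finset.mem_powerset] at hS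
      rw [show Finset.Ico 1 0 = ∅ by simp] at hS
      rw [Finset.subset_empty.mp hS]
      simp
    | 1, (k+1) =>
      rw [show ((1:ℕ) - (k+1)) = 0 by omega, Nat.choose_eq_zero_of_lt (by omega)]
      rw [Finset.card_eq_zero, Finset.filter_eq_empty_iff]
      intro S hS
      simp only [Finset.mem_powerset] at hS
      rw [show Finset.Ico 1 1 = ∅ by simp] at hS
      rw [Finset.subset_empty.mp hS]
      simp
    | (m+2), (k+1) =>
      set s := ((Finset.Ico 1 (m+2)).powerset).filter
        (fun S => (∀ i ∈ S, i + 1 ∉ S) ∧ S.card = k + 1) with hs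
      have hsplit := Finset.card_filter_add_card_filter_not
        (s := s) (p := fun S => (m+1) ∈ S)
      -- negative part equals the (m+1) set
      have hneg : s.filter (fun S => ¬ (m+1) ∈ S) =
          ((Finset.Ico 1 (m+1)).powerset).filter
            (fun S => (∀ i ∈ S, i + 1 ∉ S) ∧ S.card = k + 1) := by
        ext S
        simp only [hs, Finset.mem_filter, Finset.mem_powerset]
        constructor
        · rintro ⟨⟨hsub, hsp, hcard⟩, hnm⟩
          refine ⟨?_, hsp, hcard⟩
          intro x hx
          have := hsub hx
          simp only [Finset.mem_Ico] at this ⊢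
          have : x ≠ m + 1 := fun hc => hnm (hc ▸ hx)
          have := hsub hx
          simp only [Finset.mem_Ico] at this
          omega
        · rintro ⟨hsub, hsp, hcard⟩
          have hnm : (m+1) ∉ S := fun hc => by
            have := hsub hc; simp only [Finset.mem_Ico] at this; omega
          refine ⟨⟨?_, hsp, hcard⟩, hnm⟩
          exact hsub.trans (Finset.Ico_subset_Ico le_rfl (by omega))
      -- positive part bijects with the m set at k
      have hpos : (s.filter (fun S => (m+1) ∈ S)).card =
          (((Finset.Ico 1 m).powerset).filter
            (fun S => (∀ i ∈ S, i + 1 ∉ S) ∧ S.card = k)).card := by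
        refine Finset.card_bij' (fun S _ => S.erase (m+1)) (fun T _ => insert (m+1) T)
          ?_ ?_ ?_ ?_
        · rintro S hSmem
          simp only [hs, Finset.mem_filter, Finset.mem_powerset] at hSmem
          obtain ⟨⟨hsub, hsp, hcard⟩, hmem⟩ := hSmem
          refine Finset.mem_filter.mpr ⟨Finset.mem_powerset.mpr ?_, ?_, ?_⟩
          · intro x hx
            obtain ⟨hxne, hxS⟩ := Finset.mem_erase.mp hx
            have hx2 := hsub hxS
            simp only [Finset.mem_Ico] at hx2 ⊢
            have hxm : x ≠ m := by
              rintro rfl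
              exact hsp _ hxS hmem
            omega
          · intro i hi
            obtain ⟨-, hiS⟩ := Finset.mem_erase.mp hi
            intro hc
            exact hsp _ hiS (Finset.mem_erase.mp hc).2
          · rw [Finset.card_erase_of_mem hmem, hcard]
            omega
        · rintro T hTmem
          simp only [Finset.mem_filter, Finset.mem_powerset] at hTmem
          obtain ⟨hsub, hsp, hcard⟩ := hTmem
          have hmT : (m+1) ∉ T := fun hc => by
            have := hsub hc; simp only [Finset.mem_Ico] at this; omega
          refine Finset.mem_filter.mpr ⟨?_, Finset.mem_insert_self _ _⟩
          rw [hs]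
          refine Finset.mem_filter.mpr ⟨Finset.mem_powerset.mpr ?_, ?_, ?_⟩
          · intro x hx
            rcases Finset.mem_insert.mp hx with rfl | hxT
            · simp only [Finset.mem_Ico]; omega
            · have := hsub hxT; simp only [Finset.mem_Ico] at this ⊢; omega
          · intro i hi
            rcases Finset.mem_insert.mp hi with rfl | hiT
            · intro hc
              rcases Finset.mem_insert.mp hc with hc1 | hc2
              · omega
              · have := hsub hc2; simp only [Finset.mem_Ico] at this; omega
            · intro hc
              rcases Finset.mem_insert.mp hc with hc1 | hc2
              · have := hsub hiT; simp only [Finset.mem_Ico] at this; omega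
              · exact hsp _ hiT hc2
          · rw [Finset.card_insert_of_notMem hmT, hcard]
        · rintro S hSmem
          simp only [hs, Finset.mem_filter] at hSmem
          exact Finset.insert_erase hSmem.2
        · rintro T hTmem
          simp only [Finset.mem_filter, Finset.mem_powerset] at hTmem
          have hmT : (m+1) ∉ T := fun hc => by
            have := hTmem.1 hc; simp only [Finset.mem_Ico] at this; omega
          exact Finset.erase_insert hmT
      have e1 := ih (m+1) (by omega) (k+1)
      have e2 := ih m (by omega) k
      rw [hneg, e1] at hsplit
      rw [hpos, e2] at hsplit
      rw [← hsplit]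
      rcases le_or_gt k m with hkm | hkm
      · rw [show m + 2 - (k+1) = (m - k) + 1 by omega, show m + 1 - (k+1) = m - k by omega]
        rw [Nat.choose_succ_succ]
      · rw [show m - k = 0 by omega, show m + 1 - (k+1) = 0 by omega,
          show m + 2 - (k+1) = m + 1 - k by omega]
        rw [Nat.choose_eq_zero_of_lt (by omega), Nat.choose_eq_zero_of_lt (by omega),
          Nat.choose_eq_zero_of_lt (by omega)]

/-- π is an involution avoiding 321 and 312 iff it is a direct sum of blocks 1 and 21;
consequently the number of such involutions of {1,…,n} with exactly k descents is
C(n−k,k), the number of tilings of a row of n cells by monominoes and k dominoes. -/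
theorem involutions_avoiding_321_312 (n : ℕ) :
    (∀ π : Equiv.Perm (Fin n),
      (isInvolution π ∧ avoids321 π ∧ avoids312 π) ↔ isDirectSumOf1and21 π) ∧
    ∀ k : ℕ,
      ((Finset.univ : Finset (Equiv.Perm (Fin n))).filter
        (fun π => isInvolution π ∧ avoids321 π ∧ avoids312 π ∧ (desSet π).card = k)).card =
      Nat.choose (n - k) k := by
  constructor
  · intro π
    exact ⟨fun ⟨h1, h2, h3⟩ => ds_of h1 h2 h3,
      fun h => ⟨ds_inv h, ds_av321 h, ds_av312 h⟩⟩
  · intro k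
    rw [← sparse_count n k]
    refine Finset.card_bij' (fun π _ => desSet π)
      (fun S hS => permOf n S (fun x hx => by
          have := Finset.mem_powerset.mp (Finset.mem_filter.mp hS).1 hx
          simpa [Finset.mem_Ico] using this)
        (fun x hx => ((Finset.mem_filter.mp hS).2).1 x hx)) ?_ ?_ ?_ ?_
    · intro π hπ
      simp only [Finset.mem_filter, Finset.mem_univ, true_and] at hπ
      obtain ⟨h1, h2, h3, h4⟩ := hπ
      have hds := ds_of h1 h2 h3
      exact Finset.mem_filter.mpr ⟨Finset.mem_powerset.mpr (desSet_subset π),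
        ds_sparse hds, h4⟩
    · intro S hS
      have hds := permOf_ds S (fun x hx => by
          have := Finset.mem_powerset.mp (Finset.mem_filter.mp hS).1 hx
          simpa [Finset.mem_Ico] using this)
        (fun x hx => ((Finset.mem_filter.mp hS).2).1 x hx)
      refine Finset.mem_filter.mpr ⟨Finset.mem_univ _,
        ds_inv hds, ds_av321 hds, ds_av312 hds, ?_⟩
      rw [permOf_desSet]
      exact ((Finset.mem_filter.mp hS).2).2
    · intro π hπ
      simp only [Finset.mem_filter, Finset.mem_univ, true_and] at hπ
      exact permOf_eq (ds_of hπ.1 hπ.2.1 hπ.2.2.1) _ _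
    · intro S hS
      exact permOf_desSet S _ _
end

section
/- Let pₙ(q) be the sum of q^{maj(π)} over involutions π of {1,...,n} avoiding both 321 and 312. Then pₙ(q) = p_{n−1}(q) + q^{n−1} p_{n−2}(q) for n ≥ 2, with p₀(q) = p₁(q) = 1. -/
open Finset Polynomial

/-- pₙ(q): the maj-generating polynomial over involutions of {1,…,n} avoiding both
321 and 312. -/
noncomputable def majPoly (n : ℕ) : Polynomial ℤ :=
  ∑ π ∈ (Finset.univ : Finset (Equiv.Perm (Fin n))).filter
      (fun π => isInvolution π ∧ avoids321 π ∧ avoids312 π),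
    (X : Polynomial ℤ) ^ (maj π)

/-!
An involution avoiding 321 and 312 moves every point by at most one, so it is a product of
disjoint adjacent transpositions: a point `i` sent to `m ≥ i + 2` would form one of the two
patterns with `i + 1` (and with the image of `i + 1`). Such a permutation of `m + 2` points
either fixes the last point, and deleting it keeps `maj`, or swaps the last two points, and
deleting them removes exactly the descent at position `m + 1`.
-/

open Equiv

def MovesAtMostOne {n : ℕ} (π : Perm (Fin n)) : Prop :=
  ∀ i : Fin n, (π i : ℕ) ≤ i + 1 ∧ (i : ℕ) ≤ π i + 1

instance {n : ℕ} (π : Perm (Fin n)) : Decidable (MovesAtMostOne π) := by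
  unfold MovesAtMostOne; infer_instance

section MovesAtMostOne

variable {n : ℕ} {π : Perm (Fin n)}

lemma MovesAtMostOne.inv (h : MovesAtMostOne π) : MovesAtMostOne π⁻¹ := fun i => by
  simpa using (h (π⁻¹ i)).symm

lemma MovesAtMostOne.apply_apply_of_apply_add_one_eq (h : MovesAtMostOne π) (i : Fin n)
    (hi : (π i : ℕ) + 1 = i) : π (π i) = i := by
  induction i using WellFoundedLT.induction with
  | _ i ih =>
  -- `π (π i)` is `π i + 1 = i` or `π i - 1`; in the latter case induction at `π i` contradicts
  -- injectivity.
  have hj := h (π i)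
  have hne : (π (π i) : ℕ) ≠ π i := fun e => by
    have := π.injective (Fin.ext e); omega
  by_contra hc
  have hlow : (π (π i) : ℕ) + 1 = π i := by
    have : (π (π i) : ℕ) ≠ i := fun e => hc (Fin.ext e)
    omega
  have := ih (π i) (Fin.lt_def.2 (by omega)) hlow
  have := congrArg Fin.val (π.injective this)
  omega

lemma MovesAtMostOne.isInvolution (h : MovesAtMostOne π) : isInvolution π := by
  intro i
  have := h i
  rcases (by omega : (π i : ℕ) + 1 = i ∨ (π i : ℕ) = i ∨ (π i : ℕ) = i + 1) with hi | hi | hi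
  · exact h.apply_apply_of_apply_add_one_eq i hi
  · rw [Fin.ext hi, Fin.ext hi]
  · have := h.inv.apply_apply_of_apply_add_one_eq (π i) (by simpa using hi.symm)
    rw [Perm.inv_eq_iff_eq.mpr rfl, Perm.inv_eq_iff_eq] at this
    exact this.symm

lemma MovesAtMostOne.avoids321 (h : MovesAtMostOne π) : avoids321 π := by
  rintro ⟨i, j, k, hij, hjk, hkj, hji⟩
  have := h i; have := h k
  simp only [Fin.lt_def] at *
  omega

lemma MovesAtMostOne.avoids312 (h : MovesAtMostOne π) : avoids312 π := by
  rintro ⟨i, j, k, hij, hjk, hjk', hki⟩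
  have := h i; have := h j; have := h k
  simp only [Fin.lt_def] at *
  omega

lemma movesAtMostOne_of_isInvolution (hinv : isInvolution π) (h321 : avoids321 π)
    (h312 : avoids312 π) : MovesAtMostOne π := by
  have up (i : Fin n) : (π i : ℕ) ≤ i + 1 := by
    by_contra! hi
    set m := π i
    have hmi : π m = i := hinv i
    let j : Fin n := ⟨i + 1, by omega⟩
    have hij : i < j := Fin.lt_def.2 (Nat.lt_succ_self _)
    have hjm : j < m := Fin.lt_def.2 (by simp only [j]; omega)
    have hji : π j ≠ i := fun e => hjm.ne (π.injective (e.trans hmi.symm))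
    have hjm' : π j ≠ m := fun e => hij.ne' (π.injective e)
    rcases hji.lt_or_gt with hlt | hgt
    · exact h312 ⟨i, j, m, hij, hjm, by rwa [hmi], by rw [hmi]; exact hij.trans hjm⟩
    rcases hjm'.lt_or_gt with hlt' | hgt'
    · exact h321 ⟨i, j, m, hij, hjm, by rwa [hmi], hlt'⟩
    · exact h312 ⟨j, m, π j, hjm, hgt', by rw [hmi, hinv]; exact hij, by rw [hinv]; exact hjm.trans hgt'⟩
  intro i
  refine ⟨up i, ?_⟩
  simpa [hinv i] using up (π i)

lemma isInvolution_and_avoids_iff_movesAtMostOne :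
    (isInvolution π ∧ avoids321 π ∧ avoids312 π) ↔ MovesAtMostOne π :=
  ⟨fun ⟨hinv, h321, h312⟩ => movesAtMostOne_of_isInvolution hinv h321 h312,
    fun h => ⟨h.isInvolution, h.avoids321, h.avoids312⟩⟩

end MovesAtMostOne

section Extension

variable {m : ℕ}

def appendFixed (σ : Perm (Fin m)) : Perm (Fin (m + 1)) where
  toFun := Fin.lastCases (Fin.last m) fun i => (σ i).castSucc
  invFun := Fin.lastCases (Fin.last m) fun i => (σ⁻¹ i).castSucc
  left_inv x := by cases x using Fin.lastCases <;> simp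
  right_inv x := by cases x using Fin.lastCases <;> simp

@[simp] lemma appendFixed_castSucc (σ : Perm (Fin m)) (i : Fin m) :
    appendFixed σ i.castSucc = (σ i).castSucc := by
  simp [appendFixed]

@[simp] lemma appendFixed_last (σ : Perm (Fin m)) : appendFixed σ (Fin.last m) = Fin.last m := by
  simp [appendFixed]

lemma appendFixed_injective : Function.Injective (appendFixed (m := m)) := fun σ τ h =>
  Equiv.ext fun i => Fin.castSucc_injective _ (by simpa using congr($h i.castSucc))

lemma exists_appendFixed_eq {π : Perm (Fin (m + 1))} (h : π (Fin.last m) = Fin.last m) :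
    ∃ σ, appendFixed σ = π := by
  have h' : π⁻¹ (Fin.last m) = Fin.last m := by rw [Perm.inv_eq_iff_eq, h]
  have ne (ρ : Perm (Fin (m + 1))) (hρ : ρ (Fin.last m) = Fin.last m) (i : Fin m) :
      ρ i.castSucc ≠ Fin.last m := fun e =>
    Fin.castSucc_ne_last i (ρ.injective (e.trans hρ.symm))
  refine ⟨⟨fun i => (π i.castSucc).castPred (ne π h i),
    fun i => (π⁻¹ i.castSucc).castPred (ne π⁻¹ h' i), fun i => ?_, fun i => ?_⟩, ?_⟩
  · simp
  · simp
  · ext x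
    cases x using Fin.lastCases <;> simp [h]

def appendSwap (σ : Perm (Fin m)) : Perm (Fin (m + 2)) :=
  swap (Fin.last m).castSucc (Fin.last (m + 1)) * appendFixed (appendFixed σ)

@[simp] lemma appendSwap_castSucc_castSucc (σ : Perm (Fin m)) (i : Fin m) :
    appendSwap σ i.castSucc.castSucc = (σ i).castSucc.castSucc := by
  rw [appendSwap, Perm.mul_apply, appendFixed_castSucc, appendFixed_castSucc,
    swap_apply_of_ne_of_ne]
  · exact (Fin.castSucc_injective _).ne (Fin.castSucc_ne_last _)
  · exact Fin.castSucc_ne_last _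

@[simp] lemma appendSwap_castSucc_last (σ : Perm (Fin m)) :
    appendSwap σ (Fin.last m).castSucc = Fin.last (m + 1) := by
  simp [appendSwap]

@[simp] lemma appendSwap_last (σ : Perm (Fin m)) :
    appendSwap σ (Fin.last (m + 1)) = (Fin.last m).castSucc := by
  simp [appendSwap]

lemma appendSwap_injective : Function.Injective (appendSwap (m := m)) := fun _ _ h =>
  appendFixed_injective (appendFixed_injective (mul_left_cancel h))

lemma exists_appendSwap_eq {π : Perm (Fin (m + 2))}
    (h : π (Fin.last (m + 1)) = (Fin.last m).castSucc)
    (h' : π (Fin.last m).castSucc = Fin.last (m + 1)) : ∃ σ, appendSwap σ = π := by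
  obtain ⟨τ, hτ⟩ := exists_appendFixed_eq (π := swap (Fin.last m).castSucc (Fin.last (m + 1)) * π)
    (by simp [h])
  obtain ⟨σ, rfl⟩ := exists_appendFixed_eq (π := τ) <| Fin.castSucc_injective _ <| by
    rw [← appendFixed_castSucc, hτ, Perm.mul_apply, h', swap_apply_right]
  exact ⟨σ, by rw [appendSwap, hτ, ← mul_assoc, swap_mul_self, one_mul]⟩

end Extension

section Descents

/-- The one-line notation of `π` read as a sequence of naturals, with junk value `0` from
position `n` on. -/
def entry {n : ℕ} (π : Perm (Fin n)) (k : ℕ) : ℕ := if h : k < n then π ⟨k, h⟩ else 0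

lemma entry_lt {n k : ℕ} (π : Perm (Fin n)) (hk : k < n) : entry π k < n := by
  simp [entry, hk]

lemma mem_desSet {n k : ℕ} {π : Perm (Fin n)} :
    k ∈ desSet π ↔ 0 < k ∧ k < n ∧ entry π k < entry π (k - 1) := by
  simp only [desSet, mem_filter, mem_Ico, entry]
  constructor
  · rintro ⟨⟨hk, hkn⟩, _, hd⟩
    exact ⟨hk, hkn, by simpa [hkn, (k.sub_le 1).trans_lt hkn] using hd⟩
  · rintro ⟨hk, hkn, hd⟩
    simp only [hkn, (k.sub_le 1).trans_lt hkn, dite_true] at hd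
    exact ⟨⟨hk, hkn⟩, hkn, hd⟩

variable {m : ℕ} (σ : Perm (Fin m))

lemma entry_appendFixed {k : ℕ} (hk : k < m) : entry (appendFixed σ) k = entry σ k := by
  simp only [entry, hk, Nat.lt_succ_of_lt hk, dite_true]
  exact congrArg Fin.val (appendFixed_castSucc σ ⟨k, hk⟩)

lemma entry_appendFixed_self : entry (appendFixed σ) m = m := by
  simp only [entry, Nat.lt_succ_self, dite_true]
  exact congrArg Fin.val (appendFixed_last σ)

lemma entry_appendSwap {k : ℕ} (hk : k < m) : entry (appendSwap σ) k = entry σ k := by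
  simp only [entry, hk, (by omega : k < m + 2), dite_true]
  exact congrArg Fin.val (appendSwap_castSucc_castSucc σ ⟨k, hk⟩)

lemma entry_appendSwap_self : entry (appendSwap σ) m = m + 1 := by
  simp only [entry, (by omega : m < m + 2), dite_true]
  exact congrArg Fin.val (appendSwap_castSucc_last σ)

lemma entry_appendSwap_succ : entry (appendSwap σ) (m + 1) = m := by
  simp only [entry, (by omega : m + 1 < m + 2), dite_true]
  exact congrArg Fin.val (appendSwap_last σ)

lemma desSet_appendFixed : desSet (appendFixed σ) = desSet σ := by
  ext k
  simp only [mem_desSet]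
  rcases lt_trichotomy k m with hk | rfl | hk
  · rw [entry_appendFixed σ hk, entry_appendFixed σ (by omega)]
    omega
  · have := entry_lt (appendFixed σ) (by omega : k - 1 < k + 1)
    rw [entry_appendFixed_self]
    omega
  · omega

lemma desSet_appendSwap : desSet (appendSwap σ) = insert (m + 1) (desSet σ) := by
  ext k
  simp only [mem_insert, mem_desSet]
  rcases lt_trichotomy k m with hk | rfl | hk
  · rw [entry_appendSwap σ hk, entry_appendSwap σ (by omega)]
    omega
  · obtain rfl | hk := k.eq_zero_or_pos
    · omega
    have := entry_lt σ (by omega : k - 1 < k)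
    rw [entry_appendSwap_self, entry_appendSwap σ (by omega)]
    omega
  · obtain rfl | hk := (Nat.succ_le_of_lt hk).eq_or_lt
    · rw [Nat.succ_sub_one, entry_appendSwap_succ, entry_appendSwap_self]
      omega
    · omega

lemma maj_appendFixed : maj (appendFixed σ) = maj σ := by
  rw [maj, maj, desSet_appendFixed]

lemma maj_appendSwap : maj (appendSwap σ) = maj σ + (m + 1) := by
  have : m + 1 ∉ desSet σ := fun h => by have := mem_desSet.1 h; omega
  rw [maj, maj, desSet_appendSwap, sum_insert this, add_comm]

end Descents

section Recursion

variable {m : ℕ}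

lemma movesAtMostOne_appendFixed_iff {σ : Perm (Fin m)} :
    MovesAtMostOne (appendFixed σ) ↔ MovesAtMostOne σ := by
  refine ⟨fun h i => by simpa using h i.castSucc, fun h x => ?_⟩
  cases x using Fin.lastCases with
  | last => simp
  | cast i => simpa using h i

lemma movesAtMostOne_appendSwap_iff {σ : Perm (Fin m)} :
    MovesAtMostOne (appendSwap σ) ↔ MovesAtMostOne σ := by
  refine ⟨fun h i => by simpa using h i.castSucc.castSucc, fun h x => ?_⟩
  cases x using Fin.lastCases with
  | last => simp; omega
  | cast y =>
    cases y using Fin.lastCases with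
    | last => simp; omega
    | cast i => simpa using h i

lemma filter_movesAtMostOne_fixing_last :
    (univ.filter MovesAtMostOne).filter (fun π : Perm (Fin (m + 1)) => π (Fin.last m) = Fin.last m)
      = (univ.filter MovesAtMostOne).image appendFixed := by
  ext π
  simp only [mem_filter, mem_univ, true_and, mem_image]
  constructor
  · rintro ⟨hπ, hlast⟩
    obtain ⟨σ, rfl⟩ := exists_appendFixed_eq hlast
    exact ⟨σ, movesAtMostOne_appendFixed_iff.1 hπ, rfl⟩
  · rintro ⟨σ, hσ, rfl⟩
    exact ⟨movesAtMostOne_appendFixed_iff.2 hσ, appendFixed_last σ⟩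

lemma filter_movesAtMostOne_not_fixing_last :
    (univ.filter MovesAtMostOne).filter
        (fun π : Perm (Fin (m + 2)) => ¬π (Fin.last (m + 1)) = Fin.last (m + 1))
      = (univ.filter MovesAtMostOne).image appendSwap := by
  ext π
  simp only [mem_filter, mem_univ, true_and, mem_image]
  constructor
  · rintro ⟨hπ, hlast⟩
    have hval : π (Fin.last (m + 1)) = (Fin.last m).castSucc := by
      have := (hπ (Fin.last (m + 1))).2
      have := Fin.val_ne_of_ne hlast
      ext
      simp only [Fin.val_last, Fin.val_castSucc] at *
      omega
    obtain ⟨σ, rfl⟩ := exists_appendSwap_eq hval (by rw [← hval, hπ.isInvolution])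
    exact ⟨σ, movesAtMostOne_appendSwap_iff.1 hπ, rfl⟩
  · rintro ⟨σ, hσ, rfl⟩
    refine ⟨movesAtMostOne_appendSwap_iff.2 hσ, ?_⟩
    rw [appendSwap_last]
    exact Fin.castSucc_ne_last _

end Recursion

lemma majPoly_eq_sum_movesAtMostOne (n : ℕ) :
    majPoly n = ∑ π ∈ univ.filter (MovesAtMostOne (n := n)), X ^ maj π := by
  simp only [majPoly, isInvolution_and_avoids_iff_movesAtMostOne]

lemma majPoly_of_le_one {n : ℕ} (hn : n ≤ 1) : majPoly n = 1 := by
  have hgood (π : Perm (Fin n)) : MovesAtMostOne π := fun i => by omega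
  have hmaj (π : Perm (Fin n)) : maj π = 0 := by
    rw [maj, sum_eq_zero]
    intro k hk
    have := mem_desSet.1 hk
    omega
  simp [majPoly_eq_sum_movesAtMostOne, hgood, hmaj, Fintype.card_perm, Nat.factorial_eq_one.2 hn]

lemma majPoly_add_two (m : ℕ) : majPoly (m + 2) = majPoly (m + 1) + X ^ (m + 1) * majPoly m := by
  simp only [majPoly_eq_sum_movesAtMostOne]
  rw [← sum_filter_add_sum_filter_not _ (fun π => π (Fin.last (m + 1)) = Fin.last (m + 1)),
    filter_movesAtMostOne_fixing_last, filter_movesAtMostOne_not_fixing_last,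
    sum_image appendFixed_injective.injOn, sum_image appendSwap_injective.injOn, mul_sum]
  simp only [maj_appendFixed, maj_appendSwap, pow_add, mul_comm]

/-- The recurrence pₙ(q) = p_{n−1}(q) + q^{n−1} p_{n−2}(q) for n ≥ 2, with
p₀(q) = p₁(q) = 1. -/
theorem majPoly_recurrence :
    majPoly 0 = 1 ∧ majPoly 1 = 1 ∧
    ∀ n : ℕ, 2 ≤ n → majPoly n = majPoly (n - 1) + X ^ (n - 1) * majPoly (n - 2) := by
  refine ⟨majPoly_of_le_one zero_le_one, majPoly_of_le_one le_rfl, fun n hn => ?_⟩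
  obtain ⟨m, rfl⟩ := Nat.exists_eq_add_of_le' hn
  exact majPoly_add_two m
end

section
/- For every n and every set D ⊆ {1,...,n−1} with no two consecutive elements, the number of Dyck paths of length 2n whose peak set contains D equals the Catalan number C_{n−|D|}. -/
open Finset

/-!
Let `d` be the largest element of `D`. Since `d - 1 ∉ D`, every other prescribed peak lies
strictly before the NE factor formed by steps `d` and `d + 1`, so deleting that factor does not
affect them. An NE factor rises by one and returns, so deleting or inserting one anywhere
preserves the Dyck property, and an inserted factor is a peak. Hence deleting the peak at `d` is
a bijection onto the Dyck paths of semilength `n - 1` whose peak set contains `D \ {d}`.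
Iterating reduces to `D = ∅`, where Dyck paths of semilength `n` are counted by `C_n`.
-/

def dyckPathsWithPeaks (n : ℕ) (D : Finset ℕ) : Set (List Bool) :=
  {w | w.length = 2 * n ∧ w.count true = n ∧ IsPrefixPath w ∧ D ⊆ peakSet w}

lemma isPrefixPath_iff_count_le (w : List Bool) :
    IsPrefixPath w ↔ ∀ t, (w.take t).count false ≤ (w.take t).count true := by
  unfold IsPrefixPath ht
  exact forall_congr' fun t => by omega

section DyckWord

open DyckStep

def boolEquivDyckStep : Bool ≃ DyckStep where
  toFun b := if b then U else D
  invFun s := s == U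
  left_inv b := by cases b <;> rfl
  right_inv s := by cases s <;> rfl

lemma count_U_map_boolEquivDyckStep (w : List Bool) :
    (w.map boolEquivDyckStep).count U = w.count true :=
  List.count_map_of_injective _ _ boolEquivDyckStep.injective true

lemma count_D_map_boolEquivDyckStep (w : List Bool) :
    (w.map boolEquivDyckStep).count D = w.count false :=
  List.count_map_of_injective _ _ boolEquivDyckStep.injective false

lemma count_true_map_boolEquivDyckStep_symm (l : List DyckStep) :
    (l.map boolEquivDyckStep.symm).count true = l.count U :=
  List.count_map_of_injective _ _ boolEquivDyckStep.symm.injective U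

lemma count_false_map_boolEquivDyckStep_symm (l : List DyckStep) :
    (l.map boolEquivDyckStep.symm).count false = l.count D :=
  List.count_map_of_injective _ _ boolEquivDyckStep.symm.injective D

def dyckPathsWithPeaksEmptyEquiv (n : ℕ) :
    dyckPathsWithPeaks n ∅ ≃ {p : DyckWord // p.semilength = n} where
  toFun w := ⟨⟨w.1.map boolEquivDyckStep, by
      have := List.count_true_add_count_false w.1
      have := w.2.1
      have := w.2.2.1
      rw [count_U_map_boolEquivDyckStep, count_D_map_boolEquivDyckStep]
      omega, fun t => by
      rw [← List.map_take, count_U_map_boolEquivDyckStep, count_D_map_boolEquivDyckStep]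
      exact (isPrefixPath_iff_count_le _).1 w.2.2.2.1 t⟩,
    (count_U_map_boolEquivDyckStep _).trans w.2.2.1⟩
  invFun p := ⟨p.1.toList.map boolEquivDyckStep.symm, by
      refine ⟨?_, ?_, (isPrefixPath_iff_count_le _).2 fun t => ?_, empty_subset _⟩
      · rw [List.length_map, ← p.1.two_mul_semilength_eq_length, p.2]
      · rw [count_true_map_boolEquivDyckStep_symm]; exact p.2
      · rw [← List.map_take, count_true_map_boolEquivDyckStep_symm,
          count_false_map_boolEquivDyckStep_symm]
        exact p.1.count_D_le_count_U t⟩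
  left_inv w := Subtype.ext <| by simp
  right_inv p := Subtype.ext <| DyckWord.ext <| by simp

end DyckWord

lemma card_dyckPathsWithPeaks_empty (n : ℕ) :
    Nat.card (dyckPathsWithPeaks n ∅) = catalan n := by
  rw [← DyckWord.card_dyckWord_semilength_eq_catalan, ← Nat.card_eq_fintype_card]
  exact Nat.card_congr (dyckPathsWithPeaksEmptyEquiv n)

lemma ht_append_of_le_length (a x : List Bool) {t : ℕ} (h : t ≤ a.length) :
    ht (a ++ x) t = ht a t := by
  rw [ht, ht, List.take_append_of_le_length h]

lemma ht_append_of_length_le (a x : List Bool) {t : ℕ} (h : a.length ≤ t) :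
    ht (a ++ x) t = ht a a.length + ht x (t - a.length) := by
  simp only [ht, List.take_append, List.take_of_length_le h, List.take_length, List.count_append]
  push_cast
  ring

lemma ht_true_cons_false_cons (b : List Bool) (t : ℕ) :
    ht (true :: false :: b) (t + 2) = ht b t := by
  simp [ht]

lemma isPrefixPath_append_true_cons_false_cons_iff (a b : List Bool) :
    IsPrefixPath (a ++ true :: false :: b) ↔ IsPrefixPath (a ++ b) := by
  constructor
  · intro h t
    rcases le_or_gt t a.length with ht_le | ht_gt
    · rw [ht_append_of_le_length _ _ ht_le,
        ← ht_append_of_le_length a (true :: false :: b) ht_le]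
      exact h t
    · have := h (t + 2)
      rw [ht_append_of_length_le _ _ (by omega), show t + 2 - a.length = t - a.length + 2 by omega,
        ht_true_cons_false_cons] at this
      rwa [ht_append_of_length_le _ _ ht_gt.le]
  · intro h t
    rcases le_or_gt t a.length with ht_le | ht_gt
    · rw [ht_append_of_le_length _ _ ht_le, ← ht_append_of_le_length a b ht_le]
      exact h t
    rw [ht_append_of_length_le _ _ ht_gt.le]
    rcases (by omega : t - a.length = 1 ∨ 2 ≤ t - a.length) with hs | hs
    · have := h a.length
      rw [ht_append_of_le_length _ _ le_rfl] at this
      rw [hs, show ht (true :: false :: b) 1 = 1 by simp [ht]]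
      omega
    · have := h (t - 2)
      rw [ht_append_of_length_le a b (show a.length ≤ t - 2 by omega),
        show t - 2 - a.length = t - a.length - 2 by omega] at this
      rwa [show t - a.length = t - a.length - 2 + 2 by omega, ht_true_cons_false_cons]

lemma mem_peakSet_append_of_lt (a x : List Bool) {e : ℕ} (he : e < a.length) :
    e ∈ peakSet (a ++ x) ↔ e ∈ peakSet a := by
  simp only [peakSet, mem_filter, mem_Ico, List.length_append,
    List.getD_append _ _ _ _ he, List.getD_append _ _ _ _ (show e - 1 < a.length by omega)]
  simp [he, show e < a.length + x.length by omega]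

lemma length_add_one_mem_peakSet (a b : List Bool) :
    a.length + 1 ∈ peakSet (a ++ true :: false :: b) := by
  simp [peakSet]

-- `insertPeak i v` inserts NE after the first `i` steps, creating a peak at vertex `i + 1`.
def insertPeak (i : ℕ) (v : List Bool) : List Bool := v.take i ++ true :: false :: v.drop i

def removePeak (i : ℕ) (w : List Bool) : List Bool := w.take i ++ w.drop (i + 2)

lemma insertPeak_perm (i : ℕ) (v : List Bool) : (insertPeak i v).Perm (true :: false :: v) := by
  refine List.perm_middle.trans (.cons _ ?_)
  simpa using List.perm_middle (l₁ := v.take i) (l₂ := v.drop i) (a := false)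

lemma removePeak_insertPeak {i : ℕ} {v : List Bool} (h : i ≤ v.length) :
    removePeak i (insertPeak i v) = v := by
  have hi : (v.take i).length = i := List.length_take_of_le h
  rw [removePeak, insertPeak, List.take_left' hi, List.drop_append,
    List.drop_of_length_le (by omega), hi]
  simp

lemma insertPeak_removePeak {i : ℕ} {w : List Bool} (h : i + 1 ∈ peakSet w) :
    insertPeak i (removePeak i w) = w := by
  simp only [peakSet, mem_filter, mem_Ico, Nat.add_sub_cancel] at h
  obtain ⟨⟨-, hlt⟩, hN, hE⟩ := h
  have hi : (w.take i).length = i := List.length_take_of_le (by omega)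
  rw [insertPeak, removePeak, List.take_left' hi, List.drop_left' hi]
  conv_rhs => rw [← List.take_append_drop i w, List.drop_eq_getElem_cons (by omega),
    List.drop_eq_getElem_cons hlt]
  rw [← List.getD_eq_getElem _ false, ← List.getD_eq_getElem _ true, hN, hE]

lemma insertPeak_mem_dyckPathsWithPeaks_iff {n i : ℕ} {D : Finset ℕ} {v : List Bool}
    (hi : i ≤ v.length) (hD : ∀ e ∈ D, e < i) :
    insertPeak i v ∈ dyckPathsWithPeaks (n + 1) (insert (i + 1) D) ↔
      v ∈ dyckPathsWithPeaks n D := by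
  have hperm := insertPeak_perm i v
  have hlen : (v.take i).length = i := List.length_take_of_le hi
  have hpeak : i + 1 ∈ peakSet (insertPeak i v) := by
    rw [insertPeak]
    simpa only [hlen] using length_add_one_mem_peakSet (v.take i) (v.drop i)
  have hpre : IsPrefixPath (insertPeak i v) ↔ IsPrefixPath v := by
    rw [insertPeak, isPrefixPath_append_true_cons_false_cons_iff, List.take_append_drop]
  have hmem : ∀ e ∈ D, e ∈ peakSet (insertPeak i v) ↔ e ∈ peakSet v := fun e he => by
    have hlt : e < (v.take i).length := hlen.symm ▸ hD e he
    rw [insertPeak, mem_peakSet_append_of_lt _ _ hlt, ← mem_peakSet_append_of_lt _ (v.drop i) hlt,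
      List.take_append_drop]
  have hpeaks : D ⊆ peakSet (insertPeak i v) ↔ D ⊆ peakSet v :=
    ⟨fun h e he => (hmem e he).1 (h he), fun h e he => (hmem e he).2 (h he)⟩
  simp only [dyckPathsWithPeaks, Set.mem_ofPred_eq, hperm.length_eq, hperm.count_eq,
    insert_subset_iff, hpre, hpeak, hpeaks, true_and]
  refine and_congr (by simp only [List.length_cons]; omega) (and_congr (by simp) Iff.rfl)

lemma dyckPathsWithPeaks_insert_eq_image {n i : ℕ} {D : Finset ℕ} (hi : i ≤ 2 * n)
    (hD : ∀ e ∈ D, e < i) :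
    dyckPathsWithPeaks (n + 1) (insert (i + 1) D) = insertPeak i '' dyckPathsWithPeaks n D := by
  ext w
  constructor
  · intro hw
    have hpeak : i + 1 ∈ peakSet w := hw.2.2.2 (mem_insert_self _ _)
    have hlt : i + 1 < w.length := (mem_Ico.1 (mem_filter.1 hpeak).1).2
    have hlen : i ≤ (removePeak i w).length := by
      simp only [removePeak, List.length_append, List.length_take, List.length_drop]; omega
    refine ⟨removePeak i w, (insertPeak_mem_dyckPathsWithPeaks_iff hlen hD).1 ?_,
      insertPeak_removePeak hpeak⟩
    rwa [insertPeak_removePeak hpeak]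
  · rintro ⟨v, hv, rfl⟩
    exact (insertPeak_mem_dyckPathsWithPeaks_iff (hv.1 ▸ hi) hD).2 hv

lemma card_dyckPathsWithPeaks_insert {n i : ℕ} {D : Finset ℕ} (hi : i ≤ 2 * n)
    (hD : ∀ e ∈ D, e < i) :
    Nat.card (dyckPathsWithPeaks (n + 1) (insert (i + 1) D)) =
      Nat.card (dyckPathsWithPeaks n D) := by
  rw [dyckPathsWithPeaks_insert_eq_image hi hD]
  refine Nat.card_image_of_injOn (Set.LeftInvOn.injOn (f₁' := removePeak i) fun v hv => ?_)
  exact removePeak_insertPeak (hv.1 ▸ hi)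

theorem card_dyckPathsWithPeaks {n : ℕ} {D : Finset ℕ} (hD : D ⊆ Ico 1 (2 * n))
    (hnc : ∀ i ∈ D, i + 1 ∉ D) : Nat.card (dyckPathsWithPeaks n D) = catalan (n - #D) := by
  induction D using Finset.induction_on_max generalizing n with
  | empty => exact card_dyckPathsWithPeaks_empty n
  | insert d D hmax ih =>
    have hd := mem_Ico.1 (hD (mem_insert_self d D))
    obtain ⟨i, rfl⟩ : ∃ i, d = i + 1 := ⟨d - 1, by omega⟩
    obtain ⟨m, rfl⟩ : ∃ m, n = m + 1 := ⟨n - 1, by omega⟩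
    have hD_lt_i : ∀ e ∈ D, e < i := fun e he => by
      have hne := hnc e (mem_insert_of_mem he)
      simp only [mem_insert, add_left_inj, not_or] at hne
      have := hmax e he
      omega
    rw [card_dyckPathsWithPeaks_insert (by omega) hD_lt_i,
      card_insert_of_notMem fun h => (hmax _ h).false, Nat.add_sub_add_right]
    refine ih (fun e he => ?_) fun e he h => hnc e (mem_insert_of_mem he) (mem_insert_of_mem h)
    have := mem_Ico.1 (hD (mem_insert_of_mem he))
    have := hD_lt_i e he
    exact mem_Ico.2 (by omega)

/-- For D ⊆ {1,…,n−1} with no two consecutive elements, the number of Dyck paths of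
length 2n whose peak set contains D is the Catalan number C_{n−|D|}. -/
theorem count_dyck_paths_peaks_containing (n : ℕ) (D : Finset ℕ)
    (hD : D ⊆ Finset.Ico 1 n) (hnc : ∀ i ∈ D, i + 1 ∉ D) :
    Nat.card {w : List Bool //
        w.length = 2 * n ∧ w.count true = n ∧ IsPrefixPath w ∧ D ⊆ peakSet w} =
    catalan (n - D.card) :=
  card_dyckPathsWithPeaks (hD.trans (Ico_subset_Ico_right (by omega))) hnc
end
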